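/- arXiv:2510.26119 — 11 statements merged into one kernel-verified Lean document; each statement's English description precedes it below -/
import Mathlib

section
/- Let F be a finite extension of Q_p, d ≥ 2 with p | d, and φ(X) = Σ_{i=0}^d a_i X^i ∈ O_F[X] with v_F(a_d) = 0 and v_F(a_i) > 0 whenever p ∤ i. Suppose λ, μ ∈ O_F and y ∈ O_F with 0 < |y − μ|_F < 1. Then |φ(y) − φ(μ)|_F < |y − μ|_F. -/
/-!
Expand `φ` around `μ`: with `t = y - μ`, `φ y - φ μ = ∑_{k ≥ 1} cₖ tᵏ` where `cₖ` is the
`k`-th Hasse derivative of `φ` at `μ`. Every `cₖ` is integral, and `c₁ = φ'(μ)` is strictly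
small because each coefficient `i aᵢ` of `φ'` is: either `p ∣ i` kills the factor `i`, or
`p ∤ i` and `aᵢ` itself is small. So the linear term has norm `< |t|`, the terms with `k ≥ 2`
have norm `≤ |t|² < |t|`, and the ultrametric inequality concludes.
-/

open Polynomial

namespace IsUltrametricDist

lemma norm_sum_lt_of_forall_lt {M ι : Type*} [SeminormedAddCommGroup M] [IsUltrametricDist M]
    {s : Finset ι} {f : ι → M} {C : ℝ} (hC : 0 < C) (h : ∀ i ∈ s, ‖f i‖ < C) :
    ‖∑ i ∈ s, f i‖ < C := by
  rcases s.eq_empty_or_nonempty with rfl | hs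
  · simpa using hC
  obtain ⟨i, hi, hle⟩ := exists_norm_finsetSum_le_of_nonempty hs f
  exact hle.trans_lt (h i hi)

end IsUltrametricDist

namespace Polynomial

variable {R : Type*} [NormedCommRing R] [NormOneClass R] [IsUltrametricDist R]

lemma norm_eval_le_one {φ : R[X]} (hφ : ∀ i, ‖φ.coeff i‖ ≤ 1) {x : R} (hx : ‖x‖ ≤ 1) :
    ‖φ.eval x‖ ≤ 1 := by
  rw [eval_eq_sum_range]
  refine IsUltrametricDist.norm_sum_le_of_forall_le_of_nonneg zero_le_one fun i _ => ?_
  calc ‖φ.coeff i * x ^ i‖ ≤ ‖φ.coeff i‖ * ‖x‖ ^ i := (norm_mul_le _ _).trans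
        (mul_le_mul_of_nonneg_left (norm_pow_le _ _) (norm_nonneg _))
    _ ≤ 1 := mul_le_one₀ (hφ i) (pow_nonneg (norm_nonneg _) _) (pow_le_one₀ (norm_nonneg _) hx)

lemma norm_eval_lt_one {φ : R[X]} (hφ : ∀ i, ‖φ.coeff i‖ < 1) {x : R} (hx : ‖x‖ ≤ 1) :
    ‖φ.eval x‖ < 1 := by
  rw [eval_eq_sum_range]
  refine IsUltrametricDist.norm_sum_lt_of_forall_lt one_pos fun i _ => ?_
  calc ‖φ.coeff i * x ^ i‖ ≤ ‖φ.coeff i‖ * ‖x‖ ^ i := (norm_mul_le _ _).trans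
        (mul_le_mul_of_nonneg_left (norm_pow_le _ _) (norm_nonneg _))
    _ < 1 := mul_lt_one_of_nonneg_of_lt_one_left (norm_nonneg _) (hφ i)
        (pow_le_one₀ (norm_nonneg _) hx)

lemma norm_taylor_coeff_le_one {φ : R[X]} (hφ : ∀ i, ‖φ.coeff i‖ ≤ 1) {μ : R} (hμ : ‖μ‖ ≤ 1)
    (k : ℕ) : ‖(taylor μ φ).coeff k‖ ≤ 1 := by
  rw [taylor_coeff]
  refine norm_eval_le_one (fun i => ?_) hμ
  rw [hasseDeriv_coeff]
  exact (norm_mul_le _ _).trans (mul_le_one₀ (IsUltrametricDist.norm_natCast_le_one R _)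
    (norm_nonneg _) (hφ _))

lemma norm_taylor_coeff_one_lt_one {φ : R[X]} (hφ' : ∀ i, ‖φ.derivative.coeff i‖ < 1) {μ : R}
    (hμ : ‖μ‖ ≤ 1) : ‖(taylor μ φ).coeff 1‖ < 1 := by
  rw [taylor_coeff_one]
  exact norm_eval_lt_one hφ' hμ

lemma norm_eval_sub_coeff_zero_lt {ψ : R[X]} (hψ : ∀ k, ‖ψ.coeff k‖ ≤ 1)
    (hψ₁ : ‖ψ.coeff 1‖ < 1) {t : R} (ht₀ : 0 < ‖t‖) (ht₁ : ‖t‖ < 1) :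
    ‖ψ.eval t - ψ.coeff 0‖ < ‖t‖ := by
  have hsum : ψ.eval t - ψ.coeff 0 =
      ∑ k ∈ (Finset.range (ψ.natDegree + 1)).erase 0, ψ.coeff k * t ^ k := by
    rw [eval_eq_sum_range, ← Finset.add_sum_erase _ _ (Finset.mem_range.mpr ψ.natDegree.succ_pos),
      pow_zero, mul_one, add_sub_cancel_left]
  rw [hsum]
  refine IsUltrametricDist.norm_sum_lt_of_forall_lt ht₀ fun k hk => ?_
  have hk₀ : k ≠ 0 := (Finset.mem_erase.mp hk).1
  refine (norm_mul_le _ _).trans_lt ?_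
  obtain rfl | hk₂ : k = 1 ∨ 2 ≤ k := by omega
  · rw [pow_one]
    exact mul_lt_of_lt_one_left ht₀ hψ₁
  · calc ‖ψ.coeff k‖ * ‖t ^ k‖ ≤ 1 * ‖t‖ ^ k :=
          mul_le_mul (hψ k) (norm_pow_le _ _) (norm_nonneg _) zero_le_one
      _ ≤ ‖t‖ ^ 2 := by rw [one_mul]; exact pow_le_pow_of_le_one (norm_nonneg t) ht₁.le hk₂
      _ < ‖t‖ := by nlinarith

theorem norm_eval_sub_eval_lt {φ : R[X]} (hφ : ∀ i, ‖φ.coeff i‖ ≤ 1)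
    (hφ' : ∀ i, ‖φ.derivative.coeff i‖ < 1) {μ y : R} (hμ : ‖μ‖ ≤ 1)
    (hpos : 0 < ‖y - μ‖) (hlt : ‖y - μ‖ < 1) :
    ‖φ.eval y - φ.eval μ‖ < ‖y - μ‖ := by
  rw [← taylor_eval_sub μ φ y, ← taylor_coeff_zero μ φ]
  exact norm_eval_sub_coeff_zero_lt (norm_taylor_coeff_le_one hφ hμ)
    (norm_taylor_coeff_one_lt_one hφ' hμ) hpos hlt

end Polynomial

lemma norm_natCast_lt_one_of_dvd {p : ℕ} [Fact p.Prime] {F : Type*} [NormedRing F]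
    [Algebra ℚ_[p] F] (hext : ∀ x : ℚ_[p], ‖algebraMap ℚ_[p] F x‖ = ‖x‖) {n : ℕ} (h : p ∣ n) :
    ‖(n : F)‖ < 1 := by
  rw [← map_natCast (algebraMap ℚ_[p] F), hext, Padic.norm_natCast_lt_one_iff]
  exact h

theorem contraction_step_general {p : ℕ} [Fact p.Prime] {F : Type*} [NormedField F]
    [Algebra ℚ_[p] F] [IsUltrametricDist F]
    (hext : ∀ x : ℚ_[p], ‖algebraMap ℚ_[p] F x‖ = ‖x‖)
    (φ : Polynomial F)
    (hint : ∀ i, ‖φ.coeff i‖ ≤ 1)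
    (hsmall : ∀ i, ¬ p ∣ i → ‖φ.coeff i‖ < 1)
    (μ y : F) (hμO : ‖μ‖ ≤ 1)
    (hpos : 0 < ‖y - μ‖) (hlt : ‖y - μ‖ < 1) :
    ‖φ.eval y - φ.eval μ‖ < ‖y - μ‖ := by
  refine φ.norm_eval_sub_eval_lt hint (fun i => ?_) hμO hpos hlt
  rw [coeff_derivative, ← Nat.cast_succ, norm_mul]
  by_cases hdvd : p ∣ i + 1
  · exact mul_lt_one_of_nonneg_of_lt_one_right (hint _) (norm_nonneg _)
      (norm_natCast_lt_one_of_dvd hext hdvd)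
  · exact mul_lt_one_of_nonneg_of_lt_one_left (norm_nonneg _) (hsmall _ hdvd)
      (IsUltrametricDist.norm_natCast_le_one F _)

theorem contraction_step {p : ℕ} [Fact p.Prime] {F : Type*} [NormedField F]
    [Algebra ℚ_[p] F] [FiniteDimensional ℚ_[p] F] [IsUltrametricDist F]
    (hext : ∀ x : ℚ_[p], ‖algebraMap ℚ_[p] F x‖ = ‖x‖)
    (d : ℕ) (hd : 2 ≤ d) (hpd : p ∣ d)
    (φ : Polynomial F) (hdeg : φ.natDegree = d)
    (hint : ∀ i, ‖φ.coeff i‖ ≤ 1)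
    (hlead : ‖φ.coeff d‖ = 1)
    (hsmall : ∀ i, ¬ p ∣ i → ‖φ.coeff i‖ < 1)
    (lam μ y : F) (hlamO : ‖lam‖ ≤ 1) (hμO : ‖μ‖ ≤ 1) (hyO : ‖y‖ ≤ 1)
    (hpos : 0 < ‖y - μ‖) (hlt : ‖y - μ‖ < 1) :
    ‖φ.eval y - φ.eval μ‖ < ‖y - μ‖ :=
  contraction_step_general hext φ hint hsmall μ y hμO hpos hlt
end

section
/- Let F be a finite extension of Q_p, d ≥ 2 with p | d, and φ(X) = Σ_{i=0}^d a_i X^i ∈ O_F[X] with v_F(a_d) = 0 and v_F(a_i) > 0 whenever p ∤ i. If λ ∈ F is a periodic point of φ and x ∈ F with x ≠ λ and |x − λ|_F < 1, then x is not a periodic point of φ. -/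
open Finset IsUltrametricDist

section Aux

variable {F : Type*} [NormedField F] [IsUltrametricDist F]

private lemma sum_norm_lt {ι : Type*} (s : Finset ι) (f : ι → F) {c : ℝ} (hc : 0 < c)
    (h : ∀ i ∈ s, ‖f i‖ < c) : ‖∑ i ∈ s, f i‖ < c := by
  rcases s.eq_empty_or_nonempty with rfl | hs
  · simpa using hc
  · calc ‖∑ i ∈ s, f i‖ ≤ s.sup' hs fun i => ‖f i‖ := hs.norm_sum_le_sup'_norm f
      _ < c := (Finset.sup'_lt_iff hs).2 fun i hi => h i hi

private lemma pow_sub_pow_norm_le {u v : F} (hu : ‖u‖ ≤ 1) (hv : ‖v‖ ≤ 1) (m : ℕ) :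
    ‖u ^ m - v ^ m‖ ≤ ‖u - v‖ := by
  rw [← geom_sum₂_mul u v m, norm_mul]
  have hsum : ‖∑ i ∈ Finset.range m, u ^ i * v ^ (m - 1 - i)‖ ≤ 1 := by
    refine norm_sum_le_of_forall_le_of_nonneg zero_le_one fun i _ => ?_
    rw [norm_mul, norm_pow, norm_pow]
    exact mul_le_one₀ (pow_le_one₀ (norm_nonneg u) hu)
      (pow_nonneg (norm_nonneg v) _) (pow_le_one₀ (norm_nonneg v) hv)
  calc ‖∑ i ∈ Finset.range m, u ^ i * v ^ (m - 1 - i)‖ * ‖u - v‖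
      ≤ 1 * ‖u - v‖ := mul_le_mul_of_nonneg_right hsum (norm_nonneg _)
    _ = ‖u - v‖ := one_mul _

/-- p-th power is a strict contraction on close points of the unit ball. -/
private lemma pow_p_contract {p : ℕ} (hp : p.Prime) (hpF : ‖(p : F)‖ < 1)
    {u v : F} (hv : ‖v‖ ≤ 1) {δ : ℝ} (hδ0 : 0 < δ) (hδ1 : δ < 1)
    (huv : ‖u - v‖ ≤ δ) : ‖u ^ p - v ^ p‖ < δ := by
  have hδle : δ ≤ 1 := le_of_lt hδ1
  set h := u - v with hh
  have hu : u = v + h := by rw [hh]; ring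
  have key : u ^ p - v ^ p = ∑ k ∈ Finset.range p, v ^ k * h ^ (p - k) * (p.choose k : F) := by
    rw [hu, add_pow, Finset.sum_range_succ]
    simp
  rw [key]
  refine sum_norm_lt _ _ hδ0 fun k hk => ?_
  rw [Finset.mem_range] at hk
  have hvk : ‖v ^ k‖ ≤ 1 := by rw [norm_pow]; exact pow_le_one₀ (norm_nonneg v) hv
  have hhk : ‖h ^ (p - k)‖ ≤ δ ^ (p - k) := by
    rw [norm_pow]
    exact pow_le_pow_left₀ (norm_nonneg _) huv _
  rcases Nat.eq_zero_or_pos k with rfl | hk0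
  · have hp2 : 2 ≤ p := hp.two_le
    calc ‖v ^ 0 * h ^ (p - 0) * (p.choose 0 : F)‖
        = ‖h ^ p‖ := by simp
      _ ≤ δ ^ p := by simpa using hhk
      _ < δ ^ 1 := pow_lt_pow_right_of_lt_one₀ hδ0 hδ1 (by omega)
      _ = δ := pow_one δ
  · obtain ⟨c, hc⟩ := hp.dvd_choose_self (by omega) hk
    have hchoose : ‖(p.choose k : F)‖ < 1 := by
      rw [hc]
      push_cast
      rw [norm_mul]
      calc ‖(p : F)‖ * ‖(c : F)‖ ≤ ‖(p : F)‖ * 1 :=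
            mul_le_mul_of_nonneg_left (norm_natCast_le_one F c) (norm_nonneg _)
        _ = ‖(p : F)‖ := mul_one _
        _ < 1 := hpF
    have hhk' : ‖h ^ (p - k)‖ ≤ δ := by
      refine hhk.trans ?_
      calc δ ^ (p - k) ≤ δ ^ 1 := pow_le_pow_of_le_one (le_of_lt hδ0) hδle (by omega)
        _ = δ := pow_one δ
    calc ‖v ^ k * h ^ (p - k) * (p.choose k : F)‖
        = ‖v ^ k‖ * ‖h ^ (p - k)‖ * ‖(p.choose k : F)‖ := by rw [norm_mul, norm_mul]
      _ ≤ 1 * δ * ‖(p.choose k : F)‖ := by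
          refine mul_le_mul_of_nonneg_right ?_ (norm_nonneg _)
          exact mul_le_mul hvk hhk' (norm_nonneg _) zero_le_one
      _ = δ * ‖(p.choose k : F)‖ := by rw [one_mul]
      _ < δ * 1 := mul_lt_mul_of_pos_left hchoose hδ0
      _ = δ := mul_one δ

end Aux

theorem contraction_not_periodic {p : ℕ} [Fact p.Prime] {F : Type*} [NormedField F]
    [Algebra ℚ_[p] F] [FiniteDimensional ℚ_[p] F] [IsUltrametricDist F]
    (hext : ∀ x : ℚ_[p], ‖algebraMap ℚ_[p] F x‖ = ‖x‖)
    (d : ℕ) (hd : 2 ≤ d) (hpd : p ∣ d)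
    (φ : Polynomial F) (hdeg : φ.natDegree = d)
    (hint : ∀ i, ‖φ.coeff i‖ ≤ 1)
    (hlead : ‖φ.coeff d‖ = 1)
    (hsmall : ∀ i, ¬ p ∣ i → ‖φ.coeff i‖ < 1)
    (lam : F) (hper : ∃ n : ℕ, 1 ≤ n ∧ (fun x => φ.eval x)^[n] lam = lam)
    (x : F) (hne : x ≠ lam) (hclose : ‖x - lam‖ < 1) :
    ¬ ∃ n : ℕ, 1 ≤ n ∧ (fun z => φ.eval z)^[n] x = x := by
  have hp : p.Prime := Fact.out
  have hpF : ‖(p : F)‖ < 1 := by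
    have h1 : (p : F) = algebraMap ℚ_[p] F (p : ℚ_[p]) := (map_natCast _ p).symm
    rw [h1, hext]
    exact Padic.norm_p_lt_one
  set f : F → F := fun z => φ.eval z with hf
  have heval : ∀ z : F, φ.eval z = ∑ i ∈ Finset.range (d + 1), φ.coeff i * z ^ i := by
    intro z
    rw [Polynomial.eval_eq_sum_range, hdeg]
  -- the unit ball is invariant
  have hball : ∀ z : F, ‖z‖ ≤ 1 → ‖φ.eval z‖ ≤ 1 := by
    intro z hz
    rw [heval z]
    refine norm_sum_le_of_forall_le_of_nonneg zero_le_one fun i _ => ?_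
    rw [norm_mul, norm_pow]
    exact mul_le_one₀ (hint i) (pow_nonneg (norm_nonneg z) _)
      (pow_le_one₀ (norm_nonneg z) hz)
  -- expansion outside the unit ball
  have hexp : ∀ z : F, 1 < ‖z‖ → ‖z‖ < ‖φ.eval z‖ := by
    intro z hz
    have hz1 : (1:ℝ) ≤ ‖z‖ := le_of_lt hz
    have hz0 : (0:ℝ) < ‖z‖ := lt_trans one_pos hz
    have hrw : φ.eval z = (∑ i ∈ Finset.range d, φ.coeff i * z ^ i) + φ.coeff d * z ^ d := by
      rw [heval z, Finset.sum_range_succ]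
    have hA : ‖φ.coeff d * z ^ d‖ = ‖z‖ ^ d := by
      rw [norm_mul, hlead, one_mul, norm_pow]
    have hB : ‖∑ i ∈ Finset.range d, φ.coeff i * z ^ i‖ ≤ ‖z‖ ^ (d - 1) := by
      refine norm_sum_le_of_forall_le_of_nonneg (pow_nonneg (norm_nonneg z) _) fun i hi => ?_
      rw [Finset.mem_range] at hi
      rw [norm_mul, norm_pow]
      calc ‖φ.coeff i‖ * ‖z‖ ^ i ≤ 1 * ‖z‖ ^ i :=
            mul_le_mul_of_nonneg_right (hint i) (pow_nonneg (norm_nonneg z) _)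
        _ = ‖z‖ ^ i := one_mul _
        _ ≤ ‖z‖ ^ (d - 1) := pow_le_pow_right₀ hz1 (by omega)
    have hBA : ‖∑ i ∈ Finset.range d, φ.coeff i * z ^ i‖ < ‖φ.coeff d * z ^ d‖ := by
      rw [hA]
      calc ‖∑ i ∈ Finset.range d, φ.coeff i * z ^ i‖ ≤ ‖z‖ ^ (d - 1) := hB
        _ < ‖z‖ ^ d := pow_lt_pow_right₀ hz (by omega)
    have hnorm : ‖φ.eval z‖ = ‖z‖ ^ d := by
      rw [hrw, norm_add_eq_max_of_norm_ne_norm (ne_of_lt hBA), max_eq_right (le_of_lt hBA), hA]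
    rw [hnorm]
    calc ‖z‖ = ‖z‖ ^ 1 := (pow_one _).symm
      _ < ‖z‖ ^ d := pow_lt_pow_right₀ hz (by omega)
  -- periodic points lie in the unit ball
  have hlam : ‖lam‖ ≤ 1 := by
    by_contra hl
    push_neg at hl
    obtain ⟨m, hm, hlm⟩ := hper
    have grow : ∀ n, 1 < ‖f^[n] lam‖ ∧ ‖lam‖ ≤ ‖f^[n] lam‖ := by
      intro n
      induction n with
      | zero => exact ⟨hl, le_refl _⟩
      | succ n ih =>
        obtain ⟨h1, h2⟩ := ih
        rw [Function.iterate_succ_apply']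
        have hstep := hexp _ h1
        exact ⟨lt_trans h1 hstep, le_of_lt (lt_of_le_of_lt h2 hstep)⟩
    obtain ⟨m', rfl⟩ : ∃ m', m = m' + 1 := ⟨m - 1, by omega⟩
    have habs : ‖lam‖ < ‖lam‖ := by
      calc ‖lam‖ ≤ ‖f^[m'] lam‖ := (grow m').2
        _ < ‖φ.eval (f^[m'] lam)‖ := hexp _ (grow m').1
        _ = ‖lam‖ := by
            have h := hlm
            rw [Function.iterate_succ_apply'] at h
            rw [show φ.eval (f^[m'] lam) = f (f^[m'] lam) from rfl, h]
    exact lt_irrefl _ habs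
  set δ : ℝ := ‖x - lam‖ with hδ
  have hδ0 : 0 < δ := by
    rw [hδ]
    exact norm_sub_pos_iff.mpr hne
  have hδ1 : δ < 1 := hclose
  have hx : ‖x‖ ≤ 1 := by
    have : x = (x - lam) + lam := by ring
    rw [this]
    refine (norm_add_le_max _ _).trans (max_le (le_of_lt hclose) hlam)
  -- the key contraction estimate
  have hcontr : ∀ u v : F, ‖u‖ ≤ 1 → ‖v‖ ≤ 1 → ‖u - v‖ ≤ δ →
      ‖φ.eval u - φ.eval v‖ < δ := by
    intro u v hu hv huv
    rw [heval u, heval v, ← Finset.sum_sub_distrib]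
    refine sum_norm_lt _ _ hδ0 fun i _ => ?_
    have hterm : φ.coeff i * u ^ i - φ.coeff i * v ^ i = φ.coeff i * (u ^ i - v ^ i) := by ring
    rw [hterm, norm_mul]
    rcases Nat.eq_zero_or_pos i with rfl | hi0
    · simpa using hδ0
    by_cases hpi : p ∣ i
    · obtain ⟨m, rfl⟩ := hpi
      have hpow : ‖u ^ (p * m) - v ^ (p * m)‖ < δ := by
        have h1 : ‖u ^ m - v ^ m‖ ≤ δ := (pow_sub_pow_norm_le hu hv m).trans huv
        have h2 : ‖v ^ m‖ ≤ 1 := by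
          rw [norm_pow]; exact pow_le_one₀ (norm_nonneg v) hv
        have := pow_p_contract hp hpF h2 hδ0 hδ1 h1
        rwa [← pow_mul, ← pow_mul, mul_comm m p] at this
      calc ‖φ.coeff (p * m)‖ * ‖u ^ (p * m) - v ^ (p * m)‖
          ≤ 1 * ‖u ^ (p * m) - v ^ (p * m)‖ :=
            mul_le_mul_of_nonneg_right (hint _) (norm_nonneg _)
        _ = ‖u ^ (p * m) - v ^ (p * m)‖ := one_mul _
        _ < δ := hpow
    · have h1 : ‖u ^ i - v ^ i‖ ≤ δ := (pow_sub_pow_norm_le hu hv i).trans huv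
      calc ‖φ.coeff i‖ * ‖u ^ i - v ^ i‖ ≤ ‖φ.coeff i‖ * δ :=
            mul_le_mul_of_nonneg_left h1 (norm_nonneg _)
        _ < 1 * δ := mul_lt_mul_of_pos_right (hsmall i hpi) hδ0
        _ = δ := one_mul _
  -- conclusion
  rintro ⟨n, hn, hxn⟩
  obtain ⟨m, hm, hlm⟩ := hper
  have hxN : f^[n * m] x = x := by
    rw [Function.iterate_mul]
    exact Function.iterate_fixed hxn m
  have hlN : f^[n * m] lam = lam := by
    rw [mul_comm, Function.iterate_mul]
    exact Function.iterate_fixed hlm n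
  have claim : ∀ k, ‖f^[k] x - f^[k] lam‖ ≤ δ ∧ ‖f^[k] x‖ ≤ 1 ∧ ‖f^[k] lam‖ ≤ 1 := by
    intro k
    induction k with
    | zero => exact ⟨le_refl _, hx, hlam⟩
    | succ k ih =>
      obtain ⟨h1, h2, h3⟩ := ih
      rw [Function.iterate_succ_apply', Function.iterate_succ_apply']
      exact ⟨(hcontr _ _ h2 h3 h1).le, hball _ h2, hball _ h3⟩
  have hNpos : 1 ≤ n * m := Nat.one_le_iff_ne_zero.mpr (Nat.mul_ne_zero (by omega) (by omega))
  obtain ⟨N', hN'⟩ : ∃ N', n * m = N' + 1 := ⟨n * m - 1, by omega⟩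
  obtain ⟨h1, h2, h3⟩ := claim N'
  have hfin := hcontr _ _ h2 h3 h1
  have e1 : φ.eval (f^[N'] x) = x := by
    have h : f^[N' + 1] x = x := by rw [← hN']; exact hxN
    rw [Function.iterate_succ_apply'] at h
    exact h
  have e2 : φ.eval (f^[N'] lam) = lam := by
    have h : f^[N' + 1] lam = lam := by rw [← hN']; exact hlN
    rw [Function.iterate_succ_apply'] at h
    exact h
  rw [e1, e2] at hfin
  exact lt_irrefl _ hfin
end

section
/- Let F be a finite extension of Q_p with residue degree f, d ≥ 2 with p | d, and φ(X) = Σ_{i=0}^d a_i X^i ∈ O_F[X] with v_F(a_d) = 0 and v_F(a_i) > 0 whenever p ∤ i. Then φ has at most p^f periodic points in F. -/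
open IsUltrametricDist Finset

section Aux
variable {F : Type*} [NormedField F] [IsUltrametricDist F]

lemma aux_pow_sub {x y : F} (hx : ‖x‖ ≤ 1) (hy : ‖y‖ ≤ 1) (n : ℕ) :
    ‖x ^ n - y ^ n‖ ≤ ‖x - y‖ := by
  rw [← geom_sum₂_mul x y n, norm_mul]
  have h1 : ‖∑ i ∈ range n, x ^ i * y ^ (n - 1 - i)‖ ≤ 1 := by
    refine norm_sum_le_of_forall_le_of_nonneg zero_le_one (fun i _ => ?_)
    rw [norm_mul, norm_pow, norm_pow]
    exact mul_le_one₀ (pow_le_one₀ (norm_nonneg _) hx)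
      (pow_nonneg (norm_nonneg _) _) (pow_le_one₀ (norm_nonneg _) hy)
  calc ‖∑ i ∈ range n, x ^ i * y ^ (n - 1 - i)‖ * ‖x - y‖
      ≤ 1 * ‖x - y‖ := mul_le_mul_of_nonneg_right h1 (norm_nonneg _)
    _ = ‖x - y‖ := one_mul _

lemma aux_sub_le_max (a b : F) : ‖a - b‖ ≤ max ‖a‖ ‖b‖ := by
  rw [sub_eq_add_neg]
  simpa using norm_add_le_max a (-b)



lemma aux_pow_p_sub (p : ℕ) [hp : Fact p.Prime] {x y : F} (hx : ‖x‖ ≤ 1) (hy : ‖y‖ ≤ 1) :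
    ‖x ^ p - y ^ p‖ ≤ max (‖x - y‖ ^ p) (‖(p : F)‖ * ‖x - y‖) := by
  have hxy : ‖x - y‖ ≤ 1 := (aux_sub_le_max x y).trans (max_le hx hy)
  have h := add_pow (x - y) y p
  rw [sub_add_cancel] at h
  have key : x ^ p - y ^ p
      = ∑ k ∈ range p, (x - y) ^ (k + 1) * y ^ (p - (k + 1)) * (p.choose (k + 1) : F) := by
    rw [h, Finset.sum_range_succ']
    simp
  rw [key]
  refine norm_sum_le_of_forall_le_of_nonneg
    (le_max_of_le_right (mul_nonneg (norm_nonneg _) (norm_nonneg _))) (fun k hk => ?_)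
  rw [Finset.mem_range] at hk
  rcases eq_or_lt_of_le (Nat.succ_le_of_lt hk) with hkp | hkp
  · refine le_max_of_le_left ?_
    rw [Nat.succ_eq_add_one] at hkp
    rw [hkp]
    simp [norm_mul, norm_pow]
  · refine le_max_of_le_right ?_
    obtain ⟨m, hm⟩ := hp.out.dvd_choose_self (Nat.succ_ne_zero k) hkp
    rw [norm_mul, norm_mul, hm]
    push_cast
    rw [norm_mul]
    have h1 : ‖(x - y) ^ (k + 1)‖ ≤ ‖x - y‖ := by
      rw [norm_pow]
      exact pow_le_of_le_one (norm_nonneg _) hxy (Nat.succ_ne_zero k)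
    have h2 : ‖y ^ (p - (k + 1))‖ ≤ 1 := by
      rw [norm_pow]; exact pow_le_one₀ (norm_nonneg _) hy
    have h3 : ‖(m : F)‖ ≤ 1 := norm_natCast_le_one F m
    calc ‖(x - y) ^ (k + 1)‖ * ‖y ^ (p - (k + 1))‖ * (‖(p : F)‖ * ‖(m : F)‖)
        ≤ ‖x - y‖ * 1 * (‖(p : F)‖ * 1) := by
          apply mul_le_mul (mul_le_mul h1 h2 (norm_nonneg _) (norm_nonneg _))
            (mul_le_mul_of_nonneg_left h3 (norm_nonneg _))
            (mul_nonneg (norm_nonneg _) (norm_nonneg _))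
            (by positivity)
      _ = ‖(p : F)‖ * ‖x - y‖ := by ring

lemma aux_eval_le_one {φ : Polynomial F} (hint : ∀ i, ‖φ.coeff i‖ ≤ 1) {x : F} (hx : ‖x‖ ≤ 1) :
    ‖φ.eval x‖ ≤ 1 := by
  rw [Polynomial.eval_eq_sum_range]
  refine norm_sum_le_of_forall_le_of_nonneg zero_le_one fun i _ => ?_
  rw [norm_mul, norm_pow]
  exact mul_le_one₀ (hint i) (pow_nonneg (norm_nonneg _) _) (pow_le_one₀ (norm_nonneg _) hx)

lemma aux_escape {φ : Polynomial F} {d : ℕ} (hd : 2 ≤ d) (hdeg : φ.natDegree = d)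
    (hint : ∀ i, ‖φ.coeff i‖ ≤ 1) (hlead : ‖φ.coeff d‖ = 1) {x : F} (hx : 1 < ‖x‖) :
    ‖x‖ < ‖φ.eval x‖ := by
  have hx0 : (0:ℝ) < ‖x‖ := lt_trans one_pos hx
  have hrange : φ.eval x = (∑ i ∈ range d, φ.coeff i * x ^ i) + φ.coeff d * x ^ d := by
    rw [Polynomial.eval_eq_sum_range, hdeg, Finset.sum_range_succ]
  have hsum : ‖∑ i ∈ range d, φ.coeff i * x ^ i‖ ≤ ‖x‖ ^ (d - 1) := by
    refine norm_sum_le_of_forall_le_of_nonneg (by positivity) fun i hi => ?_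
    rw [Finset.mem_range] at hi
    rw [norm_mul, norm_pow]
    calc ‖φ.coeff i‖ * ‖x‖ ^ i ≤ 1 * ‖x‖ ^ (d-1) := by
          apply mul_le_mul (hint i) (pow_le_pow_right₀ hx.le (by omega)) (by positivity) zero_le_one
      _ = ‖x‖ ^ (d-1) := one_mul _
  have hlt : ‖x‖ ^ (d - 1) < ‖x‖ ^ d := pow_lt_pow_right₀ hx (by omega)
  have hld : ‖φ.coeff d * x ^ d‖ = ‖x‖ ^ d := by rw [norm_mul, norm_pow, hlead, one_mul]
  have hne : ‖∑ i ∈ range d, φ.coeff i * x ^ i‖ ≠ ‖φ.coeff d * x ^ d‖ := by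
    rw [hld]; exact ne_of_lt (lt_of_le_of_lt hsum hlt)
  have hmax := norm_add_eq_max_of_norm_ne_norm hne
  rw [hrange, hmax, hld, max_eq_right (le_of_lt (lt_of_le_of_lt hsum hlt))]
  calc ‖x‖ = ‖x‖ ^ 1 := (pow_one _).symm
    _ < ‖x‖ ^ d := pow_lt_pow_right₀ hx (by omega)

lemma aux_contract {p : ℕ} [hp : Fact p.Prime] {φ : Polynomial F} {d : ℕ}
    (hdeg : φ.natDegree = d) (hint : ∀ i, ‖φ.coeff i‖ ≤ 1)
    {c : ℝ} (hc0 : 0 ≤ c)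
    (hcp : ‖(p : F)‖ ≤ c) (hcs : ∀ i, ¬ p ∣ i → ‖φ.coeff i‖ ≤ c)
    {t : ℝ} (ht : t ≤ 1) (hct : t ^ (p - 1) ≤ c)
    {x y : F} (hx : ‖x‖ ≤ 1) (hy : ‖y‖ ≤ 1) (hxy : ‖x - y‖ ≤ t) :
    ‖φ.eval x - φ.eval y‖ ≤ c * ‖x - y‖ := by
  have key : φ.eval x - φ.eval y = ∑ i ∈ range (d+1), φ.coeff i * (x ^ i - y ^ i) := by
    simp_rw [mul_sub]
    rw [Polynomial.eval_eq_sum_range, Polynomial.eval_eq_sum_range, hdeg, Finset.sum_sub_distrib]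
  rw [key]
  refine norm_sum_le_of_forall_le_of_nonneg (mul_nonneg hc0 (norm_nonneg _)) fun i _ => ?_
  rw [norm_mul]
  by_cases hpi : p ∣ i
  · rcases Nat.eq_zero_or_pos i with h0 | h0
    · simp only [h0, pow_zero, sub_self, norm_zero, mul_zero]
      positivity
    · obtain ⟨m, hm⟩ := hpi
      have hib : ‖x ^ i - y ^ i‖ ≤ c * ‖x - y‖ := by
        have h1 : ‖x ^ i - y ^ i‖ ≤ ‖x ^ p - y ^ p‖ := by
          rw [hm, pow_mul, pow_mul]
          exact aux_pow_sub (by rw [norm_pow]; exact pow_le_one₀ (norm_nonneg _) hx)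
            (by rw [norm_pow]; exact pow_le_one₀ (norm_nonneg _) hy) m
        have h2 := aux_pow_p_sub p hx hy
        refine h1.trans (h2.trans (max_le ?_ ?_))
        · have hps : ‖x - y‖ ^ p = ‖x - y‖ ^ (p - 1) * ‖x - y‖ := by
            rw [← pow_succ]; congr 1; have := hp.out.pos; omega
          rw [hps]
          refine mul_le_mul_of_nonneg_right ?_ (norm_nonneg _)
          calc ‖x - y‖ ^ (p - 1) ≤ t ^ (p - 1) := pow_le_pow_left₀ (norm_nonneg _) hxy _
            _ ≤ c := hct
        · exact mul_le_mul_of_nonneg_right hcp (norm_nonneg _)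
      calc ‖φ.coeff i‖ * ‖x ^ i - y ^ i‖ ≤ 1 * (c * ‖x - y‖) :=
            mul_le_mul (hint i) hib (norm_nonneg _) zero_le_one
        _ = c * ‖x - y‖ := one_mul _
  · exact mul_le_mul (hcs i hpi) (aux_pow_sub hx hy i) (norm_nonneg _) hc0


end Aux

/-- The residue field of the valuation ring `{x : F | ‖x‖ ≤ 1}` has exactly `q` elements:
there is a set of `q` representatives of the distinct residue classes. -/
def HasResidueCard (F : Type*) [NormedField F] (q : ℕ) : Prop :=
  ∃ S : Finset F, S.card = q ∧ (∀ x ∈ S, ‖x‖ ≤ 1) ∧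
    (∀ x ∈ S, ∀ y ∈ S, x ≠ y → 1 ≤ ‖x - y‖) ∧
    ∀ z : F, ‖z‖ ≤ 1 → ∃ x ∈ S, ‖z - x‖ < 1

theorem card_periodic_le {p : ℕ} [Fact p.Prime] {F : Type*} [NormedField F]
    [Algebra ℚ_[p] F] [FiniteDimensional ℚ_[p] F] [IsUltrametricDist F]
    (hext : ∀ x : ℚ_[p], ‖algebraMap ℚ_[p] F x‖ = ‖x‖)
    (f : ℕ) (hres : HasResidueCard F (p ^ f))
    (d : ℕ) (hd : 2 ≤ d) (hpd : p ∣ d)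
    (φ : Polynomial F) (hdeg : φ.natDegree = d)
    (hint : ∀ i, ‖φ.coeff i‖ ≤ 1)
    (hlead : ‖φ.coeff d‖ = 1)
    (hsmall : ∀ i, ¬ p ∣ i → ‖φ.coeff i‖ < 1) :
    {x : F | ∃ n : ℕ, 1 ≤ n ∧ (fun z => φ.eval z)^[n] x = x}.Finite ∧
      {x : F | ∃ n : ℕ, 1 ≤ n ∧ (fun z => φ.eval z)^[n] x = x}.ncard ≤ p ^ f := by
  classical
  obtain ⟨S, hScard, hS1, hS2, hS3⟩ := hres
  set ψ : F → F := fun z => φ.eval z with hψ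
  set P : Set F := {x : F | ∃ n : ℕ, 1 ≤ n ∧ ψ^[n] x = x} with hPdef
  have hp2 : 2 ≤ p := (Fact.out : p.Prime).two_le
  -- periodic points lie in the unit ball
  have hball : ∀ x ∈ P, ‖x‖ ≤ 1 := by
    rintro x ⟨n, hn1, hn2⟩
    by_contra h
    push_neg at h
    have hgrow : ∀ k, 1 ≤ k → ‖x‖ < ‖ψ^[k] x‖ := by
      intro k hk
      induction k with
      | zero => omega
      | succ k ih =>
        rcases Nat.eq_zero_or_pos k with h0 | h0
        · subst h0; simpa using aux_escape hd hdeg hint hlead h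
        · have ihk := ih h0
          rw [Function.iterate_succ_apply']
          exact lt_trans ihk (aux_escape hd hdeg hint hlead (lt_trans h ihk))
    have := hgrow n hn1
    rw [hn2] at this
    exact lt_irrefl _ this
  -- the ball is forward invariant
  have hstay : ∀ (k : ℕ) (z : F), ‖z‖ ≤ 1 → ‖ψ^[k] z‖ ≤ 1 := by
    intro k
    induction k with
    | zero => intro z hz; simpa using hz
    | succ k ih =>
      intro z hz
      rw [Function.iterate_succ_apply']
      exact aux_eval_le_one hint (ih z hz)
  -- two periodic points in the same residue class coincide
  have hkey : ∀ x ∈ P, ∀ y ∈ P, ‖x - y‖ < 1 → x = y := by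
    intro x hx y hy hxy
    by_contra hne
    have hx1 := hball x hx
    have hy1 := hball y hy
    obtain ⟨n, hn1, hn2⟩ := hx
    obtain ⟨m, hm1, hm2⟩ := hy
    set t : ℝ := ‖x - y‖ with htdef
    have ht0 : 0 < t := by
      simpa [htdef] using norm_pos_iff.2 (sub_ne_zero.2 hne)
    have hpF : ‖(p : F)‖ < 1 := by
      have h1 : ((p : ℚ_[p]) : ℚ_[p]) = (p : ℚ_[p]) := rfl
      have h2 : (p : F) = algebraMap ℚ_[p] F (p : ℚ_[p]) := by rw [map_natCast]
      rw [h2, hext, Padic.norm_p]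
      rw [inv_lt_one_iff₀]
      right
      exact_mod_cast lt_of_lt_of_le one_lt_two hp2
    set M : ℝ := (Finset.range (d + 1)).sup' ⟨0, Finset.mem_range.2 (Nat.succ_pos d)⟩
      (fun i => if p ∣ i then 0 else ‖φ.coeff i‖) with hMdef
    set c : ℝ := max (max ‖(p : F)‖ (t ^ (p - 1))) M with hcdef
    have hc0 : 0 ≤ c := le_max_of_le_left (le_max_of_le_left (norm_nonneg _))
    have hc1 : c < 1 := by
      rw [hcdef]
      refine max_lt (max_lt hpF ?_) ?_
      · exact pow_lt_one₀ ht0.le hxy (by omega)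
      · rw [hMdef]; apply (Finset.sup'_lt_iff _).2
        intro i _
        by_cases hpi : p ∣ i
        · simp [hpi]
        · simpa [hpi] using hsmall i hpi
    have hcp : ‖(p : F)‖ ≤ c := le_max_of_le_left (le_max_left _ _)
    have hct : t ^ (p - 1) ≤ c := le_max_of_le_left (le_max_right _ _)
    have hcs : ∀ i, ¬ p ∣ i → ‖φ.coeff i‖ ≤ c := by
      intro i hpi
      by_cases hi : i ≤ d
      · refine le_max_of_le_right ?_
        rw [hMdef]
        have hmem : i ∈ Finset.range (d + 1) := Finset.mem_range.2 (by omega)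
        have := Finset.le_sup' (f := fun i => if p ∣ i then 0 else ‖φ.coeff i‖) hmem
        simpa [hpi] using this
      · have : φ.coeff i = 0 := Polynomial.coeff_eq_zero_of_natDegree_lt (by omega)
        simp [this, hc0]
    -- contraction along iterates
    have hiter : ∀ k, ‖ψ^[k] x - ψ^[k] y‖ ≤ c ^ k * t := by
      intro k
      induction k with
      | zero => simp [htdef]
      | succ k ih =>
        rw [Function.iterate_succ_apply', Function.iterate_succ_apply']
        have hb : ‖ψ^[k] x - ψ^[k] y‖ ≤ t := by
          refine ih.trans ?_
          calc c ^ k * t ≤ 1 * t :=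
                mul_le_mul_of_nonneg_right (pow_le_one₀ hc0 hc1.le) ht0.le
            _ = t := one_mul _
        have := aux_contract hdeg hint hc0 hcp hcs (le_of_lt hxy) hct
          (hstay k x hx1) (hstay k y hy1) hb
        calc ‖φ.eval (ψ^[k] x) - φ.eval (ψ^[k] y)‖ ≤ c * ‖ψ^[k] x - ψ^[k] y‖ := this
          _ ≤ c * (c ^ k * t) := mul_le_mul_of_nonneg_left ih hc0
          _ = c ^ (k + 1) * t := by ring
    have hNx : ψ^[n * m] x = x := by
      rw [Function.iterate_mul]
      exact Function.iterate_fixed hn2 m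
    have hNy : ψ^[n * m] y = y := by
      rw [Nat.mul_comm, Function.iterate_mul]
      exact Function.iterate_fixed hm2 n
    have := hiter (n * m)
    rw [hNx, hNy] at this
    have hlt : c ^ (n * m) * t < 1 * t := by
      refine mul_lt_mul_of_pos_right ?_ ht0
      exact pow_lt_one₀ hc0 hc1 (by positivity)
    rw [one_mul] at hlt
    exact absurd (this.trans_lt hlt) (lt_irrefl t)
  -- choose residue representatives
  have hrep : ∀ x : F, ∃ s, x ∈ P → s ∈ S ∧ ‖x - s‖ < 1 := by
    intro x
    by_cases hx : x ∈ P
    · obtain ⟨s, hs1, hs2⟩ := hS3 x (hball x hx)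
      exact ⟨s, fun _ => ⟨hs1, hs2⟩⟩
    · exact ⟨0, fun h => absurd h hx⟩
  choose g hg using hrep
  have hmaps : ∀ x ∈ P, g x ∈ (↑S : Set F) := fun x hx => (hg x hx).1
  have hinj : Set.InjOn g P := by
    intro x hx y hy hgxy
    refine hkey x hx y hy ?_
    have h1 : ‖x - g x‖ < 1 := (hg x hx).2
    have h2 : ‖y - g x‖ < 1 := by rw [hgxy]; exact (hg y hy).2
    have h3 : ‖(x - g x) - (y - g x)‖ ≤ max ‖x - g x‖ ‖y - g x‖ := aux_sub_le_max _ _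
    have h4 : (x - g x) - (y - g x) = x - y := by ring
    rw [h4] at h3
    exact lt_of_le_of_lt h3 (max_lt h1 h2)
  have hfin : P.Finite := by
    refine Set.Finite.of_finite_image ?_ hinj
    exact S.finite_toSet.subset (by rintro _ ⟨x, hx, rfl⟩; exact hmaps x hx)
  refine ⟨hfin, ?_⟩
  calc P.ncard ≤ (↑S : Set F).ncard :=
        Set.ncard_le_ncard_of_injOn g hmaps hinj S.finite_toSet
    _ = S.card := Set.ncard_coe_finset S
    _ = p ^ f := hScard
end

section
/- Let F be a finite extension of Q_p with uniformizer ϖ and residue degree f, let d = p^k, and let φ(X) = X^d + Σ_{i=1}^{d-1} a_i X^i + a_0 with a_i ∈ O_F, v_F(a_i) > 0 for 0 < i < d, and a_0 ∈ O_F. Assume f | k or a_0 ∈ Q. Then for every positive integer n, φ^n(X) ≡ X^{d^n} + n·a_0 (mod ϖ) as polynomials over the residue field O_F/(ϖ). -/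
/-!
Work in the residue field `κ` of the closed unit ball of `F`; it has characteristic `p`, so
`φ` reduces to `X ^ p ^ k + c` with `c` the residue of `a₀`. By the freshman's dream the iterates
of `X ^ p ^ k + c` are `X ^ (p ^ k) ^ n + n * c` as soon as `c ^ p ^ k = c`. The latter holds
when `f ∣ k` because `κ` has `p ^ f` elements, and when `a₀` is rational because `a₀` is then
congruent to an integer, whose residue lies in the prime field.
-/

open Polynomial

open IsLocalRing

theorem Polynomial.map_iterate_comp {R S : Type*} [CommSemiring R] [CommSemiring S] (f : R →+* S)
    (φ ψ : R[X]) (n : ℕ) :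
    ((φ.comp ·)^[n] ψ).map f = ((φ.map f).comp ·)^[n] (ψ.map f) :=
  Function.Semiconj.iterate_right (fun _ => Polynomial.map_comp _ _ _) n ψ

theorem Polynomial.iterate_comp_X_pow_add_C {R : Type*} [CommSemiring R] (p : ℕ) [ExpChar R p] {k : ℕ}
    {c : R} (hc : c ^ p ^ k = c) (n : ℕ) :
    ((X ^ p ^ k + C c).comp ·)^[n] X = X ^ (p ^ k) ^ n + C ((n : R) * c) := by
  induction n with
  | zero => simp
  | succ n ih =>
    have hfix : ((n : R) * c) ^ p ^ k = n * c := by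
      rw [mul_pow, hc, ← iterateFrobenius_def, map_natCast]
    rw [Function.iterate_succ_apply', ih, add_comp, pow_comp, X_comp, C_comp,
      add_pow_expChar_pow, ← C_pow, hfix, ← pow_mul, ← pow_succ, add_assoc, ← C_add]
    push_cast
    ring_nf

theorem pow_pow_eq_self_of_dvd {M : Type*} [Monoid M] {x : M} {p e k : ℕ} (hx : x ^ p ^ e = x)
    (hek : e ∣ k) : x ^ p ^ k = x := by
  obtain ⟨t, rfl⟩ := hek
  have := (Function.IsFixedPt.iterate (f := (· ^ p ^ e)) hx t)
  rwa [Function.IsFixedPt, pow_iterate, ← pow_mul] at this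

theorem Polynomial.map_eq_X_pow_add_C {R S : Type*} [Semiring R] [Semiring S] (g : R →+* S)
    {φ : R[X]} {d : ℕ} (hd : 0 < d) (hdeg : φ.natDegree = d) (hmonic : φ.coeff d = 1)
    (hmiddle : ∀ i, 0 < i → i < d → g (φ.coeff i) = 0) :
    φ.map g = X ^ d + C (g (φ.coeff 0)) := by
  ext i
  rw [coeff_map, coeff_add, coeff_X_pow, coeff_C]
  rcases Nat.eq_zero_or_pos i with rfl | hi
  · simp [hd.ne]
  rcases lt_trichotomy i d with hlt | rfl | hgt
  · simp [hmiddle i hi hlt, hlt.ne, hi.ne']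
  · simp [hmonic, hi.ne']
  · simp [coeff_eq_zero_of_natDegree_lt (hdeg ▸ hgt), hgt.ne', hi.ne']

section NormIntegers

variable (F : Type*) [NormedField F] [IsUltrametricDist F]

noncomputable def normIntegers : ValuationSubring F :=
  (NormedField.valuation (K := F)).valuationSubring

variable {F}

theorem mem_normIntegers {x : F} : x ∈ normIntegers F ↔ ‖x‖ ≤ 1 := by
  rw [normIntegers, Valuation.mem_valuationSubring_iff, NormedField.valuation_apply,
    ← NNReal.coe_le_coe, coe_nnnorm, NNReal.coe_one]

theorem residue_eq_zero_iff_norm_lt_one (x : normIntegers F) :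
    residue _ x = 0 ↔ ‖(x : F)‖ < 1 := by
  rw [residue_eq_zero_iff]
  exact (NormedField.valuation.mem_maximalIdeal_iff (a := x)).trans <| by
    rw [NormedField.valuation_apply, ← NNReal.coe_lt_coe, coe_nnnorm, NNReal.coe_one]

theorem residue_eq_residue_iff_norm_sub_lt_one (x y : normIntegers F) :
    residue _ x = residue _ y ↔ ‖(x : F) - y‖ < 1 := by
  rw [← sub_eq_zero, ← map_sub, residue_eq_zero_iff_norm_lt_one]
  rfl

theorem charP_residueField_normIntegers {p : ℕ} (hp : p.Prime) (h : ‖(p : F)‖ < 1) :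
    CharP (ResidueField (normIntegers F)) p := by
  rw [CharP.charP_iff_prime_eq_zero hp, ← map_natCast (residue (normIntegers F)),
    residue_eq_zero_iff_norm_lt_one]
  simpa using h

theorem residue_pow_char_eq_self_of_norm_sub_intCast_lt_one {p : ℕ} [Fact p.Prime]
    [CharP (ResidueField (normIntegers F)) p] (x : normIntegers F) (m : ℤ)
    (h : ‖(x : F) - m‖ < 1) : residue _ x ^ p = residue _ x := by
  have hx : residue _ x = m := by
    rw [← map_intCast (residue (normIntegers F)), residue_eq_residue_iff_norm_sub_lt_one]
    simpa using h
  rw [hx, ← frobenius_def, map_intCast]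

theorem exists_lift_normIntegers {φ : F[X]} (h : ∀ i, ‖φ.coeff i‖ ≤ 1) :
    ∃ φO : (normIntegers F)[X], φO.map (normIntegers F).subtype = φ :=
  (mem_lifts φ).mp <| (lifts_iff_coeff_lifts φ).mpr fun i =>
    ⟨⟨φ.coeff i, mem_normIntegers.mpr (h i)⟩, rfl⟩

theorem norm_coeff_lt_one_of_map_residue_eq_zero {P : (normIntegers F)[X]}
    (hP : P.map (residue _) = 0) (j : ℕ) : ‖(P.map (normIntegers F).subtype).coeff j‖ < 1 := by
  rw [coeff_map, ValuationSubring.subtype_apply, ← residue_eq_zero_iff_norm_lt_one, ← coeff_map,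
    hP, coeff_zero]

theorem map_residue_eq_X_pow_add_C {φ : (normIntegers F)[X]} {d : ℕ} (hd : 0 < d)
    (hdeg : (φ.map (normIntegers F).subtype).natDegree = d)
    (hmonic : (φ.map (normIntegers F).subtype).coeff d = 1)
    (hsmall : ∀ i, 0 < i → i < d → ‖(φ.map (normIntegers F).subtype).coeff i‖ < 1) :
    φ.map (residue _) = X ^ d + C (residue _ (φ.coeff 0)) := by
  refine map_eq_X_pow_add_C _ hd ?_ ?_ fun i hi hid => ?_
  · rwa [natDegree_map_eq_of_injective Subtype.val_injective] at hdeg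
  · rw [coeff_map] at hmonic
    exact Subtype.ext hmonic
  · rw [residue_eq_zero_iff_norm_lt_one]
    simpa using hsmall i hi hid

end NormIntegers

theorem HasResidueCard.pow_eq_self {F : Type*} [NormedField F] [IsUltrametricDist F] {q : ℕ}
    (h : HasResidueCard F q) (x : ResidueField (normIntegers F)) : x ^ q = x := by
  obtain ⟨S, hcard, hle, hsep, hcover⟩ := h
  let e : S → ResidueField (normIntegers F) :=
    fun s => residue _ ⟨s, mem_normIntegers.mpr (hle s s.2)⟩
  have he : Function.Bijective e := by
    refine ⟨fun s t hst => by_contra fun hne => ?_, fun z => ?_⟩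
    · rw [residue_eq_residue_iff_norm_sub_lt_one] at hst
      exact (hsep s s.2 t t.2 (Subtype.coe_injective.ne hne)).not_gt hst
    · obtain ⟨y, rfl⟩ := residue_surjective z
      obtain ⟨s, hs, hys⟩ := hcover y (mem_normIntegers.mp y.2)
      refine ⟨⟨s, hs⟩, (residue_eq_residue_iff_norm_sub_lt_one _ _).mpr ?_⟩
      rwa [norm_sub_rev]
  have : Fintype (ResidueField (normIntegers F)) := Fintype.ofBijective e he
  rw [← hcard, ← Fintype.card_coe, Fintype.card_of_bijective he, FiniteField.pow_card]

theorem exists_intCast_norm_ratCast_sub_lt_one {p : ℕ} [Fact p.Prime] {F : Type*}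
    [NormedField F] [Algebra ℚ_[p] F] (hext : ∀ x : ℚ_[p], ‖algebraMap ℚ_[p] F x‖ = ‖x‖)
    {q : ℚ} (hq : ‖(q : F)‖ ≤ 1) : ∃ m : ℤ, ‖(q : F) - m‖ < 1 := by
  have hqp : ‖(q : ℚ_[p])‖ ≤ 1 := by rwa [← hext, map_ratCast]
  obtain ⟨m, -, -, hm⟩ := PadicInt.exists_mem_range_of_norm_rat_le_one q hqp
  refine ⟨m, ?_⟩
  rw [← map_ratCast (algebraMap ℚ_[p] F), ← map_intCast (algebraMap ℚ_[p] F), ← map_sub, hext]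
  exact_mod_cast hm

theorem charP_residueField_normIntegers_of_isometry {p : ℕ} [Fact p.Prime] {F : Type*}
    [NormedField F] [IsUltrametricDist F] [Algebra ℚ_[p] F]
    (hext : ∀ x : ℚ_[p], ‖algebraMap ℚ_[p] F x‖ = ‖x‖) :
    CharP (ResidueField (normIntegers F)) p := by
  refine charP_residueField_normIntegers Fact.out ?_
  rw [← map_natCast (algebraMap ℚ_[p] F), hext]
  exact Padic.norm_p_lt_one

theorem residue_pow_char_eq_self_of_ratCast {p : ℕ} [Fact p.Prime] {F : Type*}
    [NormedField F] [IsUltrametricDist F] [Algebra ℚ_[p] F]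
    (hext : ∀ x : ℚ_[p], ‖algebraMap ℚ_[p] F x‖ = ‖x‖)
    [CharP (ResidueField (normIntegers F)) p] (x : normIntegers F) {q : ℚ} (hx : (x : F) = q) :
    residue _ x ^ p = residue _ x := by
  obtain ⟨m, hm⟩ := exists_intCast_norm_ratCast_sub_lt_one hext (hx ▸ mem_normIntegers.mp x.2)
  exact residue_pow_char_eq_self_of_norm_sub_intCast_lt_one x m (hx ▸ hm)

theorem iterate_congruent_mod_uniformizer_general {p : ℕ} [Fact p.Prime] {F : Type*} [NormedField F]
    [Algebra ℚ_[p] F] [IsUltrametricDist F]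
    (hext : ∀ x : ℚ_[p], ‖algebraMap ℚ_[p] F x‖ = ‖x‖)
    (f : ℕ) (hres : HasResidueCard F (p ^ f))
    (ϖ : F) (hϖmax : ∀ x : F, ‖x‖ < 1 → ‖x‖ ≤ ‖ϖ‖)
    (k d : ℕ) (hd : d = p ^ k)
    (φ : Polynomial F) (hdeg : φ.natDegree = d) (hmonic : φ.coeff d = 1)
    (hint : ∀ i, ‖φ.coeff i‖ ≤ 1)
    (hsmall : ∀ i, 0 < i → i < d → ‖φ.coeff i‖ < 1)
    (hass : f ∣ k ∨ ∃ q : ℚ, φ.coeff 0 = (q : F)) :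
    ∀ n : ℕ, 1 ≤ n → ∀ j : ℕ,
      ‖((fun ψ : Polynomial F => φ.comp ψ)^[n] X
          - (X ^ (d ^ n) + C ((n : F) * φ.coeff 0))).coeff j‖ ≤ ‖ϖ‖ := by
  intro n _ j
  subst hd
  obtain ⟨φO, rfl⟩ := exists_lift_normIntegers hint
  have := charP_residueField_normIntegers_of_isometry hext
  set c := residue _ (φO.coeff 0)
  have hc : c ^ p ^ k = c := by
    rcases hass with hfk | ⟨q, hq⟩
    · exact pow_pow_eq_self_of_dvd (hres.pow_eq_self c) hfk
    · refine pow_pow_eq_self_of_dvd (e := 1) ?_ (one_dvd k)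
      rw [pow_one]
      exact residue_pow_char_eq_self_of_ratCast hext _ (by simpa using hq)
  have hred : φO.map (residue _) = X ^ p ^ k + C c :=
    map_residue_eq_X_pow_add_C (pow_pos (Fact.out : p.Prime).pos k) hdeg hmonic hsmall
  apply hϖmax
  convert norm_coeff_lt_one_of_map_residue_eq_zero
    (P := (φO.comp ·)^[n] X - (X ^ (p ^ k) ^ n + C (n * φO.coeff 0))) ?_ j using 3
  · simp [map_iterate_comp]
  · rw [Polynomial.map_sub, map_iterate_comp, hred, map_X, iterate_comp_X_pow_add_C p hc]
    simp [c]

theorem iterate_congruent_mod_uniformizer {p : ℕ} [Fact p.Prime] {F : Type*} [NormedField F]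
    [Algebra ℚ_[p] F] [FiniteDimensional ℚ_[p] F] [IsUltrametricDist F]
    (hext : ∀ x : ℚ_[p], ‖algebraMap ℚ_[p] F x‖ = ‖x‖)
    (f : ℕ) (hres : HasResidueCard F (p ^ f))
    (ϖ : F) (hϖ0 : 0 < ‖ϖ‖) (hϖ1 : ‖ϖ‖ < 1) (hϖmax : ∀ x : F, ‖x‖ < 1 → ‖x‖ ≤ ‖ϖ‖)
    (k d : ℕ) (hk : 1 ≤ k) (hd : d = p ^ k)
    (φ : Polynomial F) (hdeg : φ.natDegree = d) (hmonic : φ.coeff d = 1)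
    (hint : ∀ i, ‖φ.coeff i‖ ≤ 1)
    (hsmall : ∀ i, 0 < i → i < d → ‖φ.coeff i‖ < 1)
    (hass : f ∣ k ∨ ∃ q : ℚ, φ.coeff 0 = (q : F)) :
    ∀ n : ℕ, 1 ≤ n → ∀ j : ℕ,
      ‖((fun ψ : Polynomial F => φ.comp ψ)^[n] X
          - (X ^ (d ^ n) + C ((n : F) * φ.coeff 0))).coeff j‖ ≤ ‖ϖ‖ :=
  iterate_congruent_mod_uniformizer_general hext f hres ϖ hϖmax k d hd φ hdeg hmonic hint hsmall
    hass
end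

section
/- Let F be a finite extension of Q_2 with residue degree f, and let c = r/s ∈ Q with s odd and c ∈ O_F. If r·f is even, then every periodic point of φ(X) = X^2 + c in F satisfies φ^f(x) = x; if r·f is odd, then every periodic point of φ in F satisfies φ^{2f}(x) = x. -/
namespace QuadPeriodAux

open IsUltrametricDist

variable (F : Type*) [NormedField F] [IsUltrametricDist F]

/-- The unit ball as a subring. -/
def O : Subring F where
  carrier := {x | ‖x‖ ≤ 1}
  mul_mem' := by
    intro a b ha hb
    simp only [Set.mem_setOf_eq, norm_mul] at *
    exact mul_le_one₀ ha (norm_nonneg _) hb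
  one_mem' := by simp
  add_mem' := by
    intro a b ha hb
    exact le_trans (norm_add_le_max a b) (max_le ha hb)
  zero_mem' := by simp
  neg_mem' := by intro a ha; simpa using ha

/-- The maximal ideal of the unit ball. -/
def M : Ideal (O F) where
  carrier := {x | ‖(x : F)‖ < 1}
  add_mem' := by
    intro a b ha hb
    show ‖((a : F) + (b : F))‖ < 1
    exact lt_of_le_of_lt (norm_add_le_max _ _) (max_lt ha hb)
  zero_mem' := by
    show ‖((0 : O F) : F)‖ < 1
    simp
  smul_mem' := by
    intro a b hb
    show ‖((a : F) * (b : F))‖ < 1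
    rw [norm_mul]
    calc ‖(a : F)‖ * ‖(b : F)‖ ≤ 1 * ‖(b : F)‖ :=
      mul_le_mul_of_nonneg_right a.2 (norm_nonneg _)
    _ = ‖(b : F)‖ := one_mul _
    _ < 1 := hb

theorem M_isMaximal : (M F).IsMaximal := by
  rw [Ideal.isMaximal_iff]
  constructor
  · show ¬ ‖((1 : O F) : F)‖ < 1
    simp
  · intro J x hIJ hxI hxJ
    have hx1 : ‖(x : F)‖ = 1 := le_antisymm x.2 (not_lt.mp hxI)
    have hx0 : (x : F) ≠ 0 := by
      intro h; rw [h] at hx1; simp at hx1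
    have hinv : (x : F)⁻¹ ∈ O F := by
      show ‖(x : F)⁻¹‖ ≤ 1
      rw [norm_inv, hx1]; norm_num
    have : ((⟨(x : F)⁻¹, hinv⟩ : O F) * x) = 1 := by
      ext
      exact inv_mul_cancel₀ hx0
    exact this ▸ J.mul_mem_left _ hxJ

variable {F}

theorem iter_mem (c : F) (hc : ‖c‖ ≤ 1) (x : F) (hx : ‖x‖ ≤ 1) (n : ℕ) :
    ‖(fun z => z ^ 2 + c)^[n] x‖ ≤ 1 := by
  induction n with
  | zero => simpa
  | succ n ih =>
    rw [Function.iterate_succ_apply']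
    refine le_trans (norm_add_le_max _ _) (max_le ?_ hc)
    rw [norm_pow]
    exact pow_le_one₀ (norm_nonneg _) ih

set_option maxHeartbeats 1000000 in
set_option synthInstance.maxHeartbeats 200000 in
theorem key (h2 : ‖(2 : F)‖ < 1) (f : ℕ) (hres : HasResidueCard F (2 ^ f))
    (c : F) (hc : ‖c‖ ≤ 1) (hcc : ‖c * c - c‖ < 1)
    (n : ℕ) (hn : n = f ∨ n = 2 * f) (hnc : ‖(n : F) * c‖ < 1)
    (x : F) (hx : ‖x‖ ≤ 1) :
    ‖(fun z => z ^ 2 + c)^[n] x - x‖ < 1 := by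
  obtain ⟨S, hScard, hS1, hSsep, hScov⟩ := hres
  haveI : (M F).IsMaximal := M_isMaximal F
  letI K := (O F) ⧸ (M F)
  letI : Field K := Ideal.Quotient.field (M F)
  set π : O F →+* K := Ideal.Quotient.mk (M F) with hπdef
  -- the residue field has 2^f elements
  let g : {y // y ∈ S} → K := fun y => π ⟨y.1, hS1 _ y.2⟩
  have hginj : Function.Injective g := by
    intro a b hab
    have : (⟨a.1, hS1 _ a.2⟩ : O F) - ⟨b.1, hS1 _ b.2⟩ ∈ M F :=
      Ideal.Quotient.eq.mp hab
    have hlt : ‖(a.1 : F) - b.1‖ < 1 := this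
    by_contra hne
    have : a.1 ≠ b.1 := fun h => hne (Subtype.ext h)
    exact absurd hlt (not_lt.mpr (hSsep _ a.2 _ b.2 this))
  have hgsurj : Function.Surjective g := by
    intro w
    obtain ⟨z, rfl⟩ := Ideal.Quotient.mk_surjective w
    obtain ⟨y, hyS, hy⟩ := hScov z.1 z.2
    refine ⟨⟨y, hyS⟩, ?_⟩
    show π _ = π z
    rw [Ideal.Quotient.eq]
    show ‖((y : F) - z)‖ < 1
    rw [← norm_neg]
    simpa using hy
  have hgbij : Function.Bijective g := ⟨hginj, hgsurj⟩
  haveI : Fintype K := Fintype.ofBijective g hgbij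
  have hcard : Fintype.card K = 2 ^ f := by
    rw [← Fintype.card_of_bijective hgbij, Fintype.card_coe, hScard]
  have hpowK : ∀ w : K, w ^ (2 ^ f) = w := by
    intro w
    rw [← hcard]
    exact FiniteField.pow_card w
  -- elements
  set cO : O F := ⟨c, hc⟩ with hcO
  have hmem : ∀ k : ℕ, (fun z => z ^ 2 + c)^[k] x ∈ O F := fun k => iter_mem c hc x hx k
  set a : ℕ → O F := fun k => ⟨(fun z => z ^ 2 + c)^[k] x, hmem k⟩ with ha
  set t : K := π cO with ht
  -- char-2-type facts
  have h2K : (2 : K) = 0 := by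
    have : π (2 : O F) = 0 := by
      rw [Ideal.Quotient.eq_zero_iff_mem]
      show ‖((2 : O F) : F)‖ < 1
      exact h2
    rwa [map_ofNat] at this
  have htt : t * t = t := by
    rw [ht, ← map_mul, hπdef, Ideal.Quotient.eq]
    show ‖((cO * cO : O F) : F) - c‖ < 1
    push_cast
    exact hcc
  have haddself : ∀ w : K, w + w = 0 := by
    intro w
    rw [← two_mul, h2K, zero_mul]
  have hnat : ∀ m : ℕ, (m : K) * (m : K) = (m : K) := by
    intro m
    obtain ⟨k, hk⟩ := Nat.even_mul_succ_self m
    have : ((m * (m + 1) : ℕ) : K) = 0 := by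
      rw [hk]; push_cast; exact haddself _
    push_cast at this
    have h := haddself (m : K)
    linear_combination this - h
  -- main induction
  have main : ∀ m : ℕ, π (a m) = π (a 0) ^ (2 ^ m) + (m : K) * t := by
    intro m
    induction m with
    | zero => simp
    | succ m ih =>
      have hstep : a (m + 1) = a m ^ 2 + cO := by
        ext
        show (fun z => z ^ 2 + c)^[m + 1] x = _
        rw [Function.iterate_succ_apply']
        push_cast
        rfl
      rw [hstep, map_add, map_pow, ih]
      have hpow : π (a 0) ^ 2 ^ (m + 1) = (π (a 0) ^ 2 ^ m) ^ 2 := by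
        rw [← pow_mul, ← pow_succ]
      rw [hpow]
      set A := π (a 0) ^ 2 ^ m
      push_cast
      linear_combination ((m : K) * (m : K)) * htt + t * hnat m +
        (A * (m : K) * t) * h2K
  -- kill the trace term
  have hzero : (n : K) * t = 0 := by
    have : π ((n : O F) * cO) = 0 := by
      rw [Ideal.Quotient.eq_zero_iff_mem]
      show ‖(((n : O F) * cO : O F) : F)‖ < 1
      push_cast
      exact hnc
    rwa [map_mul, map_natCast (Ideal.Quotient.mk (M F))] at this
  have hfinal : π (a n) = π (a 0) := by
    rw [main n, hzero, add_zero]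
    rcases hn with rfl | rfl
    · exact hpowK _
    · rw [two_mul, pow_add, pow_mul]
      rw [hpowK, hpowK]
  have := Ideal.Quotient.eq.mp hfinal
  exact this

theorem periodic_bounded (c : F) (hc : ‖c‖ ≤ 1) (x : F) (n : ℕ) (hn : 1 ≤ n)
    (hper : (fun z => z ^ 2 + c)^[n] x = x) : ‖x‖ ≤ 1 := by
  by_contra h
  push_neg at h
  have grow : ∀ k : ℕ, ‖x‖ ^ (2 ^ k) ≤ ‖(fun z => z ^ 2 + c)^[k] x‖ := by
    intro k
    induction k with
    | zero => simp
    | succ k ih =>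
      have h1 : 1 < ‖(fun z => z ^ 2 + c)^[k] x‖ :=
        lt_of_lt_of_le (one_lt_pow₀ h (by positivity)) ih
      rw [Function.iterate_succ_apply']
      have hne : ‖c‖ ≠ ‖((fun z => z ^ 2 + c)^[k] x) ^ 2‖ := by
        rw [norm_pow]
        nlinarith
      have := norm_add_eq_max_of_norm_ne_norm hne
      rw [add_comm] at this
      rw [this, norm_pow]
      have : ‖c‖ ≤ ‖(fun z => z ^ 2 + c)^[k] x‖ ^ 2 := by nlinarith
      rw [max_eq_right this, pow_succ, pow_mul]
      exact pow_le_pow_left₀ (by positivity) ih 2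
  have := grow n
  rw [hper] at this
  have h2 : ‖x‖ < ‖x‖ ^ (2 ^ n) := by
    calc ‖x‖ = ‖x‖ ^ 1 := (pow_one _).symm
    _ < ‖x‖ ^ (2 ^ n) := by
      apply pow_lt_pow_right₀ h
      calc 1 < 2 ^ 1 := by norm_num
      _ ≤ 2 ^ n := Nat.pow_le_pow_right (by norm_num) hn
  linarith

theorem periodic_unique (h2 : ‖(2 : F)‖ < 1) (c : F) (hc : ‖c‖ ≤ 1)
    (N : ℕ) (hN : 1 ≤ N) (x y : F) (hx : ‖x‖ ≤ 1) (hy : ‖y‖ ≤ 1)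
    (hxp : (fun z => z ^ 2 + c)^[N] x = x) (hyp : (fun z => z ^ 2 + c)^[N] y = y)
    (hxy : ‖x - y‖ < 1) : x = y := by
  by_contra hne
  set φ : F → F := fun z => z ^ 2 + c with hφ
  have step : ∀ a b : F, ‖b‖ ≤ 1 →
      ‖φ a - φ b‖ ≤ ‖a - b‖ * max ‖a - b‖ ‖(2 : F)‖ := by
    intro a b hb
    have hid : φ a - φ b = (a - b) * ((a - b) + 2 * b) := by
      simp only [hφ]; ring
    rw [hid, norm_mul]
    refine mul_le_mul_of_nonneg_left ?_ (norm_nonneg _)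
    refine le_trans (norm_add_le_max _ _) (max_le_max le_rfl ?_)
    rw [norm_mul]
    exact mul_le_of_le_one_right (norm_nonneg _) hb
  set u : ℕ → ℝ := fun k => ‖φ^[k] x - φ^[k] y‖ with hu
  have hyk : ∀ k, ‖φ^[k] y‖ ≤ 1 := fun k => iter_mem c hc y hy k
  have hult : ∀ k, u k < 1 := by
    intro k
    induction k with
    | zero => simpa [hu] using hxy
    | succ k ih =>
      have := step (φ^[k] x) (φ^[k] y) (hyk k)
      have hs : u (k + 1) ≤ u k * max (u k) ‖(2 : F)‖ := by
        simpa [hu, Function.iterate_succ_apply'] using this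
      have hm : max (u k) ‖(2 : F)‖ < 1 := max_lt ih h2
      have hm0 : 0 ≤ max (u k) ‖(2 : F)‖ := le_max_of_le_right (norm_nonneg _)
      have hk0 : 0 ≤ u k := norm_nonneg _
      nlinarith
  have hdec : ∀ k, u (k + 1) ≤ u k := by
    intro k
    have := step (φ^[k] x) (φ^[k] y) (hyk k)
    have hs : u (k + 1) ≤ u k * max (u k) ‖(2 : F)‖ := by
      simpa [hu, Function.iterate_succ_apply'] using this
    refine le_trans hs (mul_le_of_le_one_right (norm_nonneg _) ?_)
    exact max_le (le_of_lt (hult k)) (le_of_lt h2)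
  have hanti : Antitone u := antitone_nat_of_succ_le hdec
  have hu0 : 0 < u 0 := by
    simp only [hu, Function.iterate_zero, id]
    exact norm_pos_iff.mpr (sub_ne_zero_of_ne hne)
  have hstrict : u 1 < u 0 := by
    have := step x y hy
    have hs : u 1 ≤ u 0 * max (u 0) ‖(2 : F)‖ := by
      simpa [hu, Function.iterate_succ_apply'] using this
    calc u 1 ≤ u 0 * max (u 0) ‖(2 : F)‖ := hs
    _ < u 0 * 1 := by
      apply mul_lt_mul_of_pos_left (max_lt (hult 0) h2) hu0
    _ = u 0 := mul_one _
  have hNu : u N = u 0 := by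
    simp only [hu, hxp, hyp, Function.iterate_zero, id]
  have : u N ≤ u 1 := hanti hN
  rw [hNu] at this
  linarith

end QuadPeriodAux

open QuadPeriodAux in
theorem quadratic_period_2adic {F : Type*} [NormedField F]
    [Algebra ℚ_[2] F] [FiniteDimensional ℚ_[2] F] [IsUltrametricDist F]
    (hext : ∀ x : ℚ_[2], ‖algebraMap ℚ_[2] F x‖ = ‖x‖)
    (f : ℕ) (hf : 1 ≤ f) (hres : HasResidueCard F (2 ^ f))
    (r s : ℤ) (hs : Odd s) (hs0 : s ≠ 0)
    (c : F) (hc : c = (r : F) / (s : F)) (hcint : ‖c‖ ≤ 1) :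
    (Even (r * (f : ℤ)) →
      ∀ x : F, (∃ n : ℕ, 1 ≤ n ∧ (fun z => z ^ 2 + c)^[n] x = x) →
        (fun z => z ^ 2 + c)^[f] x = x) ∧
    (Odd (r * (f : ℤ)) →
      ∀ x : F, (∃ n : ℕ, 1 ≤ n ∧ (fun z => z ^ 2 + c)^[n] x = x) →
        (fun z => z ^ 2 + c)^[2 * f] x = x) := by
  have h2F : ‖(2 : F)‖ < 1 := by
    have h := hext 2
    rw [map_ofNat] at h
    rw [h]
    have h2 : ‖(2 : ℚ_[2])‖ = ((2 : ℕ) : ℝ)⁻¹ := by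
      have := @Padic.norm_p 2 ⟨Nat.prime_two⟩
      simpa using this
    rw [h2]
    norm_num
  have hint : ∀ m : ℤ, ‖(m : F)‖ ≤ 1 := by
    intro m
    rw [← map_intCast (algebraMap ℚ_[2] F) m, hext]
    exact Padic.norm_int_le_one m
  have heven : ∀ m : ℤ, Even m → ‖(m : F)‖ < 1 := by
    intro m hm
    obtain ⟨k, rfl⟩ := hm
    have hkk : ((k + k : ℤ) : F) = 2 * (k : F) := by push_cast; ring
    rw [hkk, norm_mul]
    calc ‖(2 : F)‖ * ‖((k : ℤ) : F)‖ ≤ ‖(2 : F)‖ * 1 :=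
      mul_le_mul_of_nonneg_left (hint k) (norm_nonneg _)
    _ = ‖(2 : F)‖ := mul_one _
    _ < 1 := h2F
  have hs1 : ‖((s : ℤ) : F)‖ = 1 := by
    obtain ⟨k, hk⟩ := hs
    refine le_antisymm (hint s) ?_
    by_contra hlt
    push_neg at hlt
    have h1 : (1 : F) = ((s : ℤ) : F) + (-(((2 * k : ℤ) : F))) := by
      rw [hk]; push_cast; ring
    have : ‖(1 : F)‖ < 1 := by
      rw [h1]
      refine lt_of_le_of_lt (IsUltrametricDist.norm_add_le_max _ _) (max_lt hlt ?_)
      rw [norm_neg]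
      exact heven _ ⟨k, by ring⟩
    simp at this
  have hsne : ((s : ℤ) : F) ≠ 0 := by
    intro h
    rw [h] at hs1
    simp at hs1
  have hcc : ‖c * c - c‖ < 1 := by
    have hid : c * c - c = ((r * (r - s) : ℤ) : F) / (((s : ℤ) : F) * ((s : ℤ) : F)) := by
      rw [hc]
      field_simp
      push_cast
      ring
    rw [hid, norm_div, norm_mul, hs1]
    have hpar : Even (r * (r - s)) := by
      rcases Int.even_or_odd r with he | ho
      · exact he.mul_right _
      · exact (ho.sub_odd hs).mul_left r
    simpa using heven _ hpar
  constructor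
  · intro hrf x hx
    obtain ⟨n, hn1, hper⟩ := hx
    have hxb : ‖x‖ ≤ 1 := periodic_bounded c hcint x n hn1 hper
    have hfc : ‖((f : ℕ) : F) * c‖ < 1 := by
      have hid : ((f : ℕ) : F) * c = ((r * (f : ℤ) : ℤ) : F) / ((s : ℤ) : F) := by
        rw [hc]
        field_simp
        push_cast
        ring
      rw [hid, norm_div, hs1, div_one]
      exact heven _ hrf
    have hdist : ‖(fun z => z ^ 2 + c)^[f] x - x‖ < 1 :=
      key h2F f hres c hcint hcc f (Or.inl rfl) hfc x hxb
    have hyb : ‖(fun z => z ^ 2 + c)^[f] x‖ ≤ 1 := iter_mem c hcint x hxb f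
    have hyper : (fun z => z ^ 2 + c)^[n] ((fun z => z ^ 2 + c)^[f] x)
        = (fun z => z ^ 2 + c)^[f] x := by
      rw [← Function.iterate_add_apply, add_comm, Function.iterate_add_apply, hper]
    exact periodic_unique h2F c hcint n hn1 _ x hyb hxb hyper hper hdist
  · intro hrf x hx
    obtain ⟨n, hn1, hper⟩ := hx
    have hxb : ‖x‖ ≤ 1 := periodic_bounded c hcint x n hn1 hper
    have hfc : ‖((2 * f : ℕ) : F) * c‖ < 1 := by
      have hid : ((2 * f : ℕ) : F) * c = 2 * (((f : ℕ) : F) * c) := by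
        push_cast; ring
      rw [hid, norm_mul]
      have h1 : ‖((f : ℕ) : F) * c‖ ≤ 1 := by
        rw [norm_mul]
        have hfle : ‖((f : ℕ) : F)‖ ≤ 1 := by
          have := hint (f : ℤ)
          push_cast at this
          exact this
        exact mul_le_one₀ hfle (norm_nonneg _) hcint
      calc ‖(2 : F)‖ * ‖((f : ℕ) : F) * c‖ ≤ ‖(2 : F)‖ * 1 :=
        mul_le_mul_of_nonneg_left h1 (norm_nonneg _)
      _ = ‖(2 : F)‖ := mul_one _
      _ < 1 := h2F
    have hdist : ‖(fun z => z ^ 2 + c)^[2 * f] x - x‖ < 1 :=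
      key h2F f hres c hcint hcc (2 * f) (Or.inr rfl) hfc x hxb
    have hyb : ‖(fun z => z ^ 2 + c)^[2 * f] x‖ ≤ 1 := iter_mem c hcint x hxb (2 * f)
    have hyper : (fun z => z ^ 2 + c)^[n] ((fun z => z ^ 2 + c)^[2 * f] x)
        = (fun z => z ^ 2 + c)^[2 * f] x := by
      rw [← Function.iterate_add_apply, add_comm, Function.iterate_add_apply, hper]
    exact periodic_unique h2F c hcint n hn1 _ x hyb hxb hyper hper hdist
end

section
/- Let K be a number field of degree D over Q, let p be a rational prime dividing d (d ≥ 2), let 𝔭 be a prime of O_K above p with residue degree f, and let φ(X) = Σ_{i=0}^d a_i X^i ∈ K[X] with v_𝔭(a_i) ≥ 0 for all i, v_𝔭(a_d) = 0, and v_𝔭(a_i) > 0 for all i coprime to p. Then the number of K-rational periodic points of φ is at most N_{K/Q}(𝔭) = p^f, and in particular at most d^D. -/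
open NumberField IsDedekindDomain

section Aux

open Polynomial Multiplicative

private lemma pow_lt_pow_z {a : WithZero (Multiplicative ℤ)} (ha : 1 < a) {i d : ℕ}
    (h : i < d) : a ^ i < a ^ d := by
  have ha0 : a ≠ 0 := fun h0 => by simp [h0] at ha
  have h1 : (1 : WithZero (Multiplicative ℤ)) < a ^ (d - i) := one_lt_pow₀ ha (by omega)
  calc a ^ i = a ^ i * 1 := (mul_one _).symm
    _ < a ^ i * a ^ (d - i) := mul_lt_mul_of_pos_left h1 (zero_lt_iff.mpr (pow_ne_zero _ ha0))
    _ = a ^ d := by rw [← pow_add]; congr 1; omega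

variable {K : Type*} [Field K] [NumberField K] (v : HeightOneSpectrum (𝓞 K))

private lemma approx (x : K) (hx : v.valuation K x ≤ 1) :
    ∃ r : 𝓞 K, v.valuation K (x - algebraMap (𝓞 K) K r) < 1 := by
  obtain ⟨a, b, hb, hx'⟩ := IsFractionRing.div_surjective (A := 𝓞 K) x
  have hbne : b ≠ 0 := nonZeroDivisors.ne_zero hb
  have hBne : algebraMap (𝓞 K) K b ≠ 0 :=
    (map_ne_zero_iff _ (IsFractionRing.injective (𝓞 K) K)).mpr hbne
  have hvBne : v.valuation K (algebraMap (𝓞 K) K b) ≠ 0 := (Valuation.ne_zero_iff _).mpr hBne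
  obtain ⟨k, hk⟩ : ∃ k : ℕ, v.intValuation b = WithZero.exp (-(k : ℤ)) :=
    ⟨_, by rw [v.intValuation_if_neg hbne]⟩
  have hbk : v.asIdeal ^ k ∣ Ideal.span {b} :=
    (v.intValuation_le_pow_iff_dvd b k).mp (le_of_eq hk)
  have hbk1 : ¬ v.asIdeal ^ (k+1) ∣ Ideal.span {b} := by
    intro h
    have h2 := (v.intValuation_le_pow_iff_dvd b (k+1)).mpr h
    rw [hk, WithZero.exp_le_exp] at h2
    omega
  have hvB : v.valuation K (algebraMap (𝓞 K) K b) = WithZero.exp (-(k : ℤ)) := by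
    rw [v.valuation_of_algebraMap, hk]
  have hva : v.intValuation a ≤ WithZero.exp (-(k : ℤ)) := by
    have h1 : v.valuation K x * v.valuation K (algebraMap (𝓞 K) K b)
        = v.valuation K (algebraMap (𝓞 K) K a) := by
      rw [← hx', map_div₀, div_mul_cancel₀ _ hvBne]
    rw [← v.valuation_of_algebraMap (K := K) a, ← h1, ← hvB]
    calc v.valuation K x * v.valuation K (algebraMap (𝓞 K) K b)
        ≤ 1 * v.valuation K (algebraMap (𝓞 K) K b) := mul_le_mul_left hx _
      _ = _ := one_mul _
  have hamem : a ∈ v.asIdeal ^ k :=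
    Ideal.dvd_span_singleton.mp ((v.intValuation_le_pow_iff_dvd a k).mp hva)
  have hprime : Prime v.asIdeal := Ideal.prime_of_isPrime v.ne_bot v.isPrime
  have hsup : Ideal.span {b} ⊔ v.asIdeal ^ (k+1) = v.asIdeal ^ k := by
    have hdvd1 : (Ideal.span {b} ⊔ v.asIdeal ^ (k+1)) ∣ v.asIdeal ^ (k+1) := by
      rw [Ideal.dvd_iff_le]; exact le_sup_right
    obtain ⟨j, hj, heq⟩ := (dvd_prime_pow hprime _).mp hdvd1
    rw [associated_iff_eq] at heq
    have h2 : v.asIdeal ^ j ∣ Ideal.span {b} := by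
      rw [← heq, Ideal.dvd_iff_le]; exact le_sup_left
    have hjk : j ≤ k := by
      rcases Nat.lt_or_ge j (k+1) with h | h
      · omega
      · exact absurd (dvd_trans (pow_dvd_pow _ h) h2) hbk1
    have h3 : v.asIdeal ^ k ∣ (Ideal.span {b} ⊔ v.asIdeal ^ (k+1)) := by
      rw [Ideal.dvd_iff_le]
      exact sup_le (Ideal.le_of_dvd hbk) (Ideal.le_of_dvd (pow_dvd_pow _ (Nat.le_succ k)))
    rw [heq] at h3 ⊢
    have hkj : k ≤ j := (pow_dvd_pow_iff hprime.ne_zero hprime.not_unit).mp h3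
    rw [Nat.le_antisymm hjk hkj]
  rw [← hsup] at hamem
  obtain ⟨y, hy, z, hz, hyz⟩ := Submodule.mem_sup.mp hamem
  obtain ⟨r, hr⟩ := Ideal.mem_span_singleton'.mp hy
  refine ⟨r, ?_⟩
  have hzval : a - r * b = z := by rw [hr, ← hyz]; ring
  have hxr : (x - algebraMap (𝓞 K) K r) * algebraMap (𝓞 K) K b = algebraMap (𝓞 K) K z := by
    rw [← hx', ← hzval, map_sub, map_mul]
    field_simp
  have hvz : v.valuation K (algebraMap (𝓞 K) K z) ≤ WithZero.exp (-((k+1 : ℕ) : ℤ)) := by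
    rw [v.valuation_of_algebraMap, HeightOneSpectrum.intValuation_apply]
    exact (v.intValuation_le_pow_iff_dvd z (k+1)).mpr (Ideal.dvd_span_singleton.mpr hz)
  have hlt : v.valuation K (x - algebraMap (𝓞 K) K r) * v.valuation K (algebraMap (𝓞 K) K b)
      < 1 * v.valuation K (algebraMap (𝓞 K) K b) := by
    rw [← Valuation.map_mul, hxr, one_mul, hvB]
    refine lt_of_le_of_lt hvz ?_
    rw [WithZero.exp_lt_exp]
    push_cast; omega
  exact lt_of_mul_lt_mul_right hlt zero_le'

private lemma geom_bound (x y : K) (hx : v.valuation K x ≤ 1) (hy : v.valuation K y ≤ 1) (j : ℕ) :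
    v.valuation K (x ^ j - y ^ j) ≤ v.valuation K (x - y) := by
  have hg : (∑ l ∈ Finset.range j, x ^ l * y ^ (j - 1 - l)) * (x - y) = x ^ j - y ^ j :=
    geom_sum₂_mul x y j
  rw [← hg, Valuation.map_mul]
  calc v.valuation K (∑ l ∈ Finset.range j, x ^ l * y ^ (j - 1 - l)) * v.valuation K (x - y)
      ≤ 1 * v.valuation K (x - y) := by
        apply mul_le_mul_left
        apply Valuation.map_sum_le
        intro l _
        rw [Valuation.map_mul, Valuation.map_pow, Valuation.map_pow]
        exact mul_le_one' (pow_le_one' hx l) (pow_le_one' hy _)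
    _ = v.valuation K (x - y) := one_mul _

private lemma escape_val (d : ℕ) (φ : Polynomial K) (hdeg : φ.natDegree = d)
    (hint : ∀ i, v.valuation K (φ.coeff i) ≤ 1)
    (hlead : v.valuation K (φ.coeff d) = 1)
    {x : K} (hx : 1 < v.valuation K x) :
    v.valuation K (φ.eval x) = v.valuation K x ^ d := by
  have hx0 : v.valuation K x ≠ 0 := fun h0 => by simp [h0] at hx
  rw [Polynomial.eval_eq_sum_range, hdeg, Finset.sum_range_succ]
  have htop : v.valuation K (φ.coeff d * x ^ d) = v.valuation K x ^ d := by
    rw [Valuation.map_mul, Valuation.map_pow, hlead, one_mul]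
  have hrest : v.valuation K (∑ i ∈ Finset.range d, φ.coeff i * x ^ i) < v.valuation K x ^ d := by
    apply Valuation.map_sum_lt _ (pow_ne_zero _ hx0)
    intro i hi
    rw [Valuation.map_mul, Valuation.map_pow]
    calc v.valuation K (φ.coeff i) * v.valuation K x ^ i ≤ 1 * v.valuation K x ^ i :=
          mul_le_mul_left (hint i) _
      _ = v.valuation K x ^ i := one_mul _
      _ < v.valuation K x ^ d := pow_lt_pow_z hx (Finset.mem_range.mp hi)
  rw [← htop] at hrest
  rw [Valuation.map_add_eq_of_lt_right _ hrest, htop]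

private lemma periodic_le_one (d : ℕ) (hd : 2 ≤ d) (φ : Polynomial K) (hdeg : φ.natDegree = d)
    (hint : ∀ i, v.valuation K (φ.coeff i) ≤ 1)
    (hlead : v.valuation K (φ.coeff d) = 1)
    {x : K} (hper : ∃ n : ℕ, 1 ≤ n ∧ (fun z => φ.eval z)^[n] x = x) :
    v.valuation K x ≤ 1 := by
  by_contra hgt
  push_neg at hgt
  obtain ⟨n, hn1, hn⟩ := hper
  have key : ∀ z : K, 1 < v.valuation K z → v.valuation K z < v.valuation K (φ.eval z) := by
    intro z hz
    rw [escape_val v d φ hdeg hint hlead hz]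
    calc v.valuation K z = v.valuation K z ^ 1 := (pow_one _).symm
      _ < v.valuation K z ^ d := pow_lt_pow_z hz (by omega)
  have mono : ∀ k : ℕ, 1 < v.valuation K ((fun z => φ.eval z)^[k] x) ∧
      v.valuation K x ≤ v.valuation K ((fun z => φ.eval z)^[k] x) := by
    intro k
    induction k with
    | zero => exact ⟨hgt, le_refl _⟩
    | succ m ih =>
      rw [Function.iterate_succ_apply']
      have h1 := key _ ih.1
      exact ⟨lt_trans ih.1 h1, le_of_lt (lt_of_le_of_lt ih.2 h1)⟩
  obtain ⟨m, rfl⟩ : ∃ m, n = m + 1 := ⟨n - 1, by omega⟩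
  have h1 := key _ (mono m).1
  have h2 : φ.eval ((fun z => φ.eval z)^[m] x) = x := by
    conv_rhs => rw [← hn]
    exact (Function.iterate_succ_apply' (fun z => φ.eval z) m x).symm
  rw [h2] at h1
  exact absurd (lt_of_le_of_lt (mono m).2 h1) (lt_irrefl _)

private lemma contract_val (d p : ℕ) (hp : p.Prime)
    (hvp : (p : 𝓞 K) ∈ v.asIdeal)
    (φ : Polynomial K) (hdeg : φ.natDegree = d)
    (hint : ∀ i, v.valuation K (φ.coeff i) ≤ 1)
    (hsmall : ∀ i, Nat.Coprime i p → v.valuation K (φ.coeff i) < 1)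
    (x y : K) (hx : v.valuation K x ≤ 1) (hy : v.valuation K y ≤ 1)
    (hxy : v.valuation K (x - y) < 1) (hne : x ≠ y) :
    v.valuation K (φ.eval x - φ.eval y) < v.valuation K (x - y) := by
  set γ := v.valuation K (x - y) with hγ
  have hγ0 : γ ≠ 0 := (Valuation.ne_zero_iff _).mpr (sub_ne_zero.mpr hne)
  have hvpK : v.valuation K ((p : K)) < 1 := by
    have := (v.valuation_lt_one_iff_dvd (K := K) ((p : 𝓞 K))).mpr (Ideal.dvd_span_singleton.mpr hvp)
    have e : algebraMap (𝓞 K) K (p : 𝓞 K) = (p : K) := map_natCast _ p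
    rw [← e]; exact this
  have hnatK : ∀ n : ℕ, v.valuation K ((n : K)) ≤ 1 := fun n => by
    have := v.valuation_le_one (K := K) ((n : 𝓞 K)); have e : algebraMap (𝓞 K) K (n : 𝓞 K) = (n : K) := map_natCast _ n; rw [← e]; exact this
  have hsub : φ.eval x - φ.eval y
      = ∑ i ∈ Finset.range (d + 1), φ.coeff i * (x ^ i - y ^ i) := by
    rw [Polynomial.eval_eq_sum_range, Polynomial.eval_eq_sum_range, hdeg, ← Finset.sum_sub_distrib]
    congr 1 with i
    ring
  rw [hsub]
  apply Valuation.map_sum_lt _ hγ0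
  intro i _
  rcases Nat.eq_zero_or_pos i with rfl | hi1
  · simp only [pow_zero, sub_self, mul_zero, Valuation.map_zero]
    exact zero_lt_iff.mpr hγ0
  rw [Valuation.map_mul]
  by_cases hpi : p ∣ i
  · have hkey : v.valuation K (x ^ i - y ^ i) < γ := by
      have hg : (∑ l ∈ Finset.range i, x ^ l * y ^ (i - 1 - l)) * (x - y) = x ^ i - y ^ i :=
        geom_sum₂_mul x y i
      rw [← hg, Valuation.map_mul]
      have hgsplit : (∑ l ∈ Finset.range i, x ^ l * y ^ (i - 1 - l))
          = (∑ l ∈ Finset.range i, (x ^ l - y ^ l) * y ^ (i - 1 - l)) + (i : K) * y ^ (i - 1) := by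
        have h1 : ∀ l ∈ Finset.range i, x ^ l * y ^ (i - 1 - l)
            = (x ^ l - y ^ l) * y ^ (i - 1 - l) + y ^ (i - 1) := by
          intro l hl
          have hle : l + (i - 1 - l) = i - 1 := by
            have := Finset.mem_range.mp hl; omega
          rw [sub_mul, ← pow_add, hle]
          ring
        rw [Finset.sum_congr rfl h1, Finset.sum_add_distrib, Finset.sum_const,
          Finset.card_range, nsmul_eq_mul]
      have hvg : v.valuation K (∑ l ∈ Finset.range i, x ^ l * y ^ (i - 1 - l)) < 1 := by
        rw [hgsplit]
        apply Valuation.map_add_lt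
        · apply Valuation.map_sum_lt _ one_ne_zero
          intro l _
          rw [Valuation.map_mul, Valuation.map_pow]
          calc v.valuation K (x ^ l - y ^ l) * v.valuation K y ^ (i - 1 - l)
              ≤ γ * 1 := mul_le_mul' (geom_bound v x y hx hy l) (pow_le_one' hy _)
            _ = γ := mul_one _
            _ < 1 := hxy
        · obtain ⟨m, rfl⟩ := hpi
          rw [Valuation.map_mul, Valuation.map_pow]
          push_cast
          rw [Valuation.map_mul]
          calc v.valuation K ((p : K)) * v.valuation K ((m : K)) * v.valuation K y ^ (p * m - 1)
              ≤ v.valuation K ((p : K)) * 1 * 1 :=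
                mul_le_mul' (mul_le_mul' (le_refl _) (hnatK m)) (pow_le_one' hy _)
            _ = v.valuation K ((p : K)) := by rw [mul_one, mul_one]
            _ < 1 := hvpK
      calc v.valuation K (∑ l ∈ Finset.range i, x ^ l * y ^ (i - 1 - l)) * γ
          = γ * v.valuation K (∑ l ∈ Finset.range i, x ^ l * y ^ (i - 1 - l)) := mul_comm _ _
        _ < γ * 1 := mul_lt_mul_of_pos_left hvg (zero_lt_iff.mpr hγ0)
        _ = γ := mul_one _
    calc v.valuation K (φ.coeff i) * v.valuation K (x ^ i - y ^ i)
        ≤ 1 * v.valuation K (x ^ i - y ^ i) := mul_le_mul_left (hint i) _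
      _ = v.valuation K (x ^ i - y ^ i) := one_mul _
      _ < γ := hkey
  · have hco : Nat.Coprime i p := Nat.coprime_comm.mp ((Nat.Prime.coprime_iff_not_dvd hp).mpr hpi)
    have hci := hsmall i hco
    calc v.valuation K (φ.coeff i) * v.valuation K (x ^ i - y ^ i)
        ≤ v.valuation K (φ.coeff i) * γ := mul_le_mul_right (geom_bound v x y hx hy i) _
      _ = γ * v.valuation K (φ.coeff i) := mul_comm _ _
      _ < γ * 1 := mul_lt_mul_of_pos_left hci (zero_lt_iff.mpr hγ0)
      _ = γ := mul_one _

private lemma separated (d p : ℕ) (hd : 2 ≤ d) (hp : p.Prime) (hvp : (p : 𝓞 K) ∈ v.asIdeal)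
    (φ : Polynomial K) (hdeg : φ.natDegree = d)
    (hint : ∀ i, v.valuation K (φ.coeff i) ≤ 1)
    (hlead : v.valuation K (φ.coeff d) = 1)
    (hsmall : ∀ i, Nat.Coprime i p → v.valuation K (φ.coeff i) < 1)
    {x y : K} (hx : ∃ n : ℕ, 1 ≤ n ∧ (fun z => φ.eval z)^[n] x = x)
    (hy : ∃ n : ℕ, 1 ≤ n ∧ (fun z => φ.eval z)^[n] y = y)
    (hne : x ≠ y) : ¬ v.valuation K (x - y) < 1 := by
  intro hxy
  set T : K → K := fun z => φ.eval z with hT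
  obtain ⟨nx, hnx1, hnx⟩ := hx
  obtain ⟨ny, hny1, hny⟩ := hy
  set N := nx * ny with hNdef
  have hN1 : 1 ≤ N := Nat.one_le_iff_ne_zero.mpr (by positivity)
  have hNx : T^[N] x = x := by
    rw [hNdef, Function.iterate_mul]
    exact Function.iterate_fixed hnx ny
  have hNy : T^[N] y = y := by
    rw [hNdef, mul_comm, Function.iterate_mul]
    exact Function.iterate_fixed hny nx
  have hperiter : ∀ (z : K), T^[N] z = z → ∀ k, ∃ n : ℕ, 1 ≤ n ∧ T^[n] (T^[k] z) = T^[k] z := by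
    intro z hz k
    refine ⟨N, hN1, ?_⟩
    rw [← Function.iterate_add_apply, Nat.add_comm, Function.iterate_add_apply, hz]
  have hdist : ∀ k, T^[k] x ≠ T^[k] y := by
    intro k heq
    apply hne
    have hMx : T^[N * k] x = x := by
      rw [Function.iterate_mul]; exact Function.iterate_fixed hNx k
    have hMy : T^[N * k] y = y := by
      rw [Function.iterate_mul]; exact Function.iterate_fixed hNy k
    have hk' : k ≤ N * k := Nat.le_mul_of_pos_left k hN1
    have hkM : N * k - k + k = N * k := by omega
    calc x = T^[N * k] x := hMx.symm
      _ = T^[N * k - k] (T^[k] x) := by rw [← Function.iterate_add_apply, hkM]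
      _ = T^[N * k - k] (T^[k] y) := by rw [heq]
      _ = T^[N * k] y := by rw [← Function.iterate_add_apply, hkM]
      _ = y := hMy
  have hint_le : ∀ k, v.valuation K (T^[k] x) ≤ 1 ∧ v.valuation K (T^[k] y) ≤ 1 := by
    intro k
    exact ⟨periodic_le_one v d hd φ hdeg hint hlead (hperiter x hNx k),
      periodic_le_one v d hd φ hdeg hint hlead (hperiter y hNy k)⟩
  have main : ∀ k, v.valuation K (T^[k+1] x - T^[k+1] y) < v.valuation K (x - y) ∧
      v.valuation K (T^[k+1] x - T^[k+1] y) < 1 := by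
    intro k
    induction k with
    | zero =>
      have h := contract_val v d p hp hvp φ hdeg hint hsmall x y (hint_le 0).1 (hint_le 0).2 hxy hne
      simp only [zero_add, Function.iterate_one]
      exact ⟨h, lt_trans h hxy⟩
    | succ m ih =>
      have h := contract_val v d p hp hvp φ hdeg hint hsmall (T^[m+1] x) (T^[m+1] y)
        (hint_le (m+1)).1 (hint_le (m+1)).2 ih.2 (hdist (m+1))
      have heq1 : T^[m+1+1] x = φ.eval (T^[m+1] x) := Function.iterate_succ_apply' T (m+1) x
      have heq2 : T^[m+1+1] y = φ.eval (T^[m+1] y) := Function.iterate_succ_apply' T (m+1) y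
      rw [heq1, heq2]
      exact ⟨lt_trans h ih.1, lt_trans h ih.2⟩
  obtain ⟨M, hM⟩ : ∃ M, N = M + 1 := ⟨N - 1, by omega⟩
  have hfin := (main M).1
  rw [← hM, hNx, hNy] at hfin
  exact absurd hfin (lt_irrefl _)

end Aux

theorem uniform_boundedness {K : Type*} [Field K] [NumberField K]
    (D : ℕ) (hD : Module.finrank ℚ K = D)
    (d p : ℕ) (hd : 2 ≤ d) (hp : p.Prime) (hpd : p ∣ d)
    (v : HeightOneSpectrum (𝓞 K)) (hvp : (p : 𝓞 K) ∈ v.asIdeal)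
    (f : ℕ) (hf : Ideal.absNorm v.asIdeal = p ^ f)
    (φ : Polynomial K) (hdeg : φ.natDegree = d)
    (hint : ∀ i, v.valuation K (φ.coeff i) ≤ 1)
    (hlead : v.valuation K (φ.coeff d) = 1)
    (hsmall : ∀ i, Nat.Coprime i p → v.valuation K (φ.coeff i) < 1) :
    {x : K | ∃ n : ℕ, 1 ≤ n ∧ (fun z => φ.eval z)^[n] x = x}.Finite ∧
      {x : K | ∃ n : ℕ, 1 ≤ n ∧ (fun z => φ.eval z)^[n] x = x}.ncard ≤ p ^ f ∧
      p ^ f ≤ d ^ D := by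
  set S := {x : K | ∃ n : ℕ, 1 ≤ n ∧ (fun z => φ.eval z)^[n] x = x} with hS
  -- the residue field is finite of cardinality p ^ f
  have hcard : Nat.card (𝓞 K ⧸ v.asIdeal) = p ^ f := by
    rw [← Submodule.cardQuot_apply, ← Ideal.absNorm_apply, hf]
  have hfinQ : Finite (𝓞 K ⧸ v.asIdeal) := by
    apply Nat.finite_of_card_ne_zero
    rw [hcard]
    exact pow_ne_zero _ hp.pos.ne'
  -- construct the injection into the residue field
  have hSle : ∀ x ∈ S, v.valuation K x ≤ 1 := fun x hx =>
    periodic_le_one v d hd φ hdeg hint hlead hx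
  have hchoice : ∀ x : S, ∃ r : 𝓞 K, v.valuation K ((x : K) - algebraMap (𝓞 K) K r) < 1 :=
    fun x => approx v (x : K) (hSle x x.2)
  choose r hr using hchoice
  set g : S → 𝓞 K ⧸ v.asIdeal := fun x => Ideal.Quotient.mk v.asIdeal (r x) with hg
  have hginj : Function.Injective g := by
    intro x y hxy
    by_contra hne
    have hne' : (x : K) ≠ (y : K) := fun h => hne (Subtype.ext h)
    have hmem : r x - r y ∈ v.asIdeal := by
      rwa [hg, Ideal.Quotient.mk_eq_mk_iff_sub_mem] at hxy
    have hvr : v.valuation K (algebraMap (𝓞 K) K (r x) - algebraMap (𝓞 K) K (r y)) < 1 := by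
      rw [← map_sub]
      exact (v.valuation_lt_one_iff_dvd (K := K) _).mpr (Ideal.dvd_span_singleton.mpr hmem)
    have hsplit : (x : K) - (y : K) = ((x : K) - algebraMap (𝓞 K) K (r x))
        + (algebraMap (𝓞 K) K (r x) - algebraMap (𝓞 K) K (r y))
        + (algebraMap (𝓞 K) K (r y) - (y : K)) := by ring
    have hlt : v.valuation K ((x : K) - (y : K)) < 1 := by
      rw [hsplit]
      apply Valuation.map_add_lt
      · exact Valuation.map_add_lt _ (hr x) hvr
      · rw [← Valuation.map_neg]
        simpa using hr y
    exact separated v d p hd hp hvp φ hdeg hint hlead hsmall x.2 y.2 hne' hlt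
  have hfinS : Finite S := Finite.of_injective g hginj
  have hSfin : S.Finite := Set.finite_coe_iff.mp hfinS
  refine ⟨hSfin, ?_, ?_⟩
  · have := Nat.card_le_card_of_injective g hginj
    rw [hcard] at this
    rwa [← Nat.card_coe_set_eq]
  · have hple : p ≤ d := Nat.le_of_dvd (by omega) hpd
    have hnorm : Ideal.absNorm (Ideal.span {(p : 𝓞 K)}) = p ^ D := by
      rw [Ideal.absNorm_span_singleton]
      have h1 : (p : 𝓞 K) = algebraMap ℤ (𝓞 K) (p : ℤ) := by simp
      rw [h1, Algebra.norm_algebraMap_of_basis (Module.Free.chooseBasis ℤ (𝓞 K)),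
        ← Module.finrank_eq_card_chooseBasisIndex, NumberField.RingOfIntegers.rank, hD,
        ← Nat.cast_pow]
      exact Int.natAbs_natCast _
    have hdvd : Ideal.absNorm v.asIdeal ∣ Ideal.absNorm (Ideal.span {(p : 𝓞 K)}) :=
      Ideal.absNorm_dvd_absNorm_of_le ((Ideal.span_singleton_le_iff_mem _).mpr hvp)
    rw [hf, hnorm] at hdvd
    have hfD : f ≤ D := (Nat.pow_dvd_pow_iff_le_right hp.one_lt).mp hdvd
    calc p ^ f ≤ p ^ D := Nat.pow_le_pow_right hp.pos hfD
      _ ≤ d ^ D := Nat.pow_le_pow_left hple D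
end

section
/- Let K be a number field in which the prime 2 splits completely or is totally ramified, let 𝔭 be a prime of O_K above 2, and let c ∈ K with v_𝔭(c) = 0 and c integral at 𝔭. Then every K-rational periodic point of φ(X) = X^2 + c has exact period 2, and there are either zero or two such points. -/
open NumberField IsDedekindDomain Multiplicative

set_option maxHeartbeats 1000000
set_option synthInstance.maxHeartbeats 400000
set_option linter.unusedSectionVars false

section QtcAux

variable {K : Type*} [Field K] [NumberField K]

variable (v : HeightOneSpectrum (𝓞 K)) {c : K}

lemma res_int (hcard : Nat.card ((𝓞 K) ⧸ v.asIdeal) = 2) (a : 𝓞 K) :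
    a ∈ v.asIdeal ∨ a - 1 ∈ v.asIdeal := by
  haveI := v.isPrime
  obtain ⟨x, y, hxy, huniv⟩ := Nat.card_eq_two_iff.mp hcard
  have key : ∀ z : (𝓞 K) ⧸ v.asIdeal, z = x ∨ z = y := fun z => by
    have : z ∈ ({x, y} : Set _) := huniv ▸ Set.mem_univ z
    simpa using this
  have h01 : (0 : (𝓞 K) ⧸ v.asIdeal) ≠ 1 := zero_ne_one
  have h0 := key 0
  have h1 := key 1
  have ha := key (Ideal.Quotient.mk v.asIdeal a)
  have hor : Ideal.Quotient.mk v.asIdeal a = 0 ∨ Ideal.Quotient.mk v.asIdeal a = 1 := by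
    rcases h0 with h0 | h0 <;> rcases h1 with h1 | h1 <;> rcases ha with ha | ha <;>
      first
        | (exact absurd (h0.trans h1.symm) h01)
        | (exact Or.inl (ha.trans h0.symm))
        | (exact Or.inr (ha.trans h1.symm))
  rcases hor with h | h
  · exact Or.inl (Ideal.Quotient.eq_zero_iff_mem.mp h)
  · refine Or.inr (Ideal.Quotient.eq.mp ?_)
    rw [h, map_one]


lemma res_val (hres : ∀ a : 𝓞 K, a ∈ v.asIdeal ∨ a - 1 ∈ v.asIdeal)
    (x : K) (hx : v.valuation K x ≤ 1) :
    v.valuation K x < 1 ∨ v.valuation K (x - 1) < 1 := by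
  by_cases hx0 : x = 0
  · left; rw [hx0, map_zero]; exact zero_lt_one
  obtain ⟨⟨a₀, s₀⟩, hxs⟩ := IsLocalization.mk'_surjective (nonZeroDivisors (𝓞 K)) x
  have hs₀ne : (s₀ : 𝓞 K) ≠ 0 := nonZeroDivisors.coe_ne_zero s₀
  have hs₀K : algebraMap (𝓞 K) K (s₀ : 𝓞 K) ≠ 0 :=
    IsFractionRing.to_map_ne_zero_of_mem_nonZeroDivisors s₀.2
  have hxB : x * algebraMap (𝓞 K) K (s₀ : 𝓞 K) = algebraMap (𝓞 K) K a₀ := by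
    rw [← hxs]; exact IsLocalization.mk'_spec K a₀ s₀
  have hval : v.valuation K x * v.intValuation (s₀ : 𝓞 K) = v.intValuation a₀ := by
    have := congrArg (v.valuation K) hxB
    rwa [map_mul, v.valuation_of_algebraMap, v.valuation_of_algebraMap] at this
  have hab : v.intValuation a₀ ≤ v.intValuation (s₀ : 𝓞 K) := by
    calc v.intValuation a₀ = v.valuation K x * v.intValuation (s₀ : 𝓞 K) := hval.symm
    _ ≤ 1 * v.intValuation (s₀ : 𝓞 K) := mul_le_mul_left hx _
    _ = v.intValuation (s₀ : 𝓞 K) := one_mul _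
  have hspan0 : Ideal.span {(s₀ : 𝓞 K)} ≠ 0 := by
    rw [Ne, Ideal.zero_eq_bot, Ideal.span_singleton_eq_bot]; exact hs₀ne
  obtain ⟨n, Q, hQ, hspan⟩ := WfDvdMonoid.max_power_factor hspan0 v.irreducible
  have hs_le : v.intValuation (s₀ : 𝓞 K) ≤ WithZero.exp (-(n : ℤ)) := by
    rw [HeightOneSpectrum.intValuation_apply]
    exact (v.intValuation_le_pow_iff_dvd _ _).mpr ⟨Q, hspan⟩
  have ha_dvd : v.asIdeal ^ n ∣ Ideal.span {a₀} := by
    rw [← v.intValuation_le_pow_iff_dvd]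
    exact hab.trans hs_le
  have ha_mem : a₀ ∈ v.asIdeal ^ n :=
    (Ideal.span_singleton_le_iff_mem _).mp (Ideal.le_of_dvd ha_dvd)
  have hQP : ¬ Q ≤ v.asIdeal := fun hle => hQ ((Ideal.dvd_iff_le).mpr hle)
  obtain ⟨s, hsQ, hsP⟩ := SetLike.not_le_iff_exists.mp hQP
  have hsa : a₀ * s ∈ Ideal.span {(s₀ : 𝓞 K)} := by
    rw [hspan]; exact Ideal.mul_mem_mul ha_mem hsQ
  obtain ⟨a, ha⟩ := Ideal.mem_span_singleton'.mp hsa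
  -- x * s = a in K
  have hsKne : algebraMap (𝓞 K) K s ≠ 0 := by
    intro h
    have : s = 0 := (map_eq_zero_iff _ (IsFractionRing.injective (𝓞 K) K)).mp h
    rw [this] at hsP; exact hsP (Ideal.zero_mem _)
  have hxA : x * algebraMap (𝓞 K) K s = algebraMap (𝓞 K) K a := by
    have h1 : (x * algebraMap (𝓞 K) K s) * algebraMap (𝓞 K) K (s₀ : 𝓞 K)
        = algebraMap (𝓞 K) K a * algebraMap (𝓞 K) K (s₀ : 𝓞 K) := by
      rw [mul_right_comm, hxB, ← map_mul, ← map_mul]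
      exact congrArg _ ha.symm
    exact mul_right_cancel₀ hs₀K h1
  have hs_unit : v.intValuation s = 1 := by
    rcases lt_or_eq_of_le (v.intValuation_le_one s) with hlt | heq
    · exfalso
      rw [v.intValuation_lt_one_iff_dvd, Ideal.dvd_span_singleton] at hlt
      exact hsP hlt
    · exact heq
  have hvx : v.valuation K x = v.intValuation a := by
    have := congrArg (v.valuation K) hxA
    rwa [map_mul, v.valuation_of_algebraMap, v.valuation_of_algebraMap, hs_unit, mul_one] at this
  rcases hres a with hmem | hmem
  · left
    rw [hvx, HeightOneSpectrum.intValuation_apply]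
    exact (v.intValuation_lt_one_iff_dvd a).mpr (Ideal.dvd_span_singleton.mpr hmem)
  · right
    have hs1 : (s : 𝓞 K) - 1 ∈ v.asIdeal := (hres s).resolve_left hsP
    have hmem2 : a - s ∈ v.asIdeal := by
      have : a - s = (a - 1) - (s - 1) := by ring
      rw [this]; exact Ideal.sub_mem _ hmem hs1
    have hx1 : (x - 1) * algebraMap (𝓞 K) K s = algebraMap (𝓞 K) K (a - s) := by
      rw [sub_mul, hxA, map_sub, one_mul]
    have := congrArg (v.valuation K) hx1
    rw [map_mul, v.valuation_of_algebraMap, v.valuation_of_algebraMap, hs_unit, mul_one] at this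
    rw [this, HeightOneSpectrum.intValuation_apply]
    exact (v.intValuation_lt_one_iff_dvd _).mpr (Ideal.dvd_span_singleton.mpr hmem2)


lemma qtc_blowup (hc : v.valuation K c = 1) {x : K} (hx : 1 < v.valuation K x) :
    ∀ n, 1 ≤ n → (fun z : K => z ^ 2 + c)^[n] x ≠ x := by
  set φ := fun z : K => z ^ 2 + c with hφ
  have step : ∀ y : K, 1 < v.valuation K y → v.valuation K y < v.valuation K (φ y) := by
    intro y hy
    have hy0 : (0 : WithZero (Multiplicative ℤ)) < v.valuation K y := lt_trans zero_lt_one hy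
    have hy2 : v.valuation K (y ^ 2) = v.valuation K y * v.valuation K y := by rw [map_pow, sq]
    have hyy : v.valuation K y < v.valuation K y * v.valuation K y := by
      nth_rewrite 1 [← mul_one (v.valuation K y)]
      exact mul_lt_mul_of_pos_left hy hy0
    have hlt : v.valuation K c < v.valuation K (y ^ 2) := by
      rw [hc, hy2]; exact lt_trans hy hyy
    have : v.valuation K (φ y) = v.valuation K (y ^ 2) := by
      simp only [hφ]
      exact Valuation.map_add_eq_of_lt_left _ hlt
    rw [this, hy2]; exact hyy
  have mono : ∀ n : ℕ, 1 < v.valuation K (φ^[n] x) ∧ v.valuation K x ≤ v.valuation K (φ^[n] x) := by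
    intro n; induction n with
    | zero => exact ⟨hx, le_rfl⟩
    | succ n ih =>
      rw [Function.iterate_succ_apply']
      exact ⟨lt_trans ih.1 (step _ ih.1), le_trans ih.2 (le_of_lt (step _ ih.1))⟩
  intro n hn h
  obtain ⟨m, rfl⟩ : ∃ m, n = m + 1 := ⟨n - 1, by omega⟩
  have h1 : v.valuation K x < v.valuation K (φ^[m+1] x) := by
    rw [Function.iterate_succ_apply']
    exact lt_of_le_of_lt (mono m).2 (step _ (mono m).1)
  rw [h] at h1; exact absurd h1 (lt_irrefl _)

lemma qtc_int (hc : v.valuation K c = 1) {x : K} {n : ℕ} (hn : 1 ≤ n)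
    (h : (fun z : K => z ^ 2 + c)^[n] x = x) : v.valuation K x ≤ 1 := by
  by_contra h'
  exact qtc_blowup v hc (not_le.mp h') n hn h

lemma qtc_alt0 (hc1 : v.valuation K (c - 1) < 1) {x : K} (hx : v.valuation K x < 1) :
    v.valuation K (x ^ 2 + c - 1) < 1 := by
  have hid : x ^ 2 + c - 1 = x ^ 2 + (c - 1) := by ring
  rw [hid]
  refine lt_of_le_of_lt ((v.valuation K).map_add _ _) (max_lt ?_ hc1)
  rw [map_pow, sq]
  exact lt_of_le_of_lt (by simpa using mul_le_mul_right (le_of_lt hx) (v.valuation K x)) hx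

lemma qtc_alt1 (h2 : v.valuation K (2 : K) < 1) (hc1 : v.valuation K (c - 1) < 1) {x : K}
    (hx : v.valuation K (x - 1) < 1) : v.valuation K (x ^ 2 + c) < 1 := by
  have hid : x ^ 2 + c = (x - 1) * (x + 1) + (2 + (c - 1)) := by ring
  have hx1 : v.valuation K (x + 1) < 1 := by
    have : x + 1 = (x - 1) + 2 := by ring
    rw [this]
    exact lt_of_le_of_lt ((v.valuation K).map_add _ _) (max_lt hx h2)
  have hmul : v.valuation K ((x - 1) * (x + 1)) < 1 := by
    rw [map_mul]
    exact lt_of_le_of_lt (by simpa using mul_le_mul_right (le_of_lt hx1) (v.valuation K (x-1))) hx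
  have hrest : v.valuation K (2 + (c - 1)) < 1 :=
    lt_of_le_of_lt ((v.valuation K).map_add _ _) (max_lt h2 hc1)
  rw [hid]
  exact lt_of_le_of_lt ((v.valuation K).map_add _ _) (max_lt hmul hrest)

lemma qtc_nofix (hc : v.valuation K c = 1) (h2 : v.valuation K (2 : K) < 1)
    (hc1 : v.valuation K (c - 1) < 1)
    (hres2 : ∀ x : K, v.valuation K x ≤ 1 → v.valuation K x < 1 ∨ v.valuation K (x - 1) < 1) :
    ∀ x : K, x ^ 2 + c ≠ x := by
  intro x hfix
  have hx1 : v.valuation K x ≤ 1 := by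
    refine qtc_int v hc (n := 1) le_rfl ?_
    simpa using hfix
  have contra : ∀ _ : v.valuation K x < 1, ∀ _ : v.valuation K (x - 1) < 1, False := by
    intro h h'
    have h1 : v.valuation K (x - (x - 1)) ≤ max (v.valuation K x) (v.valuation K (x - 1)) :=
      Valuation.map_sub _ _ _
    have hsub : x - (x - 1) = (1 : K) := by ring
    rw [hsub, map_one] at h1
    exact absurd (lt_of_le_of_lt h1 (max_lt h h')) (lt_irrefl _)
  rcases hres2 x hx1 with h | h
  · have h' := qtc_alt0 v hc1 h
    rw [hfix] at h'
    exact contra h h'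
  · have h' := qtc_alt1 v h2 hc1 h
    rw [hfix] at h'
    exact contra h' h

lemma qtc_per2 (hc : v.valuation K c = 1) (h2 : v.valuation K (2 : K) < 1)
    (hc1 : v.valuation K (c - 1) < 1)
    (hres2 : ∀ x : K, v.valuation K x ≤ 1 → v.valuation K x < 1 ∨ v.valuation K (x - 1) < 1)
    {x : K} {n : ℕ} (hn : 1 ≤ n) (hper : (fun z : K => z ^ 2 + c)^[n] x = x) :
    (fun z : K => z ^ 2 + c)^[2] x = x := by
  set φ := fun z : K => z ^ 2 + c with hφ
  set y : ℕ → K := fun k => φ^[k] x with hy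
  have hy1 : ∀ k, y (k + 1) = (y k) ^ 2 + c := by
    intro k
    simp only [hy, Function.iterate_succ_apply']
    rfl
  have hyper : ∀ k, y (k + n) = y k := by
    intro k
    simp only [hy, Function.iterate_add_apply, hper]
  have hyint : ∀ k, v.valuation K (y k) ≤ 1 := by
    intro k
    refine qtc_int v hc hn (x := y k) ?_
    show φ^[n] (y k) = y k
    have : φ^[n] (φ^[k] x) = φ^[n + k] x := (Function.iterate_add_apply φ n k x).symm
    simp only [hy]
    rw [this, add_comm n k]
    exact hyper k
  have hsum : ∀ k, v.valuation K (y k + y (k + 2)) < 1 := by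
    intro k
    rcases hres2 (y k) (hyint k) with h | h
    · have h1 : v.valuation K (y (k + 1) - 1) < 1 := by rw [hy1]; exact qtc_alt0 v hc1 h
      have h22 : v.valuation K (y (k + 2)) < 1 := by
        rw [show k + 2 = (k + 1) + 1 by ring, hy1]; exact qtc_alt1 v h2 hc1 h1
      exact lt_of_le_of_lt ((v.valuation K).map_add _ _) (max_lt h h22)
    · have h1 : v.valuation K (y (k + 1)) < 1 := by rw [hy1]; exact qtc_alt1 v h2 hc1 h
      have h2' : v.valuation K (y (k + 2) - 1) < 1 := by
        rw [show k + 2 = (k + 1) + 1 by ring, hy1]; exact qtc_alt0 v hc1 h1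
      have hid : y k + y (k + 2) = (y k - 1) + ((y (k + 2) - 1) + 2) := by ring
      rw [hid]
      exact lt_of_le_of_lt ((v.valuation K).map_add _ _)
        (max_lt h (lt_of_le_of_lt ((v.valuation K).map_add _ _) (max_lt h2' h2)))
  set d : ℕ → K := fun k => y k - y (k + 2) with hd
  have hdstep : ∀ k, d (k + 1) = d k * (y k + y (k + 2)) := by
    intro k
    have e1 : y (k + 1) = (y k) ^ 2 + c := hy1 k
    have e2 : y (k + 3) = (y (k + 2)) ^ 2 + c := by
      rw [show k + 3 = (k + 2) + 1 by ring]; exact hy1 (k + 2)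
    simp only [hd]
    rw [show k + 1 + 2 = k + 3 by ring, e1, e2]; ring
  suffices hd0 : d 0 = 0 by
    have h02 : y 0 = y 2 := sub_eq_zero.mp hd0
    have : x = φ^[2] x := h02
    exact this.symm
  by_contra hd0
  have hdper : ∀ k, d (k + n) = d k := by
    intro k
    simp only [hd]
    rw [show k + n + 2 = (k + 2) + n by ring, hyper, hyper]
  have hmul : ∀ t : ℕ, d (n * t) = d 0 := by
    intro t; induction t with
    | zero => rw [Nat.mul_zero]
    | succ t ih =>
      rw [Nat.mul_succ]
      rw [hdper (n * t)]
      exact ih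
  have hprop : ∀ m j, d m = 0 → d (m + j) = 0 := by
    intro m j h; induction j with
    | zero => exact h
    | succ j ih => rw [show m + (j + 1) = (m + j) + 1 by ring, hdstep, ih, zero_mul]
  have hne : ∀ k, d k ≠ 0 := by
    intro k hk
    apply hd0
    rcases Nat.eq_zero_or_pos k with rfl | hkpos
    · exact hk
    · have hkn : k ≤ n * k := Nat.le_mul_of_pos_left k (by omega)
      have h0 : d (n * k) = 0 := by
        have := hprop k (n * k - k) hk
        rwa [Nat.add_sub_cancel' hkn] at this
      rw [hmul k] at h0; exact h0
  have hdec : ∀ k, v.valuation K (d (k + 1)) < v.valuation K (d k) := by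
    intro k
    have hpos : (0 : WithZero (Multiplicative ℤ)) < v.valuation K (d k) := by
      refine zero_lt_iff.mpr ?_
      intro h
      exact hne k ((Valuation.zero_iff _).mp h)
    rw [hdstep, map_mul]
    exact mul_lt_of_lt_one_right hpos (hsum k)
  have hchain : ∀ k, 1 ≤ k → v.valuation K (d k) < v.valuation K (d 0) := by
    intro k hk; induction k with
    | zero => omega
    | succ k ih =>
      rcases Nat.eq_zero_or_pos k with rfl | hpos
      · exact hdec 0
      · exact lt_trans (hdec k) (ih hpos)
  have hfin : v.valuation K (d n) < v.valuation K (d 0) := hchain n hn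
  have h0n : d n = d 0 := by
    have := hdper 0
    rwa [zero_add] at this
  rw [h0n] at hfin
  exact absurd hfin (lt_irrefl _)


lemma multiset_two_pow {M : Multiset ℕ} (h2 : ∀ a ∈ M, 2 ≤ a) :
    2 ^ Multiset.card M ≤ M.prod ∧ (M.prod = 2 ^ Multiset.card M → ∀ a ∈ M, a = 2) := by
  induction M using Multiset.induction with
  | empty => simp
  | cons b M ih =>
    have hb := h2 b (Multiset.mem_cons_self b M)
    have ihh := ih (fun a ha => h2 a (Multiset.mem_cons_of_mem ha))
    have hCpos : 0 < 2 ^ Multiset.card M := Nat.pow_pos (by omega)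
    have hPpos : 0 < M.prod := lt_of_lt_of_le hCpos ihh.1
    constructor
    · rw [Multiset.prod_cons, Multiset.card_cons, pow_succ]
      calc 2 ^ Multiset.card M * 2 = 2 * 2 ^ Multiset.card M := by ring
      _ ≤ b * M.prod := Nat.mul_le_mul hb ihh.1
    · intro hprod a ha
      rw [Multiset.prod_cons, Multiset.card_cons, pow_succ] at hprod
      have hP : M.prod = 2 ^ Multiset.card M := by
        have h1 : 2 * M.prod ≤ b * M.prod := Nat.mul_le_mul_right _ hb
        have h2' : b * M.prod = 2 * 2 ^ Multiset.card M := by rw [hprod]; ring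
        have := ihh.1
        nlinarith
      have hb2 : b = 2 := by
        have : b * M.prod = 2 * M.prod := by rw [hprod, hP]; ring
        exact Nat.eq_of_mul_eq_mul_right hPpos this
      rcases Multiset.mem_cons.mp ha with rfl | ha'
      · exact hb2
      · exact ihh.2 hP a ha'

variable {K : Type*} [Field K] [NumberField K]

lemma absnorm_two_of_split (v : HeightOneSpectrum (𝓞 K)) (hv2 : (2 : 𝓞 K) ∈ v.asIdeal)
    (hsplitL : Nat.card {w : HeightOneSpectrum (𝓞 K) // (2 : 𝓞 K) ∈ w.asIdeal}
      = Module.finrank ℚ K) :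
    Ideal.absNorm v.asIdeal = 2 := by
  classical
  set n := Module.finrank ℚ K with hn
  set J : Ideal (𝓞 K) := Ideal.span {(2 : 𝓞 K)} with hJ
  have h2ne : (2 : 𝓞 K) ≠ 0 := two_ne_zero
  have hJ0 : J ≠ 0 := by
    rw [hJ, Ne, Ideal.zero_eq_bot, Ideal.span_singleton_eq_bot]; exact h2ne
  have hnorm : Ideal.absNorm J = 2 ^ n := by
    rw [hJ, Ideal.absNorm_span_singleton]
    have h2alg : (2 : 𝓞 K) = algebraMap ℤ (𝓞 K) 2 := by
      simp [map_ofNat]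
    have hb := Algebra.norm_algebraMap_of_basis (Module.Free.chooseBasis ℤ (𝓞 K)) (2 : ℤ)
    rw [h2alg, hb, ← Module.finrank_eq_card_chooseBasisIndex, NumberField.RingOfIntegers.rank]
    simp [Int.natAbs_pow]
    rfl
  set F := UniqueFactorizationMonoid.normalizedFactors J with hF
  have hFprod : F.prod = J := by
    have := UniqueFactorizationMonoid.prod_normalizedFactors hJ0
    rwa [associated_iff_eq] at this
  have hmemF : ∀ Q ∈ F, Q.IsPrime ∧ J ≤ Q := fun Q hQ =>
    (Ideal.mem_normalizedFactors_iff hJ0).mp hQ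
  have hge : ∀ Q ∈ F, 2 ≤ Ideal.absNorm Q := by
    intro Q hQf
    have hdvd : Ideal.absNorm Q ∣ 2 ^ n := by
      rw [← hnorm]
      exact map_dvd _ (Ideal.dvd_iff_le.mpr (hmemF Q hQf).2)
    have h0 : Ideal.absNorm Q ≠ 0 := by
      intro h; rw [h] at hdvd
      exact absurd (zero_dvd_iff.mp hdvd) (by positivity)
    have h1 : Ideal.absNorm Q ≠ 1 := by
      rw [Ne, Ideal.absNorm_eq_one_iff]
      exact (hmemF Q hQf).1.ne_top
    omega
  have hcardF : F.toFinset.card = n := by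
    rw [← hsplitL]
    have hequiv : {w : HeightOneSpectrum (𝓞 K) // (2 : 𝓞 K) ∈ w.asIdeal} ≃
        {Q // Q ∈ F.toFinset} := by
      refine ⟨fun w => ⟨w.1.asIdeal, ?_⟩, fun Q => ⟨⟨Q.1, ?_, ?_⟩, ?_⟩, fun w => rfl, fun Q => Subtype.ext rfl⟩
      · rw [Multiset.mem_toFinset, hF, Ideal.mem_normalizedFactors_iff hJ0]
        exact ⟨w.1.isPrime, (Ideal.span_singleton_le_iff_mem _).mpr w.2⟩
      · exact ((Ideal.mem_normalizedFactors_iff hJ0).mp (Multiset.mem_toFinset.mp Q.2)).1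
      · intro hbot
        have hle := ((Ideal.mem_normalizedFactors_iff hJ0).mp (Multiset.mem_toFinset.mp Q.2)).2
        rw [hbot, le_bot_iff] at hle
        exact hJ0 hle
      · exact (Ideal.span_singleton_le_iff_mem _).mp
          ((Ideal.mem_normalizedFactors_iff hJ0).mp (Multiset.mem_toFinset.mp Q.2)).2
    rw [Nat.card_congr hequiv, Nat.card_eq_fintype_card, Fintype.card_coe]
  set M : Multiset ℕ := F.map Ideal.absNorm with hM
  have hMprod : M.prod = 2 ^ n := by
    rw [hM, ← map_multiset_prod, hFprod, hnorm]
  have hM2 : ∀ a ∈ M, 2 ≤ a := by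
    intro a ha
    obtain ⟨Q, hQ, rfl⟩ := Multiset.mem_map.mp ha
    exact hge Q hQ
  have hcardM : Multiset.card M = n := by
    have hle : Multiset.card M ≤ n := by
      have := (multiset_two_pow hM2).1
      rw [hMprod] at this
      exact (Nat.pow_le_pow_iff_right (by omega)).mp this
    have hge' : n ≤ Multiset.card M := by
      rw [hM, Multiset.card_map, ← hcardF]
      exact Multiset.toFinset_card_le F
    omega
  have hall : ∀ a ∈ M, a = 2 := (multiset_two_pow hM2).2 (by rw [hMprod, hcardM])
  have hvmem : v.asIdeal ∈ F := by
    rw [hF, Ideal.mem_normalizedFactors_iff hJ0]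
    exact ⟨v.isPrime, (Ideal.span_singleton_le_iff_mem _).mpr hv2⟩
  exact hall _ (Multiset.mem_map_of_mem _ hvmem)


end QtcAux

theorem quadratic_two_cycles {K : Type*} [Field K] [NumberField K]
    (v : HeightOneSpectrum (𝓞 K)) (hv2 : (2 : 𝓞 K) ∈ v.asIdeal)
    -- `2` splits completely (there are `[K:ℚ]` primes above `2`) or is totally
    -- ramified (a unique prime above `2`, with residue degree `1`) in `K`
    (hsplit : Nat.card {w : HeightOneSpectrum (𝓞 K) // (2 : 𝓞 K) ∈ w.asIdeal}
        = Module.finrank ℚ K ∨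
      (Nat.card {w : HeightOneSpectrum (𝓞 K) // (2 : 𝓞 K) ∈ w.asIdeal} = 1 ∧
        Ideal.absNorm v.asIdeal = 2))
    (c : K) (hc : v.valuation K c = 1) :
    (∀ x : K, (∃ n : ℕ, 1 ≤ n ∧ (fun z => z ^ 2 + c)^[n] x = x) →
        ((fun z => z ^ 2 + c)^[2] x = x ∧ x ^ 2 + c ≠ x)) ∧
      ({x : K | (fun z => z ^ 2 + c)^[2] x = x ∧ x ^ 2 + c ≠ x}.ncard = 0 ∨
        {x : K | (fun z => z ^ 2 + c)^[2] x = x ∧ x ^ 2 + c ≠ x}.ncard = 2) := by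
  have habs : Ideal.absNorm v.asIdeal = 2 := by
    rcases hsplit with h | h
    · exact absnorm_two_of_split v hv2 h
    · exact h.2
  have hcard : Nat.card ((𝓞 K) ⧸ v.asIdeal) = 2 := by
    rw [← Submodule.cardQuot_apply, ← Ideal.absNorm_apply, habs]
  have hres := res_int v hcard
  have hres2 := res_val v hres
  have h2K : v.valuation K (2 : K) < 1 := by
    have h2alg : (2 : K) = algebraMap (𝓞 K) K (2 : 𝓞 K) := (map_ofNat (algebraMap (𝓞 K) K) 2).symm
    rw [h2alg]
    rw [v.valuation_lt_one_iff_dvd]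
    exact Ideal.dvd_span_singleton.mpr hv2
  have hc1 : v.valuation K (c - 1) < 1 := by
    rcases hres2 c (le_of_eq hc) with h | h
    · rw [hc] at h; exact absurd h (lt_irrefl _)
    · exact h
  have hnofix := qtc_nofix v hc h2K hc1 hres2
  have hiter2 : ∀ z : K, (fun z : K => z ^ 2 + c)^[2] z = (z ^ 2 + c) ^ 2 + c := by
    intro z; rfl
  constructor
  · rintro x ⟨n, hn, hx⟩
    exact ⟨qtc_per2 v hc h2K hc1 hres2 hn hx, hnofix x⟩
  · set S := {x : K | (fun z => z ^ 2 + c)^[2] x = x ∧ x ^ 2 + c ≠ x} with hS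
    by_cases hSe : S = ∅
    · left; rw [hSe]; exact Set.ncard_empty K
    right
    obtain ⟨x₀, hx₀⟩ := Set.nonempty_iff_ne_empty.mpr hSe
    have hx₀2 : ((x₀ ^ 2 + c) ^ 2 + c) = x₀ := by
      have := hx₀.1
      rwa [hiter2 x₀] at this
    have hAx : x₀ ^ 2 - x₀ + c ≠ 0 := by
      intro h
      exact hnofix x₀ (by linear_combination h)
    have hBx : x₀ ^ 2 + x₀ + c + 1 = 0 := by
      have hprod : (x₀ ^ 2 - x₀ + c) * (x₀ ^ 2 + x₀ + c + 1) = 0 := by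
        linear_combination hx₀2
      exact (mul_eq_zero.mp hprod).resolve_left hAx
    have hx₀int : v.valuation K x₀ ≤ 1 :=
      qtc_int v hc (n := 2) (by norm_num) hx₀.1
    have hne : x₀ ≠ -1 - x₀ := by
      intro h
      have h2x : (2 : K) * x₀ = -1 := by linear_combination h
      have hv1 : v.valuation K ((2 : K) * x₀) = 1 := by
        rw [h2x]
        rw [show (-1 : K) = -(1:K) by ring, Valuation.map_neg, map_one]
      have hlt : v.valuation K ((2 : K) * x₀) < 1 := by
        rw [map_mul]
        calc v.valuation K (2 : K) * v.valuation K x₀ ≤ v.valuation K (2 : K) * 1 :=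
          mul_le_mul_right hx₀int _
        _ < 1 := by rwa [mul_one]
      rw [hv1] at hlt
      exact absurd hlt (lt_irrefl _)
    have hSeq : S = {x₀, -1 - x₀} := by
      apply Set.eq_of_subset_of_subset
      · intro z hz
        have hz2 : ((z ^ 2 + c) ^ 2 + c) = z := by
          have := hz.1
          rwa [hiter2 z] at this
        have hzA : z ^ 2 - z + c ≠ 0 := by
          intro h
          exact hz.2 (by linear_combination h)
        have hzB : z ^ 2 + z + c + 1 = 0 := by
          have hprod : (z ^ 2 - z + c) * (z ^ 2 + z + c + 1) = 0 := by
            linear_combination hz2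
          exact (mul_eq_zero.mp hprod).resolve_left hzA
        have hfac : (z - x₀) * (z + x₀ + 1) = 0 := by
          linear_combination hzB - hBx
        rcases mul_eq_zero.mp hfac with h | h
        · left; linear_combination h
        · right
          show z = -1 - x₀
          linear_combination h
      · intro z hz
        rcases hz with rfl | hz
        · exact hx₀
        · have hzw : z = -1 - x₀ := hz
          subst hzw
          constructor
          · rw [hiter2]
            linear_combination ((-1 - x₀) ^ 2 - (-1 - x₀) + c) * hBx
          · exact hnofix _
    rw [hSeq]
    exact Set.ncard_pair hne
end

section
/- Let K = Q(√Δ) be a quadratic number field with Δ ≡ 5 (mod 8), so that 2 is inert in K, and let c ∈ K be integral at the prime (2). Then the polynomial φ(X) = X^2 + c has no K-rational point of exact period 3. -/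
open NumberField IsDedekindDomain IsDedekindDomain.HeightOneSpectrum Multiplicative


lemma adic_dense {R : Type*} [CommRing R] [IsDedekindDomain R] {K : Type*} [Field K]
    [Algebra R K] [IsFractionRing R K] (v : HeightOneSpectrum R) (x : K)
    (hx : v.valuation K x ≤ 1) : ∃ b : R, v.valuation K (x - algebraMap R K b) < 1 := by
  obtain ⟨a, s, hs, hxas⟩ := IsFractionRing.div_surjective (A := R) x
  have hs0 : s ≠ 0 := nonZeroDivisors.ne_zero hs
  have hsK : algebraMap R K s ≠ 0 :=
    IsFractionRing.to_map_ne_zero_of_mem_nonZeroDivisors hs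
  have hvs0 : v.intValuation s ≠ 0 := v.intValuation_ne_zero s hs0
  -- express n
  obtain ⟨γ, hγ⟩ : ∃ γ : Multiplicative ℤ, (γ : WithZero (Multiplicative ℤ)) = v.intValuation s :=
    WithZero.ne_zero_iff_exists.mp hvs0
  have hγle : γ.toAdd ≤ 0 := by
    have h1 : v.intValuation s ≤ 1 := v.intValuation_le_one s
    rw [← hγ] at h1
    have := WithZero.coe_le_coe.mp (by exact_mod_cast h1 : (γ : WithZero (Multiplicative ℤ)) ≤ (1 : Multiplicative ℤ))
    exact Multiplicative.toAdd_le.mpr (by exact_mod_cast this)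
  set n : ℕ := (-γ.toAdd).toNat with hn
  have hγn : γ = ofAdd (-(n : ℤ)) := by
    have : (n : ℤ) = -γ.toAdd := Int.toNat_of_nonneg (by omega)
    rw [this]; simp
  have hvsn : v.intValuation s = (ofAdd (-(n : ℤ)) : Multiplicative ℤ) := by
    rw [← hγ, hγn]
  have hvsn' : v.intValuationDef s = (ofAdd (-(n : ℤ)) : Multiplicative ℤ) := by
    rw [← intValuation_apply]; exact hvsn
  have hns1 : ¬ v.asIdeal ^ (n+1) ∣ Ideal.span {s} := by
    intro h
    have h2 := (v.intValuation_le_pow_iff_dvd s (n+1)).mpr h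
    rw [hvsn] at h2
    have h3 := WithZero.coe_le_coe.mp h2
    have h4 := Multiplicative.ofAdd_le.mp h3
    omega
  have haK : algebraMap R K a = x * algebraMap R K s := by
    rw [← hxas]; field_simp
  have hva : v.intValuationDef a ≤ (ofAdd (-(n : ℤ)) : Multiplicative ℤ) := by
    rw [← hvsn']
    rw [show v.intValuationDef a = v.valuation K (algebraMap R K a) by
      rw [valuation_of_algebraMap, intValuation_apply]]
    rw [show v.intValuationDef s = v.valuation K (algebraMap R K s) by
      rw [valuation_of_algebraMap, intValuation_apply]]
    rw [haK, map_mul]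
    calc v.valuation K x * v.valuation K (algebraMap R K s)
        ≤ 1 * v.valuation K (algebraMap R K s) := mul_le_mul_left hx _
      _ = v.valuation K (algebraMap R K s) := one_mul _
  have hIna : v.asIdeal ^ n ∣ Ideal.span {a} := (v.intValuation_le_pow_iff_dvd a n).mp hva
  have hprime : Prime (v.asIdeal) := Ideal.prime_of_isPrime v.ne_bot v.isPrime
  have hdvd : (Ideal.span {s} ⊔ v.asIdeal ^ (n+1)) ∣ v.asIdeal ^ (n+1) :=
    Ideal.dvd_iff_le.mpr le_sup_right
  obtain ⟨i, hi, hJ⟩ := (dvd_prime_pow hprime (n+1)).mp hdvd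
  rw [associated_iff_eq] at hJ
  have hin : i ≤ n := by
    rcases Nat.lt_or_ge i (n+1) with h | h
    · omega
    · exfalso
      have hieq : i = n + 1 := by omega
      apply hns1
      rw [Ideal.dvd_iff_le, ← hieq, ← hJ]
      exact le_sup_left
  have haJ : a ∈ Ideal.span {s} ⊔ v.asIdeal ^ (n+1) := by
    rw [hJ]
    exact Ideal.pow_le_pow_right hin
      ((Ideal.span_singleton_le_iff_mem _).mp (Ideal.le_of_dvd hIna))
  obtain ⟨b, r, hrmem, hbr⟩ := Ideal.mem_span_singleton_sup.mp haJ
  refine ⟨b, ?_⟩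
  have hr : algebraMap R K r = (x - algebraMap R K b) * algebraMap R K s := by
    rw [sub_mul, ← haK, ← map_mul, ← map_sub]
    congr 1
    linear_combination hbr
  have hvr : v.intValuationDef r ≤ (ofAdd (-((n:ℤ)+1)) : Multiplicative ℤ) := by
    have := (v.intValuation_le_pow_iff_dvd r (n+1)).mpr
      (Ideal.dvd_iff_le.mpr ((Ideal.span_singleton_le_iff_mem _).mpr hrmem))
    have h2 : (-((n:ℤ)+1)) = (-(((n+1:ℕ)):ℤ)) := by push_cast; ring
    rw [h2]; exact this
  have hvrs : v.valuation K (algebraMap R K r) < v.valuation K (algebraMap R K s) := by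
    rw [valuation_of_algebraMap, valuation_of_algebraMap, intValuation_apply, intValuation_apply]
    calc v.intValuationDef r ≤ ((ofAdd (-((n:ℤ)+1)) : Multiplicative ℤ) : WithZero (Multiplicative ℤ)) := hvr
      _ < ((ofAdd (-(n:ℤ)) : Multiplicative ℤ) : WithZero (Multiplicative ℤ)) := by
          rw [WithZero.coe_lt_coe, Multiplicative.ofAdd_lt]; omega
      _ = v.intValuationDef s := hvsn'.symm
  have hspos : (0 : WithZero (Multiplicative ℤ)) < v.valuation K (algebraMap R K s) := by
    rw [zero_lt_iff, Valuation.ne_zero_iff]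
    exact hsK
  rw [← mul_lt_mul_iff_left₀ hspos, one_mul, ← Valuation.map_mul, ← hr]
  exact hvrs


lemma pow_four_eq {K : Type*} [Field K] [NumberField K] (hquad : Module.finrank ℚ K = 2)
    (v : HeightOneSpectrum (𝓞 K)) (hv2 : (2 : 𝓞 K) ∈ v.asIdeal) :
    ∀ t : 𝓞 K ⧸ v.asIdeal, t ^ 4 = t := by
  haveI hmax : v.asIdeal.IsMaximal := Ideal.IsPrime.isMaximal v.isPrime v.ne_bot
  letI : Field (𝓞 K ⧸ v.asIdeal) := Ideal.Quotient.field _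
  letI : Fintype (𝓞 K ⧸ v.asIdeal) := @Fintype.ofFinite _ (Ideal.finiteQuotientOfFreeOfNeBot _ v.ne_bot)
  have hnorm2 : Ideal.absNorm (Ideal.span {(2 : 𝓞 K)}) = 4 := by
    rw [Ideal.absNorm_span_singleton]
    have h2 : (2 : 𝓞 K) = algebraMap ℤ (𝓞 K) 2 := by simp
    rw [h2, Algebra.norm_algebraMap_of_basis (Module.Free.chooseBasis ℤ (𝓞 K))]
    rw [← Module.finrank_eq_card_chooseBasisIndex, NumberField.RingOfIntegers.rank, hquad]
    norm_num
  have hdvd : Ideal.absNorm v.asIdeal ∣ 4 := by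
    rw [← hnorm2]
    exact Ideal.absNorm_dvd_absNorm_of_le ((Ideal.span_singleton_le_iff_mem _).mpr hv2)
  have hcard : Fintype.card (𝓞 K ⧸ v.asIdeal) ∣ 4 := by
    rwa [← Nat.card_eq_fintype_card, ← Submodule.cardQuot_apply, ← Ideal.absNorm_apply]
  have h2le : 2 ≤ Fintype.card (𝓞 K ⧸ v.asIdeal) := Fintype.one_lt_card
  have h4le : Fintype.card (𝓞 K ⧸ v.asIdeal) ≤ 4 := Nat.le_of_dvd (by norm_num) hcard
  have hcases : Fintype.card (𝓞 K ⧸ v.asIdeal) = 2 ∨ Fintype.card (𝓞 K ⧸ v.asIdeal) = 4 := by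
    interval_cases h : Fintype.card (𝓞 K ⧸ v.asIdeal) <;> omega
  intro t
  have hc := FiniteField.pow_card t
  rcases hcases with h | h
  · rw [h] at hc
    rw [show (4:ℕ) = 2*2 from rfl, pow_mul, hc, hc]
  · rw [h] at hc
    exact hc

set_option maxHeartbeats 1000000
set_option synthInstance.maxHeartbeats 400000

theorem no_three_cycle {K : Type*} [Field K] [NumberField K]
    (Δ : ℤ) (hΔ : Squarefree Δ) (hΔ5 : Δ % 8 = 5)
    (r : K) (hr : r ^ 2 = (Δ : K)) (hgen : Algebra.adjoin ℚ {r} = ⊤)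
    (hquad : Module.finrank ℚ K = 2)
    (v : HeightOneSpectrum (𝓞 K)) (hv2 : (2 : 𝓞 K) ∈ v.asIdeal)
    (c : K) (hc : v.valuation K c ≤ 1) :
    ¬ ∃ x : K, (fun z => z ^ 2 + c)^[3] x = x ∧
      ∀ j : ℕ, 0 < j → j < 3 → (fun z => z ^ 2 + c)^[j] x ≠ x := by
  rintro ⟨x, hper, hne⟩
  have hper3 : ((x ^ 2 + c) ^ 2 + c) ^ 2 + c = x := by
    simpa [Function.iterate_succ, Function.comp] using hper
  have hne1 : x ^ 2 + c ≠ x := by simpa using hne 1 one_pos (by norm_num)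
  have hne2 : (x ^ 2 + c) ^ 2 + c ≠ x := by
    simpa [Function.iterate_succ, Function.comp] using hne 2 (by norm_num) (by norm_num)
  set y := x ^ 2 + c with hy
  set z := y ^ 2 + c with hz
  -- y ≠ z
  have hyz : y ≠ z := by
    intro h
    apply hne2
    calc z = y ^ 2 + c := hz
      _ = z ^ 2 + c := by rw [h]
      _ = x := hper3
  -- integrality of periodic points
  have hint : ∀ w : K, ((w ^ 2 + c) ^ 2 + c) ^ 2 + c = w → v.valuation K w ≤ 1 := by
    intro w hw
    by_contra hgt
    push_neg at hgt
    have key : ∀ u : K, 1 < v.valuation K u → v.valuation K u < v.valuation K (u ^ 2 + c) := by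
      intro u hu
      have hsq : v.valuation K u < v.valuation K (u ^ 2) := by
        rw [pow_two, Valuation.map_mul]
        exact lt_mul_self hu
      have hclt : v.valuation K c < v.valuation K (u ^ 2) :=
        lt_of_le_of_lt (hc.trans hu.le) hsq
      rw [Valuation.map_add_eq_of_lt_left _ hclt]
      exact hsq
    have h1 := key w hgt
    have h2 := key _ (lt_trans hgt h1)
    have h3 := key _ (lt_trans (lt_trans hgt h1) h2)
    rw [hw] at h3
    exact absurd (h1.trans (h2.trans h3)) (lt_irrefl _)
  have hvx : v.valuation K x ≤ 1 := hint x hper3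
  have hsumle : ∀ u w : K, v.valuation K u ≤ 1 → v.valuation K w ≤ 1 →
      v.valuation K (u + w) ≤ 1 := fun u w hu hw =>
    le_trans ((v.valuation K).map_add u w) (max_le hu hw)
  have hsq_le : ∀ u : K, v.valuation K u ≤ 1 → v.valuation K (u ^ 2) ≤ 1 := by
    intro u hu; rw [pow_two, Valuation.map_mul]; exact mul_le_one' hu hu
  have hvy : v.valuation K y ≤ 1 := hsumle _ _ (hsq_le x hvx) hc
  have hvz : v.valuation K z ≤ 1 := hsumle _ _ (hsq_le y hvy) hc
  -- the product identity
  have e1 : (x - y) * (x + y) = y - z := by linear_combination hz - hy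
  have e2 : (y - z) * (y + z) = z - x := by linear_combination -hper3 - hz
  have e3 : (z - x) * (z + x) = x - y := by linear_combination hper3 + hy
  have dxy : x - y ≠ 0 := sub_ne_zero.mpr (Ne.symm hne1)
  have dyz : y - z ≠ 0 := sub_ne_zero.mpr hyz
  have dzx : z - x ≠ 0 := sub_ne_zero.mpr hne2
  have hprodkey : ((x - y) * ((y - z) * (z - x))) * ((x + y) * ((y + z) * (z + x)))
      = ((x - y) * ((y - z) * (z - x))) * 1 := by
    calc ((x - y) * ((y - z) * (z - x))) * ((x + y) * ((y + z) * (z + x)))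
        = ((x - y) * (x + y)) * (((y - z) * (y + z)) * ((z - x) * (z + x))) := by ring
      _ = (y - z) * ((z - x) * (x - y)) := by rw [e1, e2, e3]
      _ = ((x - y) * ((y - z) * (z - x))) * 1 := by ring
  have hkey : (x + y) * ((y + z) * (z + x)) = 1 :=
    mul_left_cancel₀ (mul_ne_zero dxy (mul_ne_zero dyz dzx)) hprodkey
  have hvsum : v.valuation K ((x + y) * ((y + z) * (z + x))) = 1 := by
    rw [hkey, Valuation.map_one]
  have hxy_le : v.valuation K (x + y) ≤ 1 := hsumle _ _ hvx hvy
  have hyz_le : v.valuation K (y + z) ≤ 1 := hsumle _ _ hvy hvz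
  have hzx_le : v.valuation K (z + x) ≤ 1 := hsumle _ _ hvz hvx
  have hvxy : v.valuation K (x + y) = 1 := by
    by_contra h
    have hlt : v.valuation K (x + y) < 1 := lt_of_le_of_ne hxy_le h
    have hbad : v.valuation K ((x + y) * ((y + z) * (z + x))) < 1 := by
      rw [Valuation.map_mul, Valuation.map_mul]
      calc v.valuation K (x + y) * (v.valuation K (y + z) * v.valuation K (z + x))
          ≤ v.valuation K (x + y) * 1 := mul_le_mul_right (mul_le_one' hyz_le hzx_le) _
        _ = v.valuation K (x + y) := mul_one _
        _ < 1 := hlt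
    rw [hvsum] at hbad
    exact lt_irrefl _ hbad
  -- approximations by ring of integers elements
  obtain ⟨X, hX⟩ := adic_dense v x hvx
  obtain ⟨Y, hY⟩ := adic_dense v y hvy
  obtain ⟨Z, hZ⟩ := adic_dense v z hvz
  obtain ⟨C, hCC⟩ := adic_dense v c hc
  have hmem : ∀ w : 𝓞 K, v.valuation K (algebraMap (𝓞 K) K w) < 1 ↔ w ∈ v.asIdeal := by
    intro w
    rw [valuation_lt_one_iff_dvd, Ideal.dvd_span_singleton]
  have two0 : (2 : 𝓞 K ⧸ v.asIdeal) = 0 := by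
    rw [show (2 : 𝓞 K ⧸ v.asIdeal) = Ideal.Quotient.mk v.asIdeal 2 from
      (map_ofNat _ 2).symm, Ideal.Quotient.eq_zero_iff_mem]
    exact hv2
  -- congruence transfer
  have hcong : ∀ (U W : 𝓞 K) (u : K), v.valuation K u ≤ 1 →
      v.valuation K (u - algebraMap (𝓞 K) K U) < 1 →
      v.valuation K ((u ^ 2 + c) - algebraMap (𝓞 K) K W) < 1 →
      Ideal.Quotient.mk v.asIdeal W = (Ideal.Quotient.mk v.asIdeal U) ^ 2 +
        Ideal.Quotient.mk v.asIdeal C := by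
    intro U W u hu hU hW
    have h1 : v.valuation K (algebraMap (𝓞 K) K (W - (U ^ 2 + C))) < 1 := by
      have hEq : algebraMap (𝓞 K) K (W - (U ^ 2 + C)) =
          (-((u ^ 2 + c) - algebraMap (𝓞 K) K W)) +
          ((u - algebraMap (𝓞 K) K U) * (u + algebraMap (𝓞 K) K U) +
           (c - algebraMap (𝓞 K) K C)) := by
        push_cast [map_sub, map_add, map_pow]
        ring
      rw [hEq]
      refine Valuation.map_add_lt _ ?_ (Valuation.map_add_lt _ ?_ hCC)
      · rw [Valuation.map_neg]; exact hW
      · rw [Valuation.map_mul]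
        calc v.valuation K (u - algebraMap (𝓞 K) K U) *
              v.valuation K (u + algebraMap (𝓞 K) K U)
            ≤ v.valuation K (u - algebraMap (𝓞 K) K U) * 1 :=
              mul_le_mul_right (hsumle _ _ hu (valuation_le_one v U)) _
          _ = v.valuation K (u - algebraMap (𝓞 K) K U) := mul_one _
          _ < 1 := hU
    have h2 : W - (U ^ 2 + C) ∈ v.asIdeal := (hmem _).mp h1
    have h3 : Ideal.Quotient.mk v.asIdeal (W - (U ^ 2 + C)) = 0 :=
      Ideal.Quotient.eq_zero_iff_mem.mpr h2
    rw [map_sub, sub_eq_zero, map_add, map_pow] at h3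
    exact h3
  have hR1 : Ideal.Quotient.mk v.asIdeal Y = (Ideal.Quotient.mk v.asIdeal X) ^ 2 +
      Ideal.Quotient.mk v.asIdeal C := hcong X Y x hvx hX (by rw [← hy]; exact hY)
  have hR2 : Ideal.Quotient.mk v.asIdeal Z = (Ideal.Quotient.mk v.asIdeal Y) ^ 2 +
      Ideal.Quotient.mk v.asIdeal C := hcong Y Z y hvy hY (by rw [← hz]; exact hZ)
  have hR3 : Ideal.Quotient.mk v.asIdeal X = (Ideal.Quotient.mk v.asIdeal Z) ^ 2 +
      Ideal.Quotient.mk v.asIdeal C := hcong Z X z hvz hZ (by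
        rw [show z ^ 2 + c = x from hper3]; exact hX)
  -- v (X+Y) = 1, so X + Y is nonzero mod v
  have hXYval : v.valuation K (algebraMap (𝓞 K) K (X + Y)) = 1 := by
    have hEq : algebraMap (𝓞 K) K (X + Y) =
        (x + y) + (-(x - algebraMap (𝓞 K) K X) + -(y - algebraMap (𝓞 K) K Y)) := by
      push_cast [map_add]
      ring
    rw [hEq, Valuation.map_add_eq_of_lt_left, hvxy]
    have hsmall : v.valuation K (-(x - algebraMap (𝓞 K) K X) +
        -(y - algebraMap (𝓞 K) K Y)) < 1 := by
      refine Valuation.map_add_lt _ ?_ ?_ <;> rw [Valuation.map_neg]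
      exacts [hX, hY]
    rw [hvxy]
    exact hsmall
  have hsXY : Ideal.Quotient.mk v.asIdeal (X + Y) ≠ 0 := by
    rw [Ne, Ideal.Quotient.eq_zero_iff_mem, ← hmem, hXYval]
    exact lt_irrefl 1
  -- final computation in the residue ring
  have pow4 := pow_four_eq hquad v hv2
  set tX := Ideal.Quotient.mk v.asIdeal X
  set tY := Ideal.Quotient.mk v.asIdeal Y
  set tZ := Ideal.Quotient.mk v.asIdeal Z
  set tC := Ideal.Quotient.mk v.asIdeal C
  have hA : tX = tY + (tC ^ 2 + tC) := by
    linear_combination hR3 + (tZ + tY ^ 2 + tC) * hR2 + pow4 tY + (tY ^ 2 * tC) * two0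
  have hB : tY = tZ + (tC ^ 2 + tC) := by
    linear_combination hR1 + (tX + tZ ^ 2 + tC) * hR3 + pow4 tZ + (tZ ^ 2 * tC) * two0
  have hC3 : tZ = tX + (tC ^ 2 + tC) := by
    linear_combination hR2 + (tY + tX ^ 2 + tC) * hR1 + pow4 tX + (tX ^ 2 * tC) * two0
  have hE : tC ^ 2 + tC = 0 := by
    linear_combination -hA - hB - hC3 - (tC ^ 2 + tC) * two0
  have hXeqY : tX = tY := by linear_combination hA + hE
  apply hsXY
  rw [map_add]
  linear_combination tX * two0 - hXeqY
end

section
/- In F = Q_2(√5), the polynomial φ(X) = X^2 − 1 has exactly four periodic points: the two fixed points (1 ± √5)/2, and the 2-cycle {0, −1}. -/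
set_option linter.unusedSectionVars false
set_option maxHeartbeats 1000000

namespace PQ5

/-! ### Facts about `ℚ_[2]` -/

lemma dvd_norm_le (w : ℤ_[2]) (h : (2:ℤ_[2]) ∣ w) : ‖w‖ ≤ 1/2 := by
  have := (PadicInt.norm_le_pow_iff_mem_span_pow w 1).2
    (by rwa [Ideal.mem_span_singleton, pow_one])
  simpa [zpow_neg, zpow_one] using this

lemma q2_dichotomy (a : ℚ_[2]) (h : ‖a‖ ≤ 1) : ‖a‖ ≤ 1/2 ∨ ‖a - 1‖ ≤ 1/2 := by
  set z : ℤ_[2] := ⟨a, h⟩ with hz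
  by_cases hd : (2:ℤ_[2]) ∣ z
  · left
    have := dvd_norm_le z hd
    simpa [PadicInt.norm_def, hz] using this
  · right
    have h0 : PadicInt.toZMod z ≠ 0 := by
      intro h0
      apply hd
      have : z ∈ RingHom.ker (PadicInt.toZMod : ℤ_[2] →+* ZMod 2) := h0
      rw [PadicInt.ker_toZMod, PadicInt.maximalIdeal_eq_span_p,
        Ideal.mem_span_singleton] at this
      exact this
    have h1 : PadicInt.toZMod (z - 1) = 0 := by
      have : ∀ u : ZMod 2, u ≠ 0 → u = 1 := by decide
      rw [map_sub, map_one, this _ h0, sub_self]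
    have hd1 : (2:ℤ_[2]) ∣ (z - 1) := by
      have : z - 1 ∈ RingHom.ker (PadicInt.toZMod : ℤ_[2] →+* ZMod 2) := h1
      rw [PadicInt.ker_toZMod, PadicInt.maximalIdeal_eq_span_p,
        Ideal.mem_span_singleton] at this
      exact this
    have := dvd_norm_le _ hd1
    have hco : ((z - 1 : ℤ_[2]) : ℚ_[2]) = a - 1 := by rw [PadicInt.coe_sub, PadicInt.coe_one, hz]
    rwa [PadicInt.norm_def, hco] at this

lemma not_sq5 (t : ℚ_[2]) : t^2 ≠ 5 := by
  intro ht
  have h5 : ‖(5:ℚ_[2])‖ = 1 := by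
    have hle : ‖((5:ℤ):ℚ_[2])‖ ≤ 1 := Padic.norm_int_le_one 5
    have hlt : ¬ ‖((5:ℤ):ℚ_[2])‖ < 1 := by
      rw [Padic.norm_intCast_lt_one_iff]
      decide
    push_cast at hle hlt
    linarith [lt_of_le_of_ne hle]
  have hn : ‖t‖ = 1 := by
    have h2 : ‖t‖^2 = 1 := by
      rw [sq, ← norm_mul, ← sq, ht, h5]
    nlinarith [norm_nonneg t]
  set z : ℤ_[2] := ⟨t, le_of_eq hn⟩ with hzdef
  have hz : z^2 = 5 := by
    apply Subtype.coe_injective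
    push_cast [hzdef]
    exact ht
  have hmap : (PadicInt.toZModPow 3 z)^2 = 5 := by
    rw [← map_pow, hz, map_ofNat]
  have hall : ∀ u : ZMod (2^3), u^2 ≠ 5 := by decide
  exact hall _ hmap

lemma norm_two : ‖(2:ℚ_[2])‖ = 1/2 := by
  have h := Padic.norm_p (p := 2)
  have h2 : ((2:ℕ):ℚ_[2]) = (2:ℚ_[2]) := by norm_num
  rw [h2] at h
  rw [h]
  norm_num

/-! ### A norm on `F` built from a basis -/

variable {F : Type*} [Field F] [Algebra ℚ_[2] F]

noncomputable def NB (B : Module.Basis (Fin 2) ℚ_[2] F) (x : F) : ℝ :=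
  max ‖B.repr x 0‖ ‖B.repr x 1‖

variable (B : Module.Basis (Fin 2) ℚ_[2] F) {ω : F}

lemma NB_nonneg (x : F) : 0 ≤ NB B x :=
  le_trans (norm_nonneg _) (le_max_left _ _)

lemma NB_zero : NB B (0:F) = 0 := by simp [NB]

lemma NB_eq_zero {x : F} (h : NB B x = 0) : x = 0 := by
  have h0 : ‖B.repr x 0‖ = 0 := le_antisymm (h ▸ le_max_left _ _) (norm_nonneg _)
  have h1 : ‖B.repr x 1‖ = 0 := le_antisymm (h ▸ le_max_right _ _) (norm_nonneg _)
  have hrepr : B.repr x = 0 := by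
    ext i
    fin_cases i
    · simpa using norm_eq_zero.mp h0
    · simpa using norm_eq_zero.mp h1
  exact B.repr.map_eq_zero_iff.mp hrepr

lemma NB_coord_le (x : F) (i : Fin 2) : ‖B.repr x i‖ ≤ NB B x := by
  fin_cases i
  · exact le_max_left _ _
  · exact le_max_right _ _

lemma NB_add_le (x y : F) : NB B (x + y) ≤ max (NB B x) (NB B y) := by
  have k : ∀ i : Fin 2, ‖B.repr (x+y) i‖ ≤ max (NB B x) (NB B y) := by
    intro i
    rw [map_add]
    refine le_trans (Padic.nonarchimedean _ _) ?_
    exact max_le (le_trans (NB_coord_le B x i) (le_max_left _ _))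
      (le_trans (NB_coord_le B y i) (le_max_right _ _))
  exact max_le (k 0) (k 1)

lemma NB_neg (x : F) : NB B (-x) = NB B x := by simp [NB]

lemma NB_sub_le (x y : F) : NB B (x - y) ≤ max (NB B x) (NB B y) := by
  rw [sub_eq_add_neg]
  simpa [NB_neg] using NB_add_le B x (-y)

lemma NB_smul (c : ℚ_[2]) (x : F) : NB B (c • x) = ‖c‖ * NB B x := by
  simp only [NB, map_smul, Finsupp.smul_apply, smul_eq_mul, norm_mul]
  rw [mul_max_of_nonneg _ _ (norm_nonneg c)]

lemma NB_isosceles {x y : F} (h : NB B y < NB B x) : NB B (x + y) = NB B x := by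
  refine le_antisymm (le_trans (NB_add_le B x y) (by simp [le_of_lt h])) ?_
  by_contra hlt
  push_neg at hlt
  have : NB B x ≤ max (NB B (x+y)) (NB B y) := by
    have := NB_add_le B (x+y) (-y)
    simpa [NB_neg] using this
  rcases max_cases (NB B (x+y)) (NB B y) with ⟨he,_⟩|⟨he,_⟩ <;> rw [he] at this <;> linarith

section withBasis

variable (hB0 : B 0 = 1) (hB1 : B 1 = ω) (hω : ω^2 = ω + 1)
include hB0 hB1 hω

lemma repr0 (a b : ℚ_[2]) : B.repr (a • (1:F) + b • ω) 0 = a := by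
  rw [← hB0, ← hB1]
  simp [Finsupp.single_apply]

lemma repr1 (a b : ℚ_[2]) : B.repr (a • (1:F) + b • ω) 1 = b := by
  rw [← hB0, ← hB1]
  simp [Finsupp.single_apply]

lemma expand (x : F) : x = B.repr x 0 • (1:F) + B.repr x 1 • ω := by
  conv_lhs => rw [← B.sum_repr x]
  rw [Fin.sum_univ_two, hB0, hB1]

lemma mul_combo (a b c d : ℚ_[2]) :
    (a • (1:F) + b • ω) * (c • (1:F) + d • ω)
      = (a*c + b*d) • (1:F) + (a*d + b*c + b*d) • ω := by
  simp only [Algebra.smul_def, mul_one, map_add, map_mul]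
  linear_combination (algebraMap ℚ_[2] F b * algebraMap ℚ_[2] F d) * hω

lemma NB_combo (a b : ℚ_[2]) : NB B (a • (1:F) + b • ω) = max ‖a‖ ‖b‖ := by
  rw [NB, repr0 B hB0 hB1 hω, repr1 B hB0 hB1 hω]

lemma NB_mul_le (x y : F) : NB B (x * y) ≤ NB B x * NB B y := by
  set a := B.repr x 0 with ha
  set b := B.repr x 1 with hb
  set c := B.repr y 0 with hc
  set d := B.repr y 1 with hd
  have hx : x = a • (1:F) + b • ω := expand B hB0 hB1 hω x
  have hy : y = c • (1:F) + d • ω := expand B hB0 hB1 hω y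
  have hNx : NB B x = max ‖a‖ ‖b‖ := rfl
  have hNy : NB B y = max ‖c‖ ‖d‖ := rfl
  rw [hNx, hNy]
  conv_lhs => rw [hx, hy, mul_combo B hB0 hB1 hω, NB_combo B hB0 hB1 hω]
  have hbd : ∀ u v : ℚ_[2], ‖u * v‖ ≤ max ‖a‖ ‖b‖ * max ‖c‖ ‖d‖ →
      True := fun _ _ _ => trivial
  have key : ∀ (u v : ℚ_[2]), ‖u‖ ≤ max ‖a‖ ‖b‖ → ‖v‖ ≤ max ‖c‖ ‖d‖ →
      ‖u * v‖ ≤ max ‖a‖ ‖b‖ * max ‖c‖ ‖d‖ := by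
    intro u v hu hv
    rw [norm_mul]
    exact mul_le_mul hu hv (norm_nonneg _) (le_trans (norm_nonneg _) hu)
  have h1 : ‖a*c + b*d‖ ≤ max ‖a‖ ‖b‖ * max ‖c‖ ‖d‖ := by
    refine le_trans (Padic.nonarchimedean _ _) (max_le ?_ ?_)
    · exact key a c (le_max_left _ _) (le_max_left _ _)
    · exact key b d (le_max_right _ _) (le_max_right _ _)
  have h2 : ‖a*d + b*c + b*d‖ ≤ max ‖a‖ ‖b‖ * max ‖c‖ ‖d‖ := by
    refine le_trans (Padic.nonarchimedean _ _) (max_le ?_ ?_)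
    · refine le_trans (Padic.nonarchimedean _ _) (max_le ?_ ?_)
      · exact key a d (le_max_left _ _) (le_max_right _ _)
      · exact key b c (le_max_right _ _) (le_max_left _ _)
    · exact key b d (le_max_right _ _) (le_max_right _ _)
  exact max_le h1 h2

lemma NB_sq (x : F) : NB B (x^2) = (NB B x)^2 := by
  set a := B.repr x 0 with ha
  set b := B.repr x 1 with hb
  have hx : x = a • (1:F) + b • ω := expand B hB0 hB1 hω x
  have hNx : NB B x = max ‖a‖ ‖b‖ := rfl
  have hsq : x^2 = (a*a + b*b) • (1:F) + (a*b + b*a + b*b) • ω := by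
    rw [sq]
    conv_lhs => rw [hx]
    exact mul_combo B hB0 hB1 hω a b a b
  have hle : NB B (x^2) ≤ (NB B x)^2 := by
    rw [sq, sq]
    exact NB_mul_le B hB0 hB1 hω x x
  refine le_antisymm hle ?_
  rw [hsq, NB_combo B hB0 hB1 hω, hNx]
  rcases lt_trichotomy ‖a‖ ‖b‖ with hab | hab | hab
  · -- ‖a‖ < ‖b‖ : first coordinate has norm ‖b‖^2
    have h1 : ‖a*a + b*b‖ = ‖b‖^2 := by
      have hne : ‖b*b‖ ≠ ‖a*a‖ := by
        rw [norm_mul, norm_mul]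
        nlinarith [norm_nonneg a, norm_nonneg b]
      rw [add_comm, Padic.add_eq_max_of_ne hne, norm_mul, norm_mul,
        max_eq_left (by nlinarith [norm_nonneg a, norm_nonneg b])]
      ring
    calc max ‖a‖ ‖b‖ ^ 2 = ‖b‖^2 := by rw [max_eq_right (le_of_lt hab)]
    _ = ‖a*a + b*b‖ := h1.symm
    _ ≤ _ := le_max_left _ _
  · -- ‖a‖ = ‖b‖ : second coordinate
    by_cases hb0 : b = 0
    · have ha0 : a = 0 := by
        have : ‖a‖ = 0 := by rw [hab, hb0, norm_zero]
        exact norm_eq_zero.mp this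
      simp [ha0, hb0]
    · have hbpos : 0 < ‖b‖ := norm_pos_iff.mpr hb0
      have h2 : ‖a*b + b*a + b*b‖ = ‖b‖^2 := by
        have hrw : a*b + b*a + b*b = b*b + 2*(a*b) := by ring
        have hne : ‖(b*b : ℚ_[2])‖ ≠ ‖2*(a*b)‖ := by
          rw [norm_mul, norm_mul, norm_mul, norm_two, hab]
          nlinarith
        rw [hrw, Padic.add_eq_max_of_ne hne, norm_mul, norm_mul,
          norm_mul, norm_two, hab, max_eq_left (by nlinarith)]
        ring
      calc max ‖a‖ ‖b‖ ^ 2 = ‖b‖^2 := by rw [hab, max_self]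
      _ = ‖a*b + b*a + b*b‖ := h2.symm
      _ ≤ _ := le_max_right _ _
  · -- ‖b‖ < ‖a‖ : first coordinate has norm ‖a‖^2
    have h1 : ‖a*a + b*b‖ = ‖a‖^2 := by
      have hne : ‖(a*a : ℚ_[2])‖ ≠ ‖b*b‖ := by
        rw [norm_mul, norm_mul]
        nlinarith [norm_nonneg a, norm_nonneg b]
      rw [Padic.add_eq_max_of_ne hne, norm_mul, norm_mul,
        max_eq_left (by nlinarith [norm_nonneg a, norm_nonneg b])]
      ring
    calc max ‖a‖ ‖b‖ ^ 2 = ‖a‖^2 := by rw [max_eq_left (le_of_lt hab)]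
    _ = ‖a*a + b*b‖ := h1.symm
    _ ≤ _ := le_max_left _ _

lemma NB_one : NB B (1:F) = 1 := by
  have h : (1:F) = (1:ℚ_[2]) • (1:F) + (0:ℚ_[2]) • ω := by simp
  rw [h, NB_combo B hB0 hB1 hω]
  simp

lemma NB_omega : NB B ω = 1 := by
  have h : ω = (0:ℚ_[2]) • (1:F) + (1:ℚ_[2]) • ω := by simp
  rw [h, NB_combo B hB0 hB1 hω]
  simp

lemma NB_neg_one : NB B (-1:F) = 1 := by
  rw [show (-1:F) = -(1:F) by ring, NB_neg, NB_one B hB0 hB1 hω]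

lemma NB_one_sub_omega : NB B (1 - ω) ≤ 1 := by
  have h : (1:F) - ω = (1:ℚ_[2]) • (1:F) + (-1:ℚ_[2]) • ω := by simp; ring
  rw [h, NB_combo B hB0 hB1 hω]
  simp

lemma NB_two_mul (q : F) : NB B ((2:F) * q) = (1/2) * NB B q := by
  have h : (2:F) * q = (2:ℚ_[2]) • q := by
    rw [Algebra.smul_def, map_ofNat]
  rw [h, NB_smul, norm_two]


/-! ### Dynamics of `z ↦ z^2 - 1` -/

lemma cover (x : F) (h : NB B x ≤ 1) :
    ∃ p : F, (p = ω ∨ p = 1 - ω ∨ p = 0 ∨ p = -1) ∧ NB B (x - p) ≤ 1/2 := by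
  set a := B.repr x 0 with ha
  set b := B.repr x 1 with hb
  have hx : x = a • (1:F) + b • ω := expand B hB0 hB1 hω x
  have hna : ‖a‖ ≤ 1 := le_trans (NB_coord_le B x 0) h
  have hnb : ‖b‖ ≤ 1 := le_trans (NB_coord_le B x 1) h
  have hsum : ∀ c : ℚ_[2], ‖c - 1‖ ≤ 1/2 → ‖c + 1‖ ≤ 1/2 := by
    intro c hc
    have : c + 1 = (c - 1) + 2 := by ring
    rw [this]
    refine le_trans (Padic.nonarchimedean _ _) (max_le hc ?_)
    rw [norm_two]
  rcases q2_dichotomy a hna with hca | hca <;> rcases q2_dichotomy b hnb with hcb | hcb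
  · refine ⟨0, by tauto, ?_⟩
    have : x - 0 = a • (1:F) + b • ω := by rw [sub_zero]; exact hx
    rw [this, NB_combo B hB0 hB1 hω]
    exact max_le hca hcb
  · refine ⟨ω, by tauto, ?_⟩
    have : x - ω = a • (1:F) + (b - 1) • ω := by
      rw [hx]; simp [sub_smul]; ring
    rw [this, NB_combo B hB0 hB1 hω]
    exact max_le hca hcb
  · refine ⟨-1, by tauto, ?_⟩
    have : x - (-1) = (a + 1) • (1:F) + b • ω := by
      rw [hx]; simp [add_smul]; ring
    rw [this, NB_combo B hB0 hB1 hω]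
    exact max_le (hsum a hca) hcb
  · refine ⟨1 - ω, by tauto, ?_⟩
    have : x - (1 - ω) = (a - 1) • (1:F) + (b + 1) • ω := by
      rw [hx]; simp [sub_smul, add_smul]; ring
    rw [this, NB_combo B hB0 hB1 hω]
    exact max_le hca (hsum b hcb)

lemma NB_phi_le_one {y : F} (hy : NB B y ≤ 1) : NB B (y^2 - 1) ≤ 1 := by
  refine le_trans (NB_sub_le B (y^2) 1) (max_le ?_ ?_)
  · rw [NB_sq B hB0 hB1 hω]
    nlinarith [NB_nonneg B y]
  · rw [NB_one B hB0 hB1 hω]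

lemma NB_phi_big {y : F} (hy : 1 < NB B y) : NB B (y^2 - 1) = (NB B y)^2 := by
  have h2 : NB B (y^2) = (NB B y)^2 := NB_sq B hB0 hB1 hω y
  have hlt : NB B (-1 : F) < NB B (y^2) := by
    rw [h2, NB_neg_one B hB0 hB1 hω]
    nlinarith
  have := NB_isosceles B hlt
  rw [← h2]
  rw [sub_eq_add_neg]
  exact this

lemma contract {y q : F} (hy : NB B y ≤ 1) (hq : NB B q ≤ 1)
    (hyq : NB B (y - q) ≤ 1/2) :
    NB B ((y^2 - 1) - (q^2 - 1)) ≤ (1/2) * NB B (y - q) := by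
  have h1 : (y^2 - 1) - (q^2 - 1) = (y - q) * (y + q) := by ring
  rw [h1]
  refine le_trans (NB_mul_le B hB0 hB1 hω _ _) ?_
  have h2 : NB B (y + q) ≤ 1/2 := by
    have h3 : y + q = (2:F) * q + (y - q) := by ring
    rw [h3]
    refine le_trans (NB_add_le B _ _) (max_le ?_ hyq)
    rw [NB_two_mul B hB0 hB1 hω]
    nlinarith
  calc NB B (y - q) * NB B (y + q) ≤ NB B (y - q) * (1/2) :=
        mul_le_mul_of_nonneg_left h2 (NB_nonneg B _)
  _ = (1/2) * NB B (y - q) := by ring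

lemma periodic_le_one (x : F) (n : ℕ) (hn : 1 ≤ n)
    (hfix : (fun z : F => z^2 - 1)^[n] x = x) : NB B x ≤ 1 := by
  by_contra hbig
  push_neg at hbig
  set φ : F → F := fun z : F => z^2 - 1 with hφ
  have key : ∀ k : ℕ, 1 < NB B (φ^[k] x) ∧ NB B x ≤ NB B (φ^[k] x) := by
    intro k
    induction k with
    | zero => exact ⟨hbig, le_rfl⟩
    | succ k ih =>
      obtain ⟨ih1, ih2⟩ := ih
      rw [Function.iterate_succ_apply']
      have hb : NB B (φ (φ^[k] x)) = (NB B (φ^[k] x))^2 :=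
        NB_phi_big B hB0 hB1 hω ih1
      constructor
      · rw [hb]; nlinarith
      · rw [hb]; nlinarith
  obtain ⟨m, rfl⟩ := Nat.exists_eq_add_of_le hn
  obtain ⟨k1, k2⟩ := key m
  have : NB B (φ^[1 + m] x) = (NB B (φ^[m] x))^2 := by
    rw [add_comm, Function.iterate_succ_apply']
    exact NB_phi_big B hB0 hB1 hω k1
  rw [hfix] at this
  nlinarith

lemma periodic_mem (x : F) (n : ℕ) (hn : 1 ≤ n)
    (hfix : (fun z : F => z^2 - 1)^[n] x = x) :
    x = ω ∨ x = 1 - ω ∨ x = 0 ∨ x = -1 := by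
  set φ : F → F := fun z : F => z^2 - 1 with hφ
  have hx1 : NB B x ≤ 1 := periodic_le_one B hB0 hB1 hω x n hn hfix
  obtain ⟨p, hpc, hxp⟩ := cover B hB0 hB1 hω x hx1
  have hp1 : NB B p ≤ 1 := by
    rcases hpc with rfl | rfl | rfl | rfl
    · rw [NB_omega B hB0 hB1 hω]
    · exact NB_one_sub_omega B hB0 hB1 hω
    · rw [NB_zero]; norm_num
    · rw [NB_neg_one B hB0 hB1 hω]
  have hf0 : φ (0:F) = -1 := by show (0:F)^2 - 1 = -1; ring
  have hf1 : φ (-1:F) = 0 := by show (-1:F)^2 - 1 = 0; ring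
  have hfω : φ ω = ω := by show ω^2 - 1 = ω; linear_combination hω
  have hfω' : φ (1 - ω) = 1 - ω := by
    show (1-ω)^2 - 1 = 1 - ω
    linear_combination hω
  have hp2 : φ (φ p) = p := by
    rcases hpc with h | h | h | h <;> rw [h]
    · rw [hfω, hfω]
    · rw [hfω', hfω']
    · rw [hf0, hf1]
    · rw [hf1, hf0]
  have iter : ∀ k : ℕ, NB B (φ^[k] x) ≤ 1 ∧ NB B (φ^[k] p) ≤ 1 ∧
      NB B (φ^[k] x - φ^[k] p) ≤ (1/2)^k * NB B (x - p) := by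
    intro k
    induction k with
    | zero => simpa using ⟨hx1, hp1⟩
    | succ k ih =>
      obtain ⟨i1, i2, i3⟩ := ih
      have hdk : NB B (φ^[k] x - φ^[k] p) ≤ 1/2 := by
        refine le_trans i3 ?_
        have hp : (1/2:ℝ)^k ≤ 1 := by
          apply pow_le_one₀ <;> norm_num
        nlinarith [NB_nonneg B (x - p)]
      refine ⟨?_, ?_, ?_⟩
      · rw [Function.iterate_succ_apply']
        exact NB_phi_le_one B hB0 hB1 hω i1
      · rw [Function.iterate_succ_apply']
        exact NB_phi_le_one B hB0 hB1 hω i2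
      · rw [Function.iterate_succ_apply', Function.iterate_succ_apply']
        have := contract B hB0 hB1 hω i1 i2 hdk
        refine le_trans this ?_
        rw [pow_succ]
        nlinarith
  have hfix2 : φ^[2*n] x = x := by
    rw [two_mul, Function.iterate_add_apply, hfix, hfix]
  have hpfix2 : ∀ m : ℕ, φ^[2*m] p = p := by
    intro m
    induction m with
    | zero => simp
    | succ m ih =>
      have : 2*(m+1) = 2 + 2*m := by ring
      rw [this, Function.iterate_add_apply, ih]
      exact hp2
  obtain ⟨_, _, hfinal⟩ := iter (2*n)
  rw [hfix2, hpfix2 n] at hfinal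
  have hlt1 : (1/2:ℝ)^(2*n) < 1 := by
    apply pow_lt_one₀ <;> [norm_num; norm_num; omega]
  have hzero : NB B (x - p) = 0 := by
    nlinarith [NB_nonneg B (x - p)]
  have hxpe : x = p := sub_eq_zero.mp (NB_eq_zero B hzero)
  subst hxpe
  tauto

end withBasis
end PQ5

open PQ5 in
theorem periodic_points_Q2_sqrt5 {F : Type*} [Field F]
    [Algebra ℚ_[2] F] (hrank : Module.finrank ℚ_[2] F = 2)
    (s : F) (hs : s ^ 2 = 5) (hgen : Algebra.adjoin ℚ_[2] {s} = ⊤) :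
    {x : F | ∃ n : ℕ, 1 ≤ n ∧ (fun z => z ^ 2 - 1)^[n] x = x}
        = {(1 + s) / 2, (1 - s) / 2, 0, -1} ∧
      {x : F | ∃ n : ℕ, 1 ≤ n ∧ (fun z => z ^ 2 - 1)^[n] x = x}.ncard = 4 ∧
      ((1 + s) / 2) ^ 2 - 1 = (1 + s) / 2 ∧
      ((1 - s) / 2) ^ 2 - 1 = (1 - s) / 2 ∧
      (0 : F) ^ 2 - 1 = -1 ∧ (-1 : F) ^ 2 - 1 = 0 := by
  classical
  have hinj : Function.Injective (algebraMap ℚ_[2] F) := (algebraMap ℚ_[2] F).injective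
  have hchar : CharZero F := charZero_of_injective_algebraMap hinj
  set ω : F := (1 + s) / 2 with hωdef
  have h2ne : (2:F) ≠ 0 := two_ne_zero
  have hω : ω^2 = ω + 1 := by
    rw [hωdef]
    linear_combination hs/4
  have homega' : (1 - s)/2 = 1 - ω := by rw [hωdef]; ring
  have hω5 : (2*ω - 1)^2 = 5 := by
    rw [hωdef]
    linear_combination hs
  -- linear independence of 1, ω
  have hli : LinearIndependent ℚ_[2] ![(1:F), ω] := by
    rw [LinearIndependent.pair_iff]
    intro c d hcd
    by_cases hd : d = 0
    · subst hd
      refine ⟨?_, rfl⟩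
      have h1 : c • (1:F) = 0 := by simpa using hcd
      rcases smul_eq_zero.mp h1 with h | h
      · exact h
      · exact absurd h one_ne_zero
    · exfalso
      have he : algebraMap ℚ_[2] F c + algebraMap ℚ_[2] F d * ω = 0 := by
        simpa [Algebra.smul_def] using hcd
      have hdF : algebraMap ℚ_[2] F d ≠ 0 := fun h => hd (hinj (by simpa using h))
      have hωe : ω = algebraMap ℚ_[2] F (-c/d) := by
        rw [map_div₀, map_neg, eq_div_iff hdF]
        linear_combination he
      have hu2 : (-c/d)^2 = (-c/d) + 1 := by
        apply hinj
        rw [map_pow, map_add, map_one, ← hωe]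
        exact hω
      exact not_sq5 (2*(-c/d) - 1) (by linear_combination 4*hu2)
  have hfd : FiniteDimensional ℚ_[2] F :=
    Module.finite_of_finrank_pos (by rw [hrank]; norm_num)
  let B : Module.Basis (Fin 2) ℚ_[2] F :=
    basisOfLinearIndependentOfCardEqFinrank hli (by simpa using hrank.symm)
  have hBc : ⇑B = ![(1:F), ω] :=
    coe_basisOfLinearIndependentOfCardEqFinrank hli (by simpa using hrank.symm)
  have hB0 : B 0 = 1 := by rw [hBc]; rfl
  have hB1 : B 1 = ω := by rw [hBc]; rfl
  -- distinctness
  have h5ne : (5:F) ≠ 0 := by norm_num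
  have h4ne : (4:F) ≠ 0 := by norm_num
  have d1 : ω ≠ 1 - ω := fun h => h5ne (by linear_combination -hω5 + (2*ω-1)*h)
  have d2 : ω ≠ 0 := fun h => h4ne (by linear_combination -hω5 + (4*ω - 4)*h)
  have d3 : ω ≠ -1 := fun h => h4ne (by linear_combination hω5 - (4*ω - 8)*h)
  have d4 : (1:F) - ω ≠ 0 := fun h => h4ne (by linear_combination -hω5 - 4*ω*h)
  have d5 : (1:F) - ω ≠ -1 := fun h => h4ne (by linear_combination hω5 + (4*ω+4)*h)
  have d6 : (0:F) ≠ -1 := by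
    intro h
    exact one_ne_zero (α := F) (by linear_combination h)
  -- fixed point identities
  have id1 : ω^2 - 1 = ω := by linear_combination hω
  have id2 : ((1:F) - ω)^2 - 1 = 1 - ω := by linear_combination hω
  -- the set equality
  have hSeq : {x : F | ∃ n : ℕ, 1 ≤ n ∧ (fun z => z ^ 2 - 1)^[n] x = x}
      = {ω, 1 - ω, 0, -1} := by
    ext x
    simp only [Set.mem_setOf_eq, Set.mem_insert_iff, Set.mem_singleton_iff]
    constructor
    · rintro ⟨n, hn, hfix⟩
      exact periodic_mem B hB0 hB1 hω x n hn hfix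
    · have hit2 : ∀ y : F, (fun z : F => z ^ 2 - 1)^[2] y = ((y^2-1)^2 - 1) := by
        intro y
        rfl
      rintro (rfl | rfl | rfl | rfl)
      · exact ⟨1, le_rfl, by rw [Function.iterate_one]; exact id1⟩
      · exact ⟨1, le_rfl, by rw [Function.iterate_one]; exact id2⟩
      · refine ⟨2, by norm_num, ?_⟩
        rw [hit2]
        norm_num
      · refine ⟨2, by norm_num, ?_⟩
        rw [hit2]
        norm_num
  refine ⟨by rw [hSeq, homega'], ?_, id1, by rw [homega']; exact id2, by norm_num, by norm_num⟩
  rw [hSeq, Set.ncard_insert_of_notMem (by simp [d1, d2, d3]),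
    Set.ncard_insert_of_notMem (by simp [d4, d5]),
    Set.ncard_pair d6]
end

section
/- Let F be a finite extension of Q_2 inside which √(-3) exists (e.g. F = Q_2(√−3), the unramified quadratic extension of Q_2), let ω = −1/2 + √−3/2, and let φ(X) = X^2 + ω. Then φ has a periodic point in F of exact period 4. -/
noncomputable section

namespace EPFE

lemma no_sqrt_neg3 (t : ℚ_[2]) (h : t^2 = -3) : False := by
  have h3 : ‖(-3 : ℚ_[2])‖ ≤ 1 := by
    have := Padic.norm_int_le_one (p := 2) (-3)
    simpa using this
  have h1 : ‖t‖ ≤ 1 := by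
    have hn : ‖t‖^2 ≤ 1 := by rw [← norm_pow, h]; exact h3
    nlinarith [norm_nonneg t]
  set y : ℤ_[2] := ⟨t, h1⟩ with hy
  have hy2 : y^2 = (-3 : ℤ_[2]) := by
    have h2 : ((y^2 : ℤ_[2]) : ℚ_[2]) = ((-3 : ℤ_[2]) : ℚ_[2]) := by
      push_cast [PadicInt.coe_pow]
      have h3' : ((3:ℤ_[2]):ℚ_[2]) = 3 := by exact_mod_cast PadicInt.coe_natCast 3
      simpa [h3'] using h
    exact Subtype.ext h2
  have h8 := congrArg (PadicInt.toZModPow 3) hy2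
  rw [map_pow, map_neg, map_ofNat] at h8
  revert h8
  generalize (PadicInt.toZModPow 3 y) = z
  revert z
  decide

lemma norm_two_q : ‖(2:ℚ_[2])‖ = 1/2 := by
  have h := Padic.norm_p (p := 2)
  norm_num at h ⊢
  exact h

lemma norm_two_z : ‖(2:ℤ_[2])‖ = 1/2 := by
  have h := PadicInt.norm_p (p := 2)
  norm_num at h ⊢
  exact h

lemma no_unit_half (c : ℚ_[2]) (hc : ‖c‖ = 1) (u : ℤ_[2]) (h : c = 2 * u) : False := by
  have h1 : ‖((u:ℤ_[2]):ℚ_[2])‖ ≤ 1 := by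
    rw [PadicInt.padic_norm_e_of_padicInt]; exact PadicInt.norm_le_one u
  have h2 : ‖c‖ ≤ 1/2 := by
    rw [h, norm_mul, norm_two_q]
    nlinarith
  rw [hc] at h2
  norm_num at h2

lemma small_norm (E : ℚ_[2]) (h : ∀ n : ℕ, ∃ u : ℤ_[2], E = 2^n * u) : E = 0 := by
  by_contra hE
  obtain ⟨n, hn⟩ := exists_pow_lt_of_lt_one (norm_pos_iff.2 hE) (show (1/2:ℝ) < 1 by norm_num)
  obtain ⟨u, hu⟩ := h n
  have h1 : ‖((u:ℤ_[2]):ℚ_[2])‖ ≤ 1 := by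
    rw [PadicInt.padic_norm_e_of_padicInt]; exact PadicInt.norm_le_one u
  have h2 : ‖E‖ ≤ (1/2:ℝ)^n := by
    rw [hu, norm_mul, norm_pow, norm_two_q]
    have : (0:ℝ) ≤ (1/2:ℝ)^n := by positivity
    nlinarith [norm_nonneg ((u:ℤ_[2]):ℚ_[2])]
  linarith

lemma limit_dvd (A : ℕ → ℤ_[2]) (P : ℕ → ℤ_[2])
    (hrel : ∀ n, A (n+1) = A n + 2^(n+2) * P n) :
    ∃ a : ℤ_[2], ∀ n, ∃ w : ℤ_[2], a = A n + 2^(n+2) * w := by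
  have hstep : ∀ n, ‖A (n+1) - A n‖ ≤ (1/2:ℝ)^(n+2) := by
    intro n
    rw [hrel n]
    have h0 : A n + 2^(n+2) * P n - A n = 2^(n+2) * P n := by ring
    rw [h0, norm_mul, norm_pow, norm_two_z]
    have hP := PadicInt.norm_le_one (P n)
    have : (0:ℝ) ≤ (1/2)^(n+2) := by positivity
    nlinarith [norm_nonneg (P n)]
  have hcauchy : CauchySeq A := by
    apply cauchySeq_of_le_geometric (1/2 : ℝ) 1 (by norm_num)
    intro n
    rw [dist_eq_norm, norm_sub_rev]
    calc ‖A (n+1) - A n‖ ≤ (1/2:ℝ)^(n+2) := hstep n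
    _ ≤ 1 * (1/2)^n := by
        rw [one_mul]
        apply pow_le_pow_of_le_one (by norm_num) (by norm_num) (by omega)
  obtain ⟨a, ha⟩ := cauchySeq_tendsto_of_complete hcauchy
  refine ⟨a, fun n => ?_⟩
  have tail : ∀ m, n ≤ m → ‖A m - A n‖ ≤ (1/2:ℝ)^(n+2) := by
    intro m hm
    induction m, hm using Nat.le_induction with
    | base =>
      simp only [sub_self, norm_zero]
      positivity
    | succ m hm ih =>
      have h1 : A (m+1) - A n = (A (m+1) - A m) + (A m - A n) := by ring
      rw [h1]
      refine le_trans (PadicInt.nonarchimedean _ _) (max_le ?_ ih)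
      calc ‖A (m+1) - A m‖ ≤ (1/2:ℝ)^(m+2) := hstep m
      _ ≤ (1/2:ℝ)^(n+2) := by
          apply pow_le_pow_of_le_one (by norm_num) (by norm_num) (by omega)
  have hlim : Filter.Tendsto (fun m => ‖A m - A n‖) Filter.atTop (nhds ‖a - A n‖) :=
    ((ha.sub tendsto_const_nhds).norm)
  have hbound : ‖a - A n‖ ≤ (1/2:ℝ)^(n+2) :=
    le_of_tendsto hlim (Filter.eventually_atTop.2 ⟨n, fun m hm => tail m hm⟩)
  have hdvd : ((2:ℕ):ℤ_[2])^(n+2) ∣ (a - A n) := by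
    rw [← Ideal.mem_span_singleton]
    apply (PadicInt.norm_le_pow_iff_mem_span_pow (a - A n) (n+2)).mp
    convert hbound using 2
    rw [zpow_neg, zpow_natCast]
    rw [one_div, inv_pow]
    norm_num
  obtain ⟨w, hw⟩ := hdvd
  refine ⟨w, ?_⟩
  have h2 : ((2:ℕ):ℤ_[2]) = 2 := by norm_num
  rw [h2] at hw
  linear_combination hw

variable {F : Type*} [Field F] [Algebra ℚ_[2] F]

lemma two_ne (F : Type*) [Field F] [Algebra ℚ_[2] F] : (2 : F) ≠ 0 := by
  intro h
  have h2 : algebraMap ℚ_[2] F 2 = algebraMap ℚ_[2] F 0 := by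
    rw [map_ofNat, map_zero, h]
  exact two_ne_zero ((algebraMap ℚ_[2] F).injective h2)

def ω (s : F) : F := -1 / 2 + s / 2

lemma omega_sq (s : F) (hs : s ^ 2 = -3) : (ω s)^2 = -1 - ω s := by
  unfold ω
  have h2 := two_ne F
  field_simp
  linear_combination hs

lemma s_eq (s : F) : s = 2 * ω s + 1 := by
  unfold ω
  have h2 := two_ne F
  field_simp
  ring

lemma indep (s : F) (hs : s ^ 2 = -3) {a b : ℚ_[2]}
    (h : algebraMap ℚ_[2] F a + algebraMap ℚ_[2] F b * ω s = 0) : a = 0 ∧ b = 0 := by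
  have inj := (algebraMap ℚ_[2] F).injective
  by_cases hb : b = 0
  · subst hb
    refine ⟨inj ?_, rfl⟩
    simpa using h
  · exfalso
    have hbF : algebraMap ℚ_[2] F b ≠ 0 := fun hh => hb (inj (by simpa using hh))
    have hω : ω s = algebraMap ℚ_[2] F (-a / b) := by
      rw [map_div₀, map_neg]
      field_simp at h ⊢
      linear_combination h
    have hsF : s = algebraMap ℚ_[2] F (2 * (-a/b) + 1) := by
      rw [s_eq s, hω, map_add, map_mul, map_one, map_ofNat]
    apply no_sqrt_neg3 (2 * (-a/b) + 1)
    apply inj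
    rw [map_pow, ← hsF, hs, map_neg, map_ofNat]

lemma amap_two (F : Type*) [Field F] [Algebra ℚ_[2] F] :
    algebraMap ℚ_[2] F ((2:ℤ_[2]):ℚ_[2]) = 2 := by
  have h : ((2:ℤ_[2]):ℚ_[2]) = ((2:ℕ):ℚ_[2]) := by exact_mod_cast PadicInt.coe_natCast 2
  rw [h, map_natCast]; norm_num

lemma coe_two : ((2:ℤ_[2]):ℚ_[2]) = 2 := by
  exact_mod_cast PadicInt.coe_natCast 2

def inI (s : F) (k : ℕ) (x : F) : Prop :=
  ∃ a b : ℤ_[2],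
    x = 2 ^ k * (algebraMap ℚ_[2] F (a:ℚ_[2]) + algebraMap ℚ_[2] F (b:ℚ_[2]) * ω s)

lemma inI_add {s : F} {k : ℕ} {x y : F} (hx : inI s k x) (hy : inI s k y) :
    inI s k (x + y) := by
  obtain ⟨a,b,rfl⟩ := hx; obtain ⟨c,d,rfl⟩ := hy
  exact ⟨a+c, b+d, by push_cast [map_add]; ring⟩

lemma inI_neg {s : F} {k : ℕ} {x : F} (hx : inI s k x) : inI s k (-x) := by
  obtain ⟨a,b,rfl⟩ := hx
  exact ⟨-a, -b, by push_cast [map_neg]; ring⟩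

lemma inI_mono {s : F} {k' k : ℕ} (hk : k' ≤ k) {x : F} (hx : inI s k x) : inI s k' x := by
  obtain ⟨d, rfl⟩ := Nat.exists_eq_add_of_le hk
  obtain ⟨a,b,rfl⟩ := hx
  exact ⟨2^d * a, 2^d * b, by push_cast [map_mul, map_add, map_pow, amap_two]; ring⟩

lemma inI_mul {s : F} (hs : s ^ 2 = -3) {k l : ℕ} {x y : F}
    (hx : inI s k x) (hy : inI s l y) : inI s (k+l) (x*y) := by
  obtain ⟨a,b,rfl⟩ := hx; obtain ⟨c,d,rfl⟩ := hy
  refine ⟨a*c - b*d, a*d + b*c - b*d, ?_⟩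
  push_cast [map_mul, map_add, map_sub]
  linear_combination (2:F)^(k+l) * (algebraMap ℚ_[2] F (b:ℚ_[2])) *
    (algebraMap ℚ_[2] F (d:ℚ_[2])) * omega_sq s hs

lemma inI_omega (s : F) : inI s 0 (ω s) := ⟨0, 1, by push_cast; simp⟩

lemma inI_two (s : F) : inI s 1 (2 : F) := ⟨1, 0, by push_cast; simp⟩

def Phi (s : F) : F → F := fun z => z ^ 2 + ω s

lemma inI_Phi {s : F} (hs : s ^ 2 = -3) {x : F} (hx : inI s 0 x) : inI s 0 (Phi s x) := by
  unfold Phi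
  rw [pow_two]
  exact inI_add (by simpa using inI_mul hs hx hx) (inI_omega s)

lemma inI_iter {s : F} (hs : s ^ 2 = -3) (j : ℕ) {x : F} (hx : inI s 0 x) :
    inI s 0 ((Phi s)^[j] x) := by
  induction j with
  | zero => simpa using hx
  | succ j ih => rw [Function.iterate_succ_apply']; exact inI_Phi hs ih

lemma step {s : F} (hs : s ^ 2 = -3) {u h : F} {m : ℕ} (hm : 1 ≤ m)
    (hu : inI s 0 u) (hh : inI s m h) : inI s (m+1) (2*u*h + h^2) := by
  apply inI_add
  · have h1 : inI s (1+0+m) (2*u*h) := inI_mul hs (inI_mul hs (inI_two s) hu) hh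
    exact inI_mono (by omega) h1
  · have h2 : inI s (m+m) (h*h) := inI_mul hs hh hh
    rw [pow_two]
    exact inI_mono (by omega) h2

lemma iter_shift {s : F} (hs : s ^ 2 = -3) (j : ℕ) :
    ∀ {x h : F} {k : ℕ}, 1 ≤ k → inI s 0 x → inI s k h →
    ∃ h', inI s (k+j) h' ∧ (Phi s)^[j] (x+h) = (Phi s)^[j] x + h' := by
  induction j with
  | zero => exact fun hk _ hh => ⟨_, by simpa using hh, rfl⟩
  | succ j ih =>
    intro x h k hk hx hh
    have hstep : Phi s (x+h) = Phi s x + (2*x*h + h^2) := by unfold Phi; ring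
    obtain ⟨h', hmem, heq⟩ := ih (k := k+1) (by omega) (inI_Phi hs hx) (step hs hk hx hh)
    refine ⟨h', inI_mono (by omega) hmem, ?_⟩
    rw [Function.iterate_succ_apply, Function.iterate_succ_apply, hstep, heq]

lemma phi1 (s : F) (hs : s ^ 2 = -3) : Phi s (ω s) = -1 := by
  unfold Phi; linear_combination omega_sq s hs

lemma phi3 (s : F) (hs : s ^ 2 = -3) : Phi s (1 + ω s) = 2 * ω s := by
  unfold Phi; linear_combination omega_sq s hs

lemma phi4 (s : F) (hs : s ^ 2 = -3) : Phi s (2 * ω s) = -4 - 3 * ω s := by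
  unfold Phi; linear_combination 4 * omega_sq s hs

lemma phi_iter1 (s : F) (hs : s ^ 2 = -3) : (Phi s)^[1] (ω s) = -1 := by
  simpa using phi1 s hs

lemma phi_iter2 (s : F) (hs : s ^ 2 = -3) : (Phi s)^[2] (ω s) = 1 + ω s := by
  rw [show (2:ℕ) = 1+1 from rfl, Function.iterate_add_apply, phi_iter1 s hs]
  show (-1:F)^2 + ω s = 1 + ω s
  ring

lemma phi_iter3 (s : F) (hs : s ^ 2 = -3) : (Phi s)^[3] (ω s) = 2 * ω s := by
  rw [show (3:ℕ) = 1+2 from rfl, Function.iterate_add_apply, phi_iter2 s hs]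
  simpa using phi3 s hs

lemma phi_iter4 (s : F) (hs : s ^ 2 = -3) : (Phi s)^[4] (ω s) = -4 - 3 * ω s := by
  rw [show (4:ℕ) = 1+3 from rfl, Function.iterate_add_apply, phi_iter3 s hs]
  simpa using phi4 s hs

lemma rep_eq {s : F} (hs : s ^ 2 = -3) {k : ℕ} {x : F} (hx : inI s k x) {A B : ℚ_[2]}
    (hrep : x = algebraMap ℚ_[2] F A + algebraMap ℚ_[2] F B * ω s) :
    ∃ a b : ℤ_[2], A = 2^k * a ∧ B = 2^k * b := by
  obtain ⟨a,b,h⟩ := hx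
  have h0 : algebraMap ℚ_[2] F (A - 2^k * a) + algebraMap ℚ_[2] F (B - 2^k*b) * ω s = 0 := by
    push_cast [map_sub, map_mul, map_pow, map_ofNat]
    linear_combination h - hrep
  obtain ⟨e1, e2⟩ := indep s hs h0
  exact ⟨a, b, sub_eq_zero.mp e1, sub_eq_zero.mp e2⟩

end EPFE

theorem exact_period_four_example {F : Type*} [Field F]
    [Algebra ℚ_[2] F] [FiniteDimensional ℚ_[2] F]
    (s : F) (hs : s ^ 2 = -3) :
    ∃ α : F, (fun z => z ^ 2 + (-1 / 2 + s / 2))^[4] α = α ∧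
      ∀ j : ℕ, 0 < j → j < 4 → (fun z => z ^ 2 + (-1 / 2 + s / 2))^[j] α ≠ α := by
  classical
  suffices h : ∃ α : F, (EPFE.Phi s)^[4] α = α ∧
      ∀ j : ℕ, 0 < j → j < 4 → (EPFE.Phi s)^[j] α ≠ α by
    exact h
  set κ := algebraMap ℚ_[2] F with hκ
  -- the Newton/Hensel sequence
  set x : ℕ → F := fun n => (EPFE.Phi s)^[4*n] (EPFE.ω s) with hx
  have hx0 : x 0 = EPFE.ω s := rfl
  have hxsucc : ∀ n, x (n+1) = (EPFE.Phi s)^[4] (x n) := by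
    intro n
    show (EPFE.Phi s)^[4*(n+1)] (EPFE.ω s) = _
    rw [show 4*(n+1) = 4 + 4*n by ring, Function.iterate_add_apply]
  have key : ∀ n, EPFE.inI s 0 (x n) ∧ EPFE.inI s (n+2) ((EPFE.Phi s)^[4] (x n) - x n) := by
    intro n
    induction n with
    | zero =>
      refine ⟨by rw [hx0]; exact EPFE.inI_omega s, ⟨-1, -1, ?_⟩⟩
      rw [hx0, EPFE.phi_iter4 s hs]
      push_cast [map_neg, map_one]
      ring
    | succ n ih =>
      obtain ⟨h0, hg⟩ := ih
      obtain ⟨h', hmem, heq⟩ := EPFE.iter_shift hs 4 (k := n+2) (by omega) h0 hg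
      have hx1 : x (n+1) = x n + ((EPFE.Phi s)^[4] (x n) - x n) := by
        rw [hxsucc]; ring
      constructor
      · rw [hx1]; exact EPFE.inI_add h0 (EPFE.inI_mono (Nat.zero_le _) hg)
      · have hdiff : (EPFE.Phi s)^[4] (x (n+1)) - x (n+1) = h' := by
          rw [hx1, heq]; ring
        rw [hdiff]
        exact EPFE.inI_mono (by omega) hmem
  -- coordinates
  choose A B hAB using fun n => (key n).1
  choose P Q hPQ using fun n => (key n).2
  -- coordinate recursions
  have hrel : ∀ n, A (n+1) = A n + 2^(n+2) * P n ∧ B (n+1) = B n + 2^(n+2) * Q n := by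
    intro n
    have e0 : x (n+1) = x n + ((EPFE.Phi s)^[4] (x n) - x n) := by rw [hxsucc]; ring
    have e1 : κ ((A (n+1) : ℚ_[2]) - ((A n : ℚ_[2]) + 2^(n+2) * (P n : ℚ_[2])))
        + κ ((B (n+1) : ℚ_[2]) - ((B n : ℚ_[2]) + 2^(n+2) * (Q n : ℚ_[2]))) * EPFE.ω s = 0 := by
      have h1 := hAB (n+1)
      rw [e0, hPQ n, hAB n] at h1
      push_cast [map_sub, map_add, map_mul, map_pow, map_ofNat]
      linear_combination -h1
    obtain ⟨u1, u2⟩ := EPFE.indep s hs e1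
    constructor
    · exact Subtype.ext (by push_cast [EPFE.coe_two]; exact sub_eq_zero.mp u1)
    · exact Subtype.ext (by push_cast [EPFE.coe_two]; exact sub_eq_zero.mp u2)
  obtain ⟨a, hatail⟩ := EPFE.limit_dvd A P (fun n => (hrel n).1)
  obtain ⟨b, hbtail⟩ := EPFE.limit_dvd B Q (fun n => (hrel n).2)
  set α : F := κ (a : ℚ_[2]) + κ (b : ℚ_[2]) * EPFE.ω s with hα
  have halpha0 : EPFE.inI s 0 α := ⟨a, b, by rw [hα]; ring⟩
  -- α is close to every x n
  have hclose : ∀ n, EPFE.inI s (n+2) (α - x n) := by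
    intro n
    obtain ⟨w1, hw1⟩ := hatail n
    obtain ⟨w2, hw2⟩ := hbtail n
    refine ⟨w1, w2, ?_⟩
    have e1 : (a : ℚ_[2]) = (A n : ℚ_[2]) + 2^(n+2) * (w1 : ℚ_[2]) := by exact_mod_cast congrArg _ hw1
    have e2 : (b : ℚ_[2]) = (B n : ℚ_[2]) + 2^(n+2) * (w2 : ℚ_[2]) := by exact_mod_cast congrArg _ hw2
    rw [hα, hAB n, e1, e2]
    push_cast [map_add, map_mul, map_pow, map_ofNat]
    ring
  -- the fixed point equation
  have hgα : ∀ n : ℕ, EPFE.inI s (n+2) ((EPFE.Phi s)^[4] α - α) := by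
    intro n
    obtain ⟨h', hmem, heq⟩ := EPFE.iter_shift hs 4 (k := n+2) (by omega) (key n).1 (hclose n)
    have hxα : x n + (α - x n) = α := by ring
    rw [hxα] at heq
    have hrw : (EPFE.Phi s)^[4] α - α
        = ((EPFE.Phi s)^[4] (x n) - x n) + h' + (-(α - x n)) := by
      rw [heq]; ring
    rw [hrw]
    exact EPFE.inI_add (EPFE.inI_add (key n).2 (EPFE.inI_mono (by omega) hmem))
      (EPFE.inI_neg (hclose n))
  have hfix : (EPFE.Phi s)^[4] α = α := by
    have hmem0 : EPFE.inI s 0 ((EPFE.Phi s)^[4] α - α) := by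
      rw [sub_eq_add_neg]
      exact EPFE.inI_add (EPFE.inI_iter hs 4 halpha0) (EPFE.inI_neg halpha0)
    obtain ⟨e, f, hef⟩ := hmem0
    have hrep : (EPFE.Phi s)^[4] α - α = κ (e : ℚ_[2]) + κ (f : ℚ_[2]) * EPFE.ω s := by
      rw [hef]; ring
    have he : (e : ℚ_[2]) = 0 := by
      apply EPFE.small_norm
      intro n
      obtain ⟨u, v, hu, hv⟩ := EPFE.rep_eq hs (hgα n) hrep
      exact ⟨2^2 * u, by rw [hu]; push_cast [EPFE.coe_two]; ring⟩
    have hf : (f : ℚ_[2]) = 0 := by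
      apply EPFE.small_norm
      intro n
      obtain ⟨u, v, hu, hv⟩ := EPFE.rep_eq hs (hgα n) hrep
      exact ⟨2^2 * v, by rw [hv]; push_cast [EPFE.coe_two]; ring⟩
    have h0 : (EPFE.Phi s)^[4] α - α = 0 := by rw [hrep, he, hf]; simp
    exact sub_eq_zero.mp h0
  refine ⟨α, hfix, ?_⟩
  -- exactness of the period
  intro j hj0 hj4 hbad
  have hclose0 : EPFE.inI s 2 (α - EPFE.ω s) := by
    have := hclose 0
    rwa [hx0] at this
  obtain ⟨h', hmem, heq⟩ := EPFE.iter_shift hs j (k := 2) (by omega) (EPFE.inI_omega s) hclose0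
  have hωα : EPFE.ω s + (α - EPFE.ω s) = α := by ring
  rw [hωα] at heq
  -- (Phi s)^[j] (ω s) - ω s ∈ I 1
  have hval : EPFE.inI s 1 ((EPFE.Phi s)^[j] (EPFE.ω s) - EPFE.ω s) := by
    have hrw : (EPFE.Phi s)^[j] (EPFE.ω s) - EPFE.ω s = (α - EPFE.ω s) + (- h') := by
      rw [← hbad, heq]; ring
    rw [hrw]
    exact EPFE.inI_mono (by omega) (EPFE.inI_add hclose0
      (EPFE.inI_neg (EPFE.inI_mono (by omega) hmem)))
  interval_cases j
  · -- j = 1 : value -1 - ω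
    rw [EPFE.phi_iter1 s hs] at hval
    have hrep : (-1 : F) - EPFE.ω s = κ (-1 : ℚ_[2]) + κ (-1 : ℚ_[2]) * EPFE.ω s := by
      push_cast [map_neg, map_one]; ring
    obtain ⟨u, v, hu, hv⟩ := EPFE.rep_eq hs hval hrep
    exact EPFE.no_unit_half (-1) (by simp) u (by rw [hu]; ring)
  · -- j = 2 : value 1
    rw [EPFE.phi_iter2 s hs] at hval
    have hrep : (1 + EPFE.ω s) - EPFE.ω s = κ (1 : ℚ_[2]) + κ (0 : ℚ_[2]) * EPFE.ω s := by
      push_cast [map_one, map_zero]; ring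
    obtain ⟨u, v, hu, hv⟩ := EPFE.rep_eq hs hval hrep
    exact EPFE.no_unit_half 1 (by simp) u (by rw [hu]; ring)
  · -- j = 3 : value ω
    rw [EPFE.phi_iter3 s hs] at hval
    have hrep : (2 * EPFE.ω s) - EPFE.ω s = κ (0 : ℚ_[2]) + κ (1 : ℚ_[2]) * EPFE.ω s := by
      push_cast [map_one, map_zero]; ring
    obtain ⟨u, v, hu, hv⟩ := EPFE.rep_eq hs hval hrep
    exact EPFE.no_unit_half 1 (by simp) v (by rw [hv]; ring)
end
end

section
/- Let K be a number field, 𝔭 a prime of O_K over p with residue degree f and completion K_𝔭. Let d ≥ 2 with p | d and φ ∈ O_{K,𝔭}[X] of degree d with leading coefficient a 𝔭-unit and v_𝔭(a_i) > 0 for all indices i coprime to p. Then any two distinct K-rational periodic points of φ are in distinct residue classes modulo 𝔭, i.e. if x ≠ y are periodic points of φ in K, then v_𝔭(x − y) ≤ 0. -/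
open NumberField IsDedekindDomain

section Aux

variable {K : Type*} [Field K] {Γ : Type*} [LinearOrderedCommGroupWithZero Γ]
  (w : Valuation K Γ)

/-- any valuation sends naturals to values at most 1 -/
lemma aux_natCast_le_one (n : ℕ) : w (n : K) ≤ 1 := by
  induction n with
  | zero => simp
  | succ k ih =>
    push_cast
    exact le_trans (w.map_add _ _) (max_le ih (le_of_eq w.map_one))

/-- a ≤ 1 → a^n ≤ a for n ≥ 1 -/
lemma aux_pow_le_self {a : Γ} (ha : a ≤ 1) {n : ℕ} (hn : 1 ≤ n) : a ^ n ≤ a := by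
  calc a ^ n ≤ a ^ 1 := pow_le_pow_right_of_le_one' ha hn
    _ = a := pow_one a

/-- valuation of x^m - y^m is at most valuation of x - y, for integral x, y -/
lemma aux_pow_sub_le {x y : K} (hx : w x ≤ 1) (hy : w y ≤ 1) (m : ℕ) :
    w (x ^ m - y ^ m) ≤ w (x - y) := by
  rw [← geom_sum₂_mul, w.map_mul]
  calc w (∑ i ∈ Finset.range m, x ^ i * y ^ (m - 1 - i)) * w (x - y)
      ≤ 1 * w (x - y) := by
        refine mul_le_mul_left ?_ _
        refine Valuation.map_sum_le w fun i _ => ?_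
        rw [w.map_mul, w.map_pow, w.map_pow]
        calc w x ^ i * w y ^ (m - 1 - i) ≤ 1 * 1 := by
              exact mul_le_mul' (pow_le_one' hx i) (pow_le_one' hy _)
          _ = 1 := one_mul 1
    _ = w (x - y) := one_mul _

/-- key "Frobenius contraction": for p prime with w p < 1,
    if u, y are integral and w (u - y) ≤ g < 1, g ≠ 0, then w (u^p - y^p) < g. -/
lemma aux_frob {p : ℕ} (hp : p.Prime) (hP : w (p : K) < 1)
    {u y : K} (hu : w u ≤ 1) (hy : w y ≤ 1) {g : Γ} (hg0 : g ≠ 0) (hg1 : g < 1)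
    (ht : w (u - y) ≤ g) : w (u ^ p - y ^ p) < g := by
  set t := u - y with htdef
  have hu' : u = y + t := by ring
  have hwt : w t ≤ 1 := le_trans ht hg1.le
  have key : u ^ p - y ^ p = ∑ k ∈ Finset.range p, y ^ k * t ^ (p - k) * (p.choose k : K) := by
    rw [hu', add_pow]
    rw [Finset.sum_range_succ]
    simp [Nat.sub_self]
  rw [key]
  refine Valuation.map_sum_lt w hg0 fun k hk => ?_
  rw [Finset.mem_range] at hk
  rw [w.map_mul, w.map_mul, w.map_pow, w.map_pow]
  have hyk : w y ^ k ≤ 1 := pow_le_one' hy k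
  have htk : w t ^ (p - k) ≤ g := le_trans (aux_pow_le_self hwt (by omega)) ht
  rcases Nat.eq_zero_or_pos k with rfl | hk1
  · -- term k = 0 : w(t^p) < g since w t ≤ g < 1
    have h2 : 2 ≤ p := hp.two_le
    simp only [pow_zero, w.map_one, Nat.choose_zero_right, Nat.cast_one, one_mul, mul_one,
      Nat.sub_zero]
    calc w t ^ p ≤ w t ^ 2 := pow_le_pow_right_of_le_one' hwt h2
      _ = w t * w t := sq (w t)
      _ < g * 1 := mul_lt_mul_of_le_of_lt_of_nonneg_of_pos ht (lt_of_le_of_lt ht hg1) zero_le' (zero_lt_iff.mpr hg0)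
      _ = g := mul_one g
  · -- 1 ≤ k < p : p divides choose, so w (choose) < 1
    obtain ⟨c, hc⟩ := hp.dvd_choose_self (by omega) hk
    have hcK : (p.choose k : K) = (p : K) * (c : K) := by rw [hc]; push_cast; ring
    have hwc : w ((p.choose k : K)) < 1 := by
      rw [hcK, w.map_mul]
      calc w (p : K) * w (c : K) ≤ w (p : K) * 1 :=
            mul_le_mul_right (aux_natCast_le_one w c) _
        _ = w (p : K) := mul_one _
        _ < 1 := hP
    calc w y ^ k * w t ^ (p - k) * w ((p.choose k : K))
        ≤ 1 * g * w ((p.choose k : K)) := by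
          exact mul_le_mul_left (mul_le_mul' hyk htk) _
      _ = g * w ((p.choose k : K)) := by rw [one_mul]
      _ < g * 1 := mul_lt_mul_of_le_of_lt_of_nonneg_of_pos le_rfl hwc zero_le' (zero_lt_iff.mpr hg0)
      _ = g := mul_one g

/-- evaluation of an integral polynomial at an integral point is integral -/
lemma aux_eval_int (φ : Polynomial K) (hint : ∀ i, w (φ.coeff i) ≤ 1) {z : K}
    (hz : w z ≤ 1) : w (φ.eval z) ≤ 1 := by
  rw [Polynomial.eval_eq_sum_range]
  refine Valuation.map_sum_le w fun i _ => ?_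
  rw [w.map_mul, w.map_pow]
  calc w (φ.coeff i) * w z ^ i ≤ 1 * 1 := mul_le_mul' (hint i) (pow_le_one' hz i)
    _ = 1 := one_mul 1

/-- on non-integral points, the valuation of the image is the d-th power -/
lemma aux_eval_grow (φ : Polynomial K) (d : ℕ) (hdeg : φ.natDegree = d)
    (hint : ∀ i, w (φ.coeff i) ≤ 1) (hlead : w (φ.coeff d) = 1) {z : K}
    (hz : 1 < w z) : w (φ.eval z) = w z ^ d := by
  have hz0 : w z ≠ 0 := fun h => by simp [h] at hz
  rw [Polynomial.eval_eq_sum_range, hdeg]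
  have hjval : w (φ.coeff d * z ^ d) = w z ^ d := by
    rw [w.map_mul, w.map_pow, hlead, one_mul]
  rw [← hjval]
  refine Valuation.map_sum_eq_of_lt w (j := d) (Finset.mem_range.mpr d.lt_succ_self) ?_
  · intro i hi
    have hid : i < d := by
      simp only [Finset.mem_sdiff, Finset.mem_range, Finset.mem_singleton] at hi
      omega
    rw [hjval, w.map_mul, w.map_pow]
    calc w (φ.coeff i) * w z ^ i ≤ 1 * w z ^ i := mul_le_mul_left (hint i) _
      _ = w z ^ i := one_mul _
      _ < w z ^ d := pow_lt_pow_right₀ hz hid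

/-- the contraction step -/
lemma aux_contract_s19 {p : ℕ} (hp : p.Prime) (hP : w (p : K) < 1)
    (φ : Polynomial K) (d : ℕ) (hdeg : φ.natDegree = d)
    (hint : ∀ i, w (φ.coeff i) ≤ 1)
    (hsmall : ∀ i, Nat.Coprime i p → w (φ.coeff i) < 1)
    {x y : K} (hx : w x ≤ 1) (hy : w y ≤ 1) (hne : x ≠ y)
    (h1 : w (x - y) < 1) : w (φ.eval x - φ.eval y) < w (x - y) := by
  have hg0 : w (x - y) ≠ 0 := by
    rw [Valuation.ne_zero_iff, sub_ne_zero]; exact hne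
  have key : φ.eval x - φ.eval y =
      ∑ i ∈ Finset.range (d + 1), (φ.coeff i * x ^ i - φ.coeff i * y ^ i) := by
    rw [Polynomial.eval_eq_sum_range, Polynomial.eval_eq_sum_range, hdeg,
      ← Finset.sum_sub_distrib]
  rw [key]
  refine Valuation.map_sum_lt w hg0 fun i _ => ?_
  rw [← mul_sub, w.map_mul]
  rcases Nat.eq_zero_or_pos i with rfl | hi1
  · simp only [pow_zero, sub_self, w.map_zero, mul_zero]
    exact zero_lt_iff.mpr hg0
  by_cases hpi : p ∣ i
  · obtain ⟨m, rfl⟩ := hpi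
    rw [mul_comm p m, pow_mul, pow_mul]
    have hfr : w ((x ^ m) ^ p - (y ^ m) ^ p) < w (x - y) :=
      aux_frob w hp hP (by rw [w.map_pow]; exact pow_le_one' hx m)
        (by rw [w.map_pow]; exact pow_le_one' hy m) hg0 h1
        (aux_pow_sub_le w hx hy m)
    calc w (φ.coeff (m * p)) * w ((x ^ m) ^ p - (y ^ m) ^ p)
        ≤ 1 * w ((x ^ m) ^ p - (y ^ m) ^ p) := mul_le_mul_left (hint _) _
      _ = w ((x ^ m) ^ p - (y ^ m) ^ p) := one_mul _
      _ < w (x - y) := hfr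
  · have hci : Nat.Coprime i p :=
      Nat.coprime_comm.mp ((Nat.Prime.coprime_iff_not_dvd hp).mpr hpi)
    have hco := hsmall i hci
    calc w (φ.coeff i) * w (x ^ i - y ^ i)
        = w (x ^ i - y ^ i) * w (φ.coeff i) := mul_comm _ _
      _ < w (x - y) * 1 :=
          mul_lt_mul_of_le_of_lt_of_nonneg_of_pos (aux_pow_sub_le w hx hy i) hco zero_le' (zero_lt_iff.mpr hg0)
      _ = w (x - y) := mul_one _

end Aux

theorem periodic_points_distinct_residues {K : Type*} [Field K] [NumberField K]
    (d p : ℕ) (hd : 2 ≤ d) (hp : p.Prime) (hpd : p ∣ d)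
    (v : HeightOneSpectrum (𝓞 K)) (hvp : (p : 𝓞 K) ∈ v.asIdeal)
    (f : ℕ) (hf : Ideal.absNorm v.asIdeal = p ^ f)
    (φ : Polynomial K) (hdeg : φ.natDegree = d)
    (hint : ∀ i, v.valuation K (φ.coeff i) ≤ 1)
    (hlead : v.valuation K (φ.coeff d) = 1)
    (hsmall : ∀ i, Nat.Coprime i p → v.valuation K (φ.coeff i) < 1) :
    ∀ x y : K, x ≠ y →
      (∃ n : ℕ, 1 ≤ n ∧ (fun z => φ.eval z)^[n] x = x) →
      (∃ n : ℕ, 1 ≤ n ∧ (fun z => φ.eval z)^[n] y = y) →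
      1 ≤ v.valuation K (x - y) := by
  intro x y hxy hxp hyp
  obtain ⟨n, hn, hxn⟩ := hxp
  obtain ⟨m, hm, hym⟩ := hyp
  have hP : v.valuation K ((p : ℕ) : K) < 1 := by
    rw [show ((p : ℕ) : K) = algebraMap (𝓞 K) K ((p : ℕ) : 𝓞 K) from (map_natCast _ p).symm,
      v.valuation_lt_one_iff_dvd]
    exact Ideal.dvd_span_singleton.mpr hvp
  -- periodic points are integral
  have hper_int : ∀ z : K, (∃ k : ℕ, 1 ≤ k ∧ (fun z => φ.eval z)^[k] z = z) →
      v.valuation K z ≤ 1 := by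
    rintro z ⟨k, hk, hz⟩
    by_contra h
    push_neg at h
    have grow : ∀ j : ℕ, v.valuation K ((fun z => φ.eval z)^[j] z) = v.valuation K z ^ (d ^ j) := by
      intro j
      induction j with
      | zero => simp
      | succ j ih =>
        rw [Function.iterate_succ_apply']
        have h1 : 1 < v.valuation K ((fun z => φ.eval z)^[j] z) := by
          rw [ih]
          exact one_lt_pow' h (pow_ne_zero j (by omega : d ≠ 0))
        rw [aux_eval_grow (v.valuation K) φ d hdeg hint hlead h1, ih, ← pow_mul, ← pow_succ]
    have heq : v.valuation K z = v.valuation K z ^ (d ^ k) := by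
      have := grow k; rwa [hz] at this
    have hlt : v.valuation K z < v.valuation K z ^ (d ^ k) := by
      calc v.valuation K z = v.valuation K z ^ 1 := (pow_one _).symm
        _ < v.valuation K z ^ (d ^ k) := by
            refine pow_lt_pow_right₀ h ?_
            have : 1 < d ^ k := Nat.one_lt_pow (by omega) (by omega)
            omega
    exact hlt.ne heq
  have hx1 : v.valuation K x ≤ 1 := hper_int x ⟨n, hn, hxn⟩
  have hy1 : v.valuation K y ≤ 1 := hper_int y ⟨m, hm, hym⟩
  -- iterates of integral points are integral
  have hiter_int : ∀ (k : ℕ) (z : K), v.valuation K z ≤ 1 →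
      v.valuation K ((fun z => φ.eval z)^[k] z) ≤ 1 := by
    intro k
    induction k with
    | zero => intro z hz; simpa using hz
    | succ k ih =>
      intro z hz
      rw [Function.iterate_succ_apply']
      exact aux_eval_int (v.valuation K) φ hint (ih z hz)
  by_contra hcon
  push_neg at hcon
  have hg0 : v.valuation K (x - y) ≠ 0 := by
    rw [Valuation.ne_zero_iff, sub_ne_zero]; exact hxy
  have hc : ∀ k : ℕ, v.valuation K ((fun z => φ.eval z)^[k + 1] x -
      (fun z => φ.eval z)^[k + 1] y) < v.valuation K (x - y) := by
    intro k
    induction k with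
    | zero =>
      simpa using aux_contract_s19 (v.valuation K) hp hP φ d hdeg hint hsmall hx1 hy1 hxy hcon
    | succ k ih =>
      rw [Function.iterate_succ_apply' _ (k + 1) x, Function.iterate_succ_apply' _ (k + 1) y]
      by_cases he : (fun z => φ.eval z)^[k + 1] x = (fun z => φ.eval z)^[k + 1] y
      · rw [he, sub_self, (v.valuation K).map_zero]
        exact zero_lt_iff.mpr hg0
      · exact lt_trans
          (aux_contract_s19 (v.valuation K) hp hP φ d hdeg hint hsmall
            (hiter_int (k + 1) x hx1) (hiter_int (k + 1) y hy1) he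
            (lt_trans ih hcon)) ih
  have px : Function.IsPeriodicPt (fun z => φ.eval z) n x := hxn
  have py : Function.IsPeriodicPt (fun z => φ.eval z) m y := hym
  have pxN : (fun z => φ.eval z)^[n * m] x = x := px.mul_const m
  have pyN : (fun z => φ.eval z)^[n * m] y = y := py.const_mul n
  have hNpos : 0 < n * m := Nat.mul_pos hn hm
  have hN : n * m - 1 + 1 = n * m := by omega
  have hfinal := hc (n * m - 1)
  rw [hN, pxN, pyN] at hfinal
  exact absurd hfinal (lt_irrefl _)
end
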